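/- arXiv:math/9909076 — 8 statements merged into one kernel-verified Lean document; each statement's English description precedes it below -/
import Mathlib

section
/- With notation as above, decompose the poles of P and Q into those inside and outside the contour Γ. Then (1/(2πi)) ∮_Γ P(z)Q(z) dz = Σ_{j∈J₁,int} Σ_{ℓ∈J₂,ext} A_j B_ℓ/(q_ℓ − p_j) + Σ_{j∈J₁,ext} Σ_{ℓ∈J₂,int} A_j B_ℓ/(p_j − q_ℓ), and each summand is nonnegative since exterior poles to the left-encircled region satisfy the appropriate sign condition. -/
open Metric Complex Real


lemma myCircleIntegral_finset_sum {ι : Type*} (s : Finset ι) (f : ι → ℂ → ℂ) (c : ℂ) (R : ℝ)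
    (hf : ∀ i ∈ s, CircleIntegrable (f i) c R) :
    (∮ z in C(c, R), ∑ i ∈ s, f i z) = ∑ i ∈ s, ∮ z in C(c, R), f i z := by
  simp only [circleIntegral, smul_eq_mul, Finset.mul_sum]
  exact intervalIntegral.integral_finset_sum (fun i hi => by
    simpa [smul_eq_mul] using (hf i hi).out)

lemma cont_inv_on_sphere {c : ℂ} {R : ℝ} {w : ℂ} (hw : w ∉ sphere c R) :
    ContinuousOn (fun z => (w - z)⁻¹) (sphere c R) := by
  refine ContinuousOn.inv₀ (by fun_prop) (fun z hz h => hw ?_)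
  rw [sub_eq_zero] at h
  exact h ▸ hz

lemma one_pole_in {c : ℂ} {R : ℝ} {p : ℂ} (hp : p ∈ ball c R) :
    (∮ z in C(c, R), (p - z)⁻¹) = -(2 * (π : ℂ) * I) := by
  have h1 : (∮ z in C(c, R), (p - z)⁻¹) = ∮ z in C(c, R), (-1 : ℂ) * (z - p)⁻¹ := by
    refine circleIntegral.integral_congr (le_of_lt (pos_of_mem_ball hp)) (fun z _ => ?_)
    rw [show p - z = -(z - p) by ring, inv_neg]; ring
  rw [h1, circleIntegral.integral_const_mul, circleIntegral.integral_sub_inv_of_mem_ball hp]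
  ring

lemma two_pole_int_ext {c : ℂ} {R : ℝ} (hR : 0 < R) {p q : ℂ}
    (hp : p ∈ ball c R) (hq : q ∉ closedBall c R) :
    (∮ z in C(c, R), (p - z)⁻¹ * (q - z)⁻¹) = -(2 * (π : ℂ) * I) * (q - p)⁻¹ := by
  have hd : DifferentiableOn ℂ (fun z => -(q - z)⁻¹) (closedBall c R) := by
    intro z hz
    have hq0 : q - z ≠ 0 := sub_ne_zero.2 (fun h => hq (h ▸ hz))
    exact (((differentiableAt_const q).sub differentiableAt_id).inv hq0).neg.differentiableWithinAt
  have key := hd.circleIntegral_sub_inv_smul hp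
  have h1 : (∮ z in C(c, R), (p - z)⁻¹ * (q - z)⁻¹)
      = ∮ z in C(c, R), (z - p)⁻¹ • (-(q - z)⁻¹) := by
    refine circleIntegral.integral_congr hR.le (fun z _ => ?_)
    rw [smul_eq_mul, show p - z = -(z - p) by ring, inv_neg]; ring
  rw [h1, key, smul_eq_mul]; ring

lemma two_pole_ext_ext {c : ℂ} {R : ℝ} (hR : 0 < R) {p q : ℂ}
    (hp : p ∉ closedBall c R) (hq : q ∉ closedBall c R) :
    (∮ z in C(c, R), (p - z)⁻¹ * (q - z)⁻¹) = 0 := by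
  have hdiff : ∀ z ∈ closedBall c R, DifferentiableAt ℂ (fun z => (p - z)⁻¹ * (q - z)⁻¹) z := by
    intro z hz
    have hp0 : p - z ≠ 0 := sub_ne_zero.2 (fun h => hp (h ▸ hz))
    have hq0 : q - z ≠ 0 := sub_ne_zero.2 (fun h => hq (h ▸ hz))
    exact (((differentiableAt_const p).sub differentiableAt_id).inv hp0).mul
      (((differentiableAt_const q).sub differentiableAt_id).inv hq0)
  exact Complex.circleIntegral_eq_zero_of_differentiable_on_off_countable hR.le
    Set.countable_empty (fun z hz => (hdiff z hz).continuousAt.continuousWithinAt)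
    (fun z hz => hdiff z (ball_subset_closedBall hz.1))

lemma two_pole_int_int {c : ℂ} {R : ℝ} (hR : 0 < R) {p q : ℂ}
    (hp : p ∈ ball c R) (hq : q ∈ ball c R) :
    (∮ z in C(c, R), (p - z)⁻¹ * (q - z)⁻¹) = 0 := by
  by_cases hpq : p = q
  · subst hpq
    have h1 : (∮ z in C(c, R), (p - z)⁻¹ * (p - z)⁻¹)
        = ∮ z in C(c, R), (z - p) ^ (-2 : ℤ) := by
      refine circleIntegral.integral_congr hR.le (fun z _ => ?_)
      rw [zpow_neg, zpow_two, mul_inv, show p - z = -(z - p) by ring, inv_neg]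
      ring
    rw [h1, circleIntegral.integral_sub_zpow_of_ne (by norm_num)]
  · have hpn : p ∉ sphere c R := fun h => absurd (mem_ball.1 hp) (by simp [mem_sphere.1 h])
    have hqn : q ∉ sphere c R := fun h => absurd (mem_ball.1 hq) (by simp [mem_sphere.1 h])
    have hint : ∀ w : ℂ, w ∉ sphere c R → CircleIntegrable (fun z => (w - z)⁻¹) c R :=
      fun w hw => (cont_inv_on_sphere hw).circleIntegrable hR.le
    have h1 : (∮ z in C(c, R), (p - z)⁻¹ * (q - z)⁻¹)
        = ∮ z in C(c, R), (q - p)⁻¹ * ((p - z)⁻¹ - (q - z)⁻¹) := by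
      refine circleIntegral.integral_congr hR.le (fun z hz => ?_)
      have hp0 : p - z ≠ 0 := sub_ne_zero.2 (fun h => hpn (h ▸ hz))
      have hq0 : q - z ≠ 0 := sub_ne_zero.2 (fun h => hqn (h ▸ hz))
      have hqp : q - p ≠ 0 := sub_ne_zero.2 (Ne.symm hpq)
      field_simp
      ring
    rw [h1, circleIntegral.integral_const_mul,
      circleIntegral.integral_sub (hint p hpn) (hint q hqn), one_pole_in hp, one_pole_in hq]
    ring

lemma oint_sum_mul_sum {ι κ : Type*} [Fintype ι] [Fintype κ] (A : ι → ℂ) (B : κ → ℂ)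
    (p : ι → ℂ) (q : κ → ℂ) (c : ℂ) {R : ℝ} (hR : 0 < R)
    (hp : ∀ i, p i ∉ sphere c R) (hq : ∀ k, q k ∉ sphere c R) :
    (∮ z in C(c,R), (∑ i, A i / (p i - z)) * (∑ k, B k / (q k - z)))
    = ∑ i, ∑ k, A i * B k * (∮ z in C(c,R), (p i - z)⁻¹ * (q k - z)⁻¹) := by
  have hc : ∀ (i : ι) (k : κ),
      ContinuousOn (fun z => A i * B k * ((p i - z)⁻¹ * (q k - z)⁻¹)) (sphere c R) :=
    fun i k => continuousOn_const.mul ((cont_inv_on_sphere (hp i)).mul (cont_inv_on_sphere (hq k)))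
  have h1 : (∮ z in C(c,R), (∑ i, A i / (p i - z)) * (∑ k, B k / (q k - z)))
      = ∮ z in C(c,R), ∑ i, ∑ k, A i * B k * ((p i - z)⁻¹ * (q k - z)⁻¹) := by
    refine circleIntegral.integral_congr hR.le (fun z _ => ?_)
    rw [Finset.sum_mul_sum]
    exact Finset.sum_congr rfl fun i _ => Finset.sum_congr rfl fun k _ => by ring
  rw [h1, myCircleIntegral_finset_sum _ _ _ _ (fun i _ =>
    ContinuousOn.circleIntegrable hR.le (by
      refine continuousOn_finset_sum _ (fun k _ => hc i k)))]
  refine Finset.sum_congr rfl fun i _ => ?_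
  rw [myCircleIntegral_finset_sum _ _ _ _ (fun k _ => (hc i k).circleIntegrable hR.le)]
  exact Finset.sum_congr rfl fun k _ => by
    rw [circleIntegral.integral_const_mul]



open scoped ComplexOrder

/-- Decomposing the poles of the rational Herglotz functions `P` and `Q`
into interior ones (lying in `(a,b)`, inside the contour, here the circle centered at
`(a+b)/2` of radius `(b-a)/2` encircling `[a,b]`) and exterior ones (lying to the right
of `b`), the clockwise contour integral `(1/(2πi)) ∮_Γ P Q dz` equals
`Σ_{j int, ℓ ext} A_j B_ℓ/(q_ℓ − p_j) + Σ_{j ext, ℓ int} A_j B_ℓ/(p_j − q_ℓ)`, and each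
summand is nonnegative. -/
theorem contour_integral_of_rational_herglotz_product_eq_residue_sum
    {J₁i J₁e J₂i J₂e : Type*} [Fintype J₁i] [Fintype J₁e] [Fintype J₂i] [Fintype J₂e]
    (a b : ℝ) (hab : a < b)
    (A₁ : J₁i → ℝ) (A₂ : J₁e → ℝ) (B₁ : J₂i → ℝ) (B₂ : J₂e → ℝ)
    (p₁ : J₁i → ℝ) (p₂ : J₁e → ℝ) (q₁ : J₂i → ℝ) (q₂ : J₂e → ℝ)
    (hA₁ : ∀ j, 0 ≤ A₁ j) (hA₂ : ∀ j, 0 ≤ A₂ j)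
    (hB₁ : ∀ l, 0 ≤ B₁ l) (hB₂ : ∀ l, 0 ≤ B₂ l)
    (hp₁ : ∀ j, p₁ j ∈ Set.Ioo a b) (hp₂ : ∀ j, b < p₂ j)
    (hq₁ : ∀ l, q₁ l ∈ Set.Ioo a b) (hq₂ : ∀ l, b < q₂ l) :
    (-(2 * (Real.pi : ℂ) * Complex.I)⁻¹ *
        (∮ z in C((((a + b) / 2 : ℝ) : ℂ), (b - a) / 2),
          ((∑ j, (A₁ j : ℂ) / ((p₁ j : ℂ) - z)) + ∑ j, (A₂ j : ℂ) / ((p₂ j : ℂ) - z)) *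
          ((∑ l, (B₁ l : ℂ) / ((q₁ l : ℂ) - z)) + ∑ l, (B₂ l : ℂ) / ((q₂ l : ℂ) - z)))
      = ((∑ j, ∑ l, A₁ j * B₂ l / (q₂ l - p₁ j)
          + ∑ j, ∑ l, A₂ j * B₁ l / (p₂ j - q₁ l) : ℝ) : ℂ))
    ∧ (∀ j l, 0 ≤ A₁ j * B₂ l / (q₂ l - p₁ j))
    ∧ (∀ j l, 0 ≤ A₂ j * B₁ l / (p₂ j - q₁ l)) := by
  refine ⟨?_, fun j l => div_nonneg (mul_nonneg (hA₁ j) (hB₂ l))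
      (by have := (hp₁ j).2; have := hq₂ l; linarith),
    fun j l => div_nonneg (mul_nonneg (hA₂ j) (hB₁ l))
      (by have := (hq₁ l).2; have := hp₂ j; linarith)⟩
  set c : ℂ := (((a + b) / 2 : ℝ) : ℂ) with hc
  set R : ℝ := (b - a) / 2 with hRdef
  have hR : 0 < R := by rw [hRdef]; linarith
  have hball : ∀ x : ℝ, a < x → x < b → (x : ℂ) ∈ ball c R := by
    intro x h1 h2
    rw [mem_ball, Complex.dist_eq, hc, show ((x:ℂ) - (((a+b)/2:ℝ):ℂ)) = ((x - (a+b)/2 : ℝ) : ℂ) by push_cast; ring,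
      Complex.norm_real, Real.norm_eq_abs, abs_sub_lt_iff]
    constructor <;> (rw [hRdef]; linarith)
  have hout : ∀ x : ℝ, b < x → (x : ℂ) ∉ closedBall c R := by
    intro x h1
    rw [mem_closedBall, Complex.dist_eq, hc, show ((x:ℂ) - (((a+b)/2:ℝ):ℂ)) = ((x - (a+b)/2 : ℝ) : ℂ) by push_cast; ring,
      Complex.norm_real, Real.norm_eq_abs, not_le]
    calc R < x - (a+b)/2 := by rw [hRdef]; linarith
      _ ≤ |x - (a+b)/2| := le_abs_self _
  have hnsp_ball : ∀ {w : ℂ}, w ∈ ball c R → w ∉ sphere c R :=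
    fun hw hs => absurd (mem_ball.1 hw) (by simp [mem_sphere.1 hs])
  have hnsp_out : ∀ {w : ℂ}, w ∉ closedBall c R → w ∉ sphere c R :=
    fun hw hs => hw (sphere_subset_closedBall hs)
  set AA : J₁i ⊕ J₁e → ℂ := Sum.elim (fun j => (A₁ j : ℂ)) (fun j => (A₂ j : ℂ)) with hAA
  set BB : J₂i ⊕ J₂e → ℂ := Sum.elim (fun l => (B₁ l : ℂ)) (fun l => (B₂ l : ℂ)) with hBB
  set pp : J₁i ⊕ J₁e → ℂ := Sum.elim (fun j => ((p₁ j : ℝ) : ℂ)) (fun j => ((p₂ j : ℝ) : ℂ)) with hpp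
  set qq : J₂i ⊕ J₂e → ℂ := Sum.elim (fun l => ((q₁ l : ℝ) : ℂ)) (fun l => ((q₂ l : ℝ) : ℂ)) with hqq
  have hp' : ∀ i, pp i ∉ sphere c R := by
    rintro (j | j)
    · exact hnsp_ball (hball _ (hp₁ j).1 (hp₁ j).2)
    · exact hnsp_out (hout _ (hp₂ j))
  have hq' : ∀ k, qq k ∉ sphere c R := by
    rintro (l | l)
    · exact hnsp_ball (hball _ (hq₁ l).1 (hq₁ l).2)
    · exact hnsp_out (hout _ (hq₂ l))
  have hsum1 : (∮ z in C(c, R),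
          ((∑ j, (A₁ j : ℂ) / ((p₁ j : ℂ) - z)) + ∑ j, (A₂ j : ℂ) / ((p₂ j : ℂ) - z)) *
          ((∑ l, (B₁ l : ℂ) / ((q₁ l : ℂ) - z)) + ∑ l, (B₂ l : ℂ) / ((q₂ l : ℂ) - z)))
      = ∮ z in C(c, R), (∑ i, AA i / (pp i - z)) * (∑ k, BB k / (qq k - z)) :=
    circleIntegral.integral_congr hR.le (fun z _ => by
      simp [hAA, hBB, hpp, hqq, Fintype.sum_sum_type])
  rw [hsum1, oint_sum_mul_sum AA BB pp qq c hR hp' hq']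
  have e11 : ∀ (j : J₁i) (l : J₂i),
      (∮ z in C(c,R), (((p₁ j : ℝ):ℂ) - z)⁻¹ * (((q₁ l : ℝ):ℂ) - z)⁻¹) = 0 :=
    fun j l => two_pole_int_int hR (hball _ (hp₁ j).1 (hp₁ j).2) (hball _ (hq₁ l).1 (hq₁ l).2)
  have e22 : ∀ (j : J₁e) (l : J₂e),
      (∮ z in C(c,R), (((p₂ j : ℝ):ℂ) - z)⁻¹ * (((q₂ l : ℝ):ℂ) - z)⁻¹) = 0 :=
    fun j l => two_pole_ext_ext hR (hout _ (hp₂ j)) (hout _ (hq₂ l))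
  have e12 : ∀ (j : J₁i) (l : J₂e),
      (∮ z in C(c,R), (((p₁ j : ℝ):ℂ) - z)⁻¹ * (((q₂ l : ℝ):ℂ) - z)⁻¹)
        = -(2 * (π:ℂ) * I) * (((q₂ l : ℝ):ℂ) - ((p₁ j : ℝ):ℂ))⁻¹ :=
    fun j l => two_pole_int_ext hR (hball _ (hp₁ j).1 (hp₁ j).2) (hout _ (hq₂ l))
  have e21 : ∀ (j : J₁e) (l : J₂i),
      (∮ z in C(c,R), (((p₂ j : ℝ):ℂ) - z)⁻¹ * (((q₁ l : ℝ):ℂ) - z)⁻¹)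
        = -(2 * (π:ℂ) * I) * (((p₂ j : ℝ):ℂ) - ((q₁ l : ℝ):ℂ))⁻¹ := by
    intro j l
    have h1 : (∮ z in C(c,R), (((p₂ j : ℝ):ℂ) - z)⁻¹ * (((q₁ l : ℝ):ℂ) - z)⁻¹)
        = ∮ z in C(c,R), (((q₁ l : ℝ):ℂ) - z)⁻¹ * (((p₂ j : ℝ):ℂ) - z)⁻¹ :=
      circleIntegral.integral_congr hR.le (fun z _ => mul_comm _ _)
    rw [h1, two_pole_int_ext hR (hball _ (hq₁ l).1 (hq₁ l).2) (hout _ (hp₂ j))]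
  simp only [hAA, hBB, hpp, hqq, Fintype.sum_sum_type, Sum.elim_inl, Sum.elim_inr,
    e11, e12, e21, e22, mul_zero, Finset.sum_const_zero, add_zero, zero_add]
  have hS1 : (∑ j : J₁i, ∑ l : J₂e,
        (A₁ j : ℂ) * (B₂ l : ℂ) * (-(2 * (π:ℂ) * I) * (((q₂ l:ℝ):ℂ) - ((p₁ j:ℝ):ℂ))⁻¹))
      = -(2 * (π:ℂ) * I) * ∑ j : J₁i, ∑ l : J₂e,
        (A₁ j : ℂ) * (B₂ l : ℂ) / (((q₂ l:ℝ):ℂ) - ((p₁ j:ℝ):ℂ)) := by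
    rw [Finset.mul_sum]
    exact Finset.sum_congr rfl fun j _ => by
      rw [Finset.mul_sum]; exact Finset.sum_congr rfl fun l _ => by ring
  have hS2 : (∑ j : J₁e, ∑ l : J₂i,
        (A₂ j : ℂ) * (B₁ l : ℂ) * (-(2 * (π:ℂ) * I) * (((p₂ j:ℝ):ℂ) - ((q₁ l:ℝ):ℂ))⁻¹))
      = -(2 * (π:ℂ) * I) * ∑ j : J₁e, ∑ l : J₂i,
        (A₂ j : ℂ) * (B₁ l : ℂ) / (((p₂ j:ℝ):ℂ) - ((q₁ l:ℝ):ℂ)) := by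
    rw [Finset.mul_sum]
    exact Finset.sum_congr rfl fun j _ => by
      rw [Finset.mul_sum]; exact Finset.sum_congr rfl fun l _ => by ring
  rw [hS1, hS2, ← mul_add, ← mul_assoc, neg_mul_neg,
    inv_mul_cancel₀ Complex.two_pi_I_ne_zero, one_mul]
  push_cast
  ring
end

section
/- Let H and K be Hermitian matrices with all eigenvalues of both H and K strictly inside an open interval (a,b), let φ be a function analytic on a domain containing the closed interval [a,b] and a clockwise Jordan contour Γ around [a,b], with φ nonincreasing on (a,b). Let V be a Hermitian matrix. Then (1/(2πi)) ∮_Γ φ(z) tr([V (H − z)^{-1}]²) dz ≥ 0. -/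
open Metric Complex Matrix
open scoped ComplexOrder Real
open scoped ComplexOrder



lemma circleIntegral_finset_sum {ι : Type*} (s : Finset ι) (f : ι → ℂ → ℂ) {c : ℂ} {R : ℝ}
    (hf : ∀ i ∈ s, CircleIntegrable (f i) c R) :
    (∮ z in C(c, R), ∑ i ∈ s, f i z) = ∑ i ∈ s, ∮ z in C(c, R), f i z := by
  simp only [circleIntegral, Finset.smul_sum]
  exact intervalIntegral.integral_finset_sum fun i hi => (hf i hi).out

lemma circleIntegral_add' {f g : ℂ → ℂ} {c : ℂ} {R : ℝ} (hf : CircleIntegrable f c R)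
    (hg : CircleIntegrable g c R) :
    (∮ z in C(c, R), (f z + g z)) = (∮ z in C(c, R), f z) + ∮ z in C(c, R), g z := by
  simp only [circleIntegral, smul_add, intervalIntegral.integral_add hf.out hg.out]

lemma diff_dslope {D : Set ℂ} (hD : IsOpen D) {φ : ℂ → ℂ} (hφ : DifferentiableOn ℂ φ D)
    {w : ℂ} (hw : w ∈ D) : DifferentiableOn ℂ (dslope φ w) D := by
  intro b hb
  refine DifferentiableAt.differentiableWithinAt ?_
  rcases eq_or_ne b w with rfl | hne
  · obtain ⟨p, hp⟩ := hφ.analyticAt (hD.mem_nhds hb)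
    exact hp.has_fpower_series_dslope_fslope.analyticAt.differentiableAt
  · exact (differentiableAt_dslope_of_ne hne).mpr (hφ.differentiableAt (hD.mem_nhds hb))

lemma key_integral {c : ℂ} {R : ℝ} (hR : 0 < R) {D : Set ℂ} (hD : IsOpen D)
    (hball : closedBall c R ⊆ D) {φ : ℂ → ℂ} (hφ : DifferentiableOn ℂ φ D)
    {w₁ w₂ : ℂ} (h₁ : w₁ ∈ ball c R) (h₂ : w₂ ∈ ball c R) :
    (∮ z in C(c, R), φ z * ((z - w₁)⁻¹ * (z - w₂)⁻¹)) =
      (2 * ↑π * I) * dslope φ w₁ w₂ := by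
  have hsub : ball c R ⊆ D := (ball_subset_closedBall).trans hball
  have hg : DifferentiableOn ℂ (dslope φ w₁) D := diff_dslope hD hφ (hsub h₁)
  have hcl : closure (ball c R) = closedBall c R := closure_ball c hR.ne'
  have hcont : DiffContOnCl ℂ (dslope φ w₁) (ball c R) :=
    ⟨hg.mono hsub, (hg.continuousOn.mono hball).mono (by rw [hcl])⟩
  have hsphere : sphere c R ⊆ D := sphere_subset_closedBall.trans hball
  have hzw : ∀ w ∈ ball c R, ∀ z ∈ sphere c R, z - w ≠ 0 := by
    intro w hw z hz
    rw [sub_ne_zero]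
    rintro rfl
    exact absurd (mem_sphere.mp hz) (ne_of_lt (mem_ball.mp hw))
  -- integrability facts
  have hi1 : CircleIntegrable (fun z => (z - w₂)⁻¹ • dslope φ w₁ z) c R := by
    refine ContinuousOn.circleIntegrable hR.le ?_
    exact (ContinuousOn.inv₀ (continuousOn_id.sub continuousOn_const)
        (fun z hz => hzw w₂ h₂ z hz)).smul ((hg.continuousOn).mono hsphere)
  have hi2 : CircleIntegrable (fun z => φ w₁ * ((z - w₁)⁻¹ * (z - w₂)⁻¹)) c R := by
    refine ContinuousOn.circleIntegrable hR.le ?_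
    exact continuousOn_const.mul
      ((ContinuousOn.inv₀ (continuousOn_id.sub continuousOn_const)
        (fun z hz => hzw w₁ h₁ z hz)).mul
       (ContinuousOn.inv₀ (continuousOn_id.sub continuousOn_const)
        (fun z hz => hzw w₂ h₂ z hz)))
  have hinv : CircleIntegrable (fun z => (z - w₁)⁻¹ * (z - w₂)⁻¹) c R := by
    refine ContinuousOn.circleIntegrable hR.le ?_
    exact (ContinuousOn.inv₀ (continuousOn_id.sub continuousOn_const)
        (fun z hz => hzw w₁ h₁ z hz)).mul
       (ContinuousOn.inv₀ (continuousOn_id.sub continuousOn_const)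
        (fun z hz => hzw w₂ h₂ z hz))
  -- the second piece vanishes
  have h2zero : (∮ z in C(c, R), (z - w₁)⁻¹ * (z - w₂)⁻¹) = 0 := by
    rcases eq_or_ne w₁ w₂ with rfl | hne
    · have : ∀ z ∈ sphere c R, (z - w₁)⁻¹ * (z - w₁)⁻¹ = (z - w₁) ^ (-2 : ℤ) := by
        intro z hz
        rw [_root_.zpow_neg, _root_.zpow_two, _root_.mul_inv]
      rw [circleIntegral.integral_congr hR.le this]
      exact circleIntegral.integral_sub_zpow_of_ne (by decide) c w₁ R
    · have heq : Set.EqOn (fun z => (z - w₁)⁻¹ * (z - w₂)⁻¹)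
          (fun z => (w₁ - w₂)⁻¹ * ((z - w₁)⁻¹ - (z - w₂)⁻¹)) (sphere c R) := by
        intro z hz
        have h1 := hzw w₁ h₁ z hz
        have h2 := hzw w₂ h₂ z hz
        have h3 : w₁ - w₂ ≠ 0 := sub_ne_zero.mpr hne
        show (z - w₁)⁻¹ * (z - w₂)⁻¹ = (w₁ - w₂)⁻¹ * ((z - w₁)⁻¹ - (z - w₂)⁻¹)
        rw [inv_sub_inv h1 h2, show z - w₂ - (z - w₁) = w₁ - w₂ by ring, div_eq_mul_inv,
          ← mul_assoc, inv_mul_cancel₀ h3, one_mul, mul_inv]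
      rw [circleIntegral.integral_congr hR.le heq, circleIntegral.integral_const_mul]
      have ha : CircleIntegrable (fun z => (z - w₁)⁻¹) c R :=
        ContinuousOn.circleIntegrable hR.le (ContinuousOn.inv₀
          (continuousOn_id.sub continuousOn_const) (fun z hz => hzw w₁ h₁ z hz))
      have hb : CircleIntegrable (fun z => (z - w₂)⁻¹) c R :=
        ContinuousOn.circleIntegrable hR.le (ContinuousOn.inv₀
          (continuousOn_id.sub continuousOn_const) (fun z hz => hzw w₂ h₂ z hz))
      rw [circleIntegral.integral_sub ha hb, circleIntegral.integral_sub_inv_of_mem_ball h₁,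
        circleIntegral.integral_sub_inv_of_mem_ball h₂]
      simp
  -- main decomposition on the sphere
  have heq : Set.EqOn (fun z => φ z * ((z - w₁)⁻¹ * (z - w₂)⁻¹))
      (fun z => (z - w₂)⁻¹ • dslope φ w₁ z + φ w₁ * ((z - w₁)⁻¹ * (z - w₂)⁻¹))
      (sphere c R) := by
    intro z hz
    have h1 := hzw w₁ h₁ z hz
    have hφz : φ z = (z - w₁) * dslope φ w₁ z + φ w₁ := by
      have := sub_smul_dslope φ w₁ z
      rw [smul_eq_mul] at this
      linear_combination -this
    simp only [smul_eq_mul]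
    have hkey : (z - w₁) * ((z - w₁)⁻¹ * (z - w₂)⁻¹) = (z - w₂)⁻¹ := by
      rw [← mul_assoc, mul_inv_cancel₀ h1, one_mul]
    rw [hφz, add_mul, mul_right_comm, hkey]
  rw [circleIntegral.integral_congr hR.le heq, circleIntegral_add' hi1 hi2,
    hcont.circleIntegral_sub_inv_smul h₂, circleIntegral.integral_const_mul, h2zero,
    mul_zero, add_zero, smul_eq_mul]


lemma slope_nonpos {a b : ℝ} {φ : ℂ → ℂ}
    (hreal : ∀ x ∈ Set.Ioo a b, ((φ x).im = 0))
    (hmono : ∀ x ∈ Set.Ioo a b, ∀ y ∈ Set.Ioo a b, x ≤ y → (φ (y : ℂ)).re ≤ (φ (x : ℂ)).re)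
    {x y : ℝ} (hx : x ∈ Set.Ioo a b) (hy : y ∈ Set.Ioo a b) (hne : y ≠ x) :
    dslope φ (x : ℂ) (y : ℂ) ≤ 0 := by
  have hne' : (y : ℂ) ≠ (x : ℂ) := by exact_mod_cast hne
  rw [dslope_of_ne φ hne', slope_def_field]
  have hfy : φ y = ((φ y).re : ℂ) := Complex.ext rfl (hreal y hy)
  have hfx : φ x = ((φ x).re : ℂ) := Complex.ext rfl (hreal x hx)
  rw [hfy, hfx]
  have : ((((φ y).re : ℂ)) - ((φ x).re : ℂ)) / ((y : ℂ) - (x : ℂ))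
      = ((((φ y).re - (φ x).re) / (y - x) : ℝ) : ℂ) := by push_cast; ring
  rw [this, show (0 : ℂ) = ((0 : ℝ) : ℂ) by norm_num, Complex.real_le_real]
  rcases lt_or_gt_of_ne hne with h | h
  · apply div_nonpos_of_nonneg_of_nonpos
    · have := hmono y hy x hx h.le; linarith
    · linarith
  · apply div_nonpos_of_nonpos_of_nonneg
    · have := hmono x hx y hy h.le; linarith
    · linarith

lemma dslope_nonpos {a b : ℝ} (hab : a < b) {D : Set ℂ} (hD : IsOpen D)
    (hsub : ∀ x ∈ Set.Ioo a b, (x : ℂ) ∈ D)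
    {φ : ℂ → ℂ} (hφ : DifferentiableOn ℂ φ D)
    (hreal : ∀ x ∈ Set.Ioo a b, ((φ x).im = 0))
    (hmono : ∀ x ∈ Set.Ioo a b, ∀ y ∈ Set.Ioo a b, x ≤ y → (φ (y : ℂ)).re ≤ (φ (x : ℂ)).re)
    {x y : ℝ} (hx : x ∈ Set.Ioo a b) (hy : y ∈ Set.Ioo a b) :
    dslope φ (x : ℂ) (y : ℂ) ≤ 0 := by
  rcases ne_or_eq y x with hne | heq
  · exact slope_nonpos hreal hmono hx hy hne
  rw [heq]
  -- y = x : use continuity of dslope at x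
  have hc : ContinuousAt (dslope φ (x : ℂ)) (x : ℂ) :=
    continuousAt_dslope_same.mpr (hφ.differentiableAt (hD.mem_nhds (hsub x hx)))
  have htend : Filter.Tendsto (fun t : ℝ => dslope φ (x : ℂ) (t : ℂ))
      (nhdsWithin x (Set.Ioi x)) (nhds (dslope φ (x : ℂ) (x : ℂ))) :=
    (hc.tendsto.comp ((Complex.continuous_ofReal.tendsto x).mono_left nhdsWithin_le_nhds))
  have hS : IsClosed {z : ℂ | z ≤ 0} := isClosed_Iic
  refine hS.mem_of_tendsto htend ?_
  filter_upwards [Ioo_mem_nhdsGT_of_mem ⟨le_refl x, hx.2⟩] with t ht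
  exact slope_nonpos hreal hmono hx ⟨lt_trans hx.1 ht.1, ht.2⟩ (ne_of_gt ht.1)

/-- Let `H`, `K` be Hermitian matrices with all eigenvalues in `(a,b)`,
let `φ` be analytic on an open domain `D` containing the closed disc bounded by the circle
`Γ` centered at `(a+b)/2` with radius `R > (b−a)/2` (so `Γ` encircles `[a,b]`), with `φ`
real-valued and nonincreasing on `(a,b)`, and let `V` be Hermitian.  Then the clockwise
contour integral `(1/(2πi)) ∮_Γ φ(z) tr([V (H − z)⁻¹]²) dz` is nonnegative. -/
theorem contour_integral_trace_square_nonneg {n : ℕ} (a b : ℝ) (hab : a < b)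
    (H K : Matrix (Fin n) (Fin n) ℂ) (hH : H.IsHermitian) (hK : K.IsHermitian)
    (hspecH : ∀ i, hH.eigenvalues i ∈ Set.Ioo a b)
    (hspecK : ∀ i, hK.eigenvalues i ∈ Set.Ioo a b)
    (R : ℝ) (hR : (b - a) / 2 < R)
    (D : Set ℂ) (hD : IsOpen D)
    (hball : Metric.closedBall (((a + b) / 2 : ℝ) : ℂ) R ⊆ D)
    (φ : ℂ → ℂ) (hφ : DifferentiableOn ℂ φ D)
    (hreal : ∀ x ∈ Set.Ioo a b, ((φ x).im = 0))
    (hmono : ∀ x ∈ Set.Ioo a b, ∀ y ∈ Set.Ioo a b, x ≤ y → (φ (y : ℂ)).re ≤ (φ (x : ℂ)).re)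
    (V : Matrix (Fin n) (Fin n) ℂ) (hV : V.IsHermitian) :
    0 ≤ -(2 * (Real.pi : ℂ) * Complex.I)⁻¹ *
        ∮ z in C((((a + b) / 2 : ℝ) : ℂ), R),
          φ z * ((V * (H - z • 1)⁻¹) ^ 2).trace := by
  set c : ℂ := (((a + b) / 2 : ℝ) : ℂ) with hc
  have hR0 : 0 < R := lt_of_le_of_lt (by linarith) hR
  set lam : Fin n → ℝ := hH.eigenvalues with hlam
  -- membership facts
  have hmem' : ∀ x ∈ Set.Ioo a b, (x : ℂ) ∈ ball c R := by
    intro x hx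
    rw [mem_ball, hc, Complex.isometry_ofReal.dist_eq, Real.dist_eq]
    refine lt_trans (abs_lt.mpr ⟨by simp only [Set.mem_Ioo] at hx; linarith,
      by simp only [Set.mem_Ioo] at hx; linarith⟩) hR
  have hmem : ∀ i, ((lam i : ℝ) : ℂ) ∈ ball c R := fun i => hmem' (lam i) (hspecH i)
  have hIooD : ∀ x ∈ Set.Ioo a b, (x : ℂ) ∈ D := fun x hx =>
    hball (ball_subset_closedBall (hmem' x hx))
  have hzlam : ∀ z ∈ sphere c R, ∀ i, z - ((lam i : ℝ) : ℂ) ≠ 0 := by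
    intro z hz i
    rw [sub_ne_zero]
    rintro rfl
    exact absurd (mem_sphere.mp hz) (ne_of_lt (mem_ball.mp (hmem i)))
  -- unitary diagonalization
  set U : Matrix (Fin n) (Fin n) ℂ := ↑(hH.eigenvectorUnitary) with hUdef
  have hU1 : U * star U = 1 := mem_unitaryGroup_iff.mp (hH.eigenvectorUnitary).2
  have hU2 : star U * U = 1 := mem_unitaryGroup_iff'.mp (hH.eigenvectorUnitary).2
  set W : Matrix (Fin n) (Fin n) ℂ := star U * V * U with hWdef
  have hWH : W.IsHermitian := by
    show Wᴴ = W
    rw [hWdef, Matrix.star_eq_conjTranspose]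
    rw [Matrix.conjTranspose_mul, Matrix.conjTranspose_mul, Matrix.conjTranspose_conjTranspose,
      hV.eq, Matrix.mul_assoc]
  have hWnn : ∀ k m, (0 : ℂ) ≤ W k m * W m k := by
    intro k m
    rw [← hWH.apply k m]
    exact star_mul_self_nonneg _
  -- inverse formula on the sphere
  have hinv : ∀ z ∈ sphere c R,
      (H - z • 1)⁻¹ = U * diagonal (fun i => (((lam i : ℝ) : ℂ) - z)⁻¹) * star U := by
    intro z hz
    have hHd : H - z • 1 = U * diagonal (fun i => (((lam i : ℝ) : ℂ) - z)) * star U := by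
      conv_lhs => rw [hH.spectral_theorem, Unitary.conjStarAlgAut_apply]
      have h1 : (z • (1 : Matrix (Fin n) (Fin n) ℂ)) = U * (z • 1) * star U := by
        rw [Matrix.mul_smul, Matrix.mul_one, Matrix.smul_mul, hU1]
      rw [h1, ← Matrix.sub_mul, ← Matrix.mul_sub, Matrix.smul_one_eq_diagonal,
        Matrix.diagonal_sub]
      rfl
    have hne : ∀ i, (((lam i : ℝ) : ℂ) - z) ≠ 0 := by
      intro i h
      exact hzlam z hz i (by linear_combination -h)
    apply Matrix.inv_eq_right_inv
    rw [hHd, Matrix.mul_assoc, Matrix.mul_assoc, Matrix.mul_assoc]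
    rw [show star U * (U * (diagonal (fun i => (((lam i : ℝ) : ℂ) - z)⁻¹) * star U))
        = diagonal (fun i => (((lam i : ℝ) : ℂ) - z)⁻¹) * star U by
      rw [← Matrix.mul_assoc, hU2, Matrix.one_mul]]
    rw [← Matrix.mul_assoc (diagonal _), Matrix.diagonal_mul_diagonal]
    have : (fun i => (((lam i : ℝ) : ℂ) - z) * (((lam i : ℝ) : ℂ) - z)⁻¹) = fun _ => 1 := by
      funext i; exact mul_inv_cancel₀ (hne i)
    rw [this, Matrix.diagonal_one, Matrix.one_mul, hU1]
  -- V conjugated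
  have hVU : U * W * star U = V := by
    rw [hWdef]
    simp only [← Matrix.mul_assoc]
    rw [hU1, Matrix.one_mul, Matrix.mul_assoc, hU1, Matrix.mul_one]
  have hsphereD : sphere c R ⊆ D := sphere_subset_closedBall.trans hball
  -- trace formula on the sphere
  have htr : ∀ z ∈ sphere c R,
      φ z * ((V * (H - z • 1)⁻¹) ^ 2).trace
        = ∑ p : Fin n × Fin n, (W p.1 p.2 * W p.2 p.1) *
            (φ z * ((z - ((lam p.1 : ℝ) : ℂ))⁻¹ * (z - ((lam p.2 : ℝ) : ℂ))⁻¹)) := by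
    intro z hz
    rw [hinv z hz, pow_two]
    set dinv : Fin n → ℂ := fun i => (((lam i : ℝ) : ℂ) - z)⁻¹ with hdinv
    have hM : V * (U * diagonal dinv * star U) = U * (W * diagonal dinv) * star U := by
      conv_lhs => rw [← hVU]
      simp only [← Matrix.mul_assoc]
      rw [Matrix.mul_assoc (U * W) (star U) U, hU2, Matrix.mul_one]
    rw [hM]
    have hM2 : (U * (W * diagonal dinv) * star U) * (U * (W * diagonal dinv) * star U)
        = U * ((W * diagonal dinv) * (W * diagonal dinv)) * star U := by
      simp only [← Matrix.mul_assoc]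
      rw [Matrix.mul_assoc (U * W * diagonal dinv) (star U) U, hU2, Matrix.mul_one]
    rw [hM2, Matrix.trace_mul_cycle, hU2, Matrix.one_mul]
    rw [Matrix.trace]
    simp only [Matrix.diag_apply, Matrix.mul_apply, Matrix.diagonal_apply, mul_ite, mul_zero,
      Finset.sum_ite_eq', Finset.mem_univ, if_true, hdinv]
    rw [Fintype.sum_prod_type, Finset.mul_sum]
    refine Finset.sum_congr rfl fun k _ => ?_
    rw [Finset.mul_sum]
    refine Finset.sum_congr rfl fun m _ => ?_
    have hdneg : ∀ i : Fin n, (((lam i : ℝ) : ℂ) - z)⁻¹ = -(z - ((lam i : ℝ) : ℂ))⁻¹ := by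
      intro i
      rw [← inv_neg, neg_sub]
    rw [hdneg k, hdneg m]
    ring
  -- rewrite the contour integral as a finite sum
  have hFint : ∀ p : Fin n × Fin n, p ∈ (Finset.univ : Finset (Fin n × Fin n)) →
      CircleIntegrable (fun z => (W p.1 p.2 * W p.2 p.1) *
        (φ z * ((z - ((lam p.1 : ℝ) : ℂ))⁻¹ * (z - ((lam p.2 : ℝ) : ℂ))⁻¹))) c R := by
    intro p _
    refine ContinuousOn.circleIntegrable hR0.le ?_
    refine continuousOn_const.mul ((hφ.continuousOn.mono hsphereD).mul ?_)
    exact (ContinuousOn.inv₀ (continuousOn_id.sub continuousOn_const)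
        (fun z hz => hzlam z hz p.1)).mul
      (ContinuousOn.inv₀ (continuousOn_id.sub continuousOn_const)
        (fun z hz => hzlam z hz p.2))
  rw [circleIntegral.integral_congr hR0.le (fun z hz => htr z hz),
    circleIntegral_finset_sum _ _ hFint]
  have hval : ∀ p : Fin n × Fin n,
      (∮ z in C(c, R), (W p.1 p.2 * W p.2 p.1) *
        (φ z * ((z - ((lam p.1 : ℝ) : ℂ))⁻¹ * (z - ((lam p.2 : ℝ) : ℂ))⁻¹)))
      = (W p.1 p.2 * W p.2 p.1) *
          ((2 * ↑π * I) * dslope φ ((lam p.1 : ℝ) : ℂ) ((lam p.2 : ℝ) : ℂ)) := by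
    intro p
    rw [circleIntegral.integral_const_mul,
      key_integral hR0 hD hball hφ (hmem p.1) (hmem p.2)]
  simp only [hval]
  rw [Finset.mul_sum]
  refine Finset.sum_nonneg fun p _ => ?_
  have h2pi : (2 * (π : ℂ) * I) ≠ 0 := by
    simp [Real.pi_ne_zero, Complex.I_ne_zero, Complex.ofReal_ne_zero]
  have hrw : -(2 * (π : ℂ) * I)⁻¹ * ((W p.1 p.2 * W p.2 p.1) *
        ((2 * ↑π * I) * dslope φ ((lam p.1 : ℝ) : ℂ) ((lam p.2 : ℝ) : ℂ)))
      = (W p.1 p.2 * W p.2 p.1) *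
          (-(dslope φ ((lam p.1 : ℝ) : ℂ) ((lam p.2 : ℝ) : ℂ))) := by
    field_simp
  rw [hrw]
  exact mul_nonneg (hWnn p.1 p.2) (neg_nonneg.mpr
    (dslope_nonpos hab hD hIooD hφ hreal hmono (hspecH p.1) (hspecH p.2)))
end

section
/- Let H(s) = H₀ + V(s) where H₀ is a Hermitian matrix and s ↦ V(s) is a twice continuously differentiable family of Hermitian matrices on an interval (s₁,s₂) with V''(s) ≤ 0 (negative semidefinite) for all s. Let φ : ℝ → ℝ be real-analytic (or smooth with suitable functional calculus), nonnegative and nonincreasing on an interval containing all spectra of H(s). Then the function s ↦ tr(V'(s) φ(H(s))) is nonincreasing on (s₁,s₂). -/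
open Matrix
open scoped ComplexOrder

/-- The functional calculus `φ(A)` for a Hermitian matrix `A`, defined via the spectral
decomposition `A = U diag(λ) U*` as `U diag(φ(λ)) U*`. -/
noncomputable def hermFun {n : ℕ} {A : Matrix (Fin n) (Fin n) ℂ}
    (hA : A.IsHermitian) (φ : ℝ → ℝ) : Matrix (Fin n) (Fin n) ℂ :=
  (hA.eigenvectorUnitary : Matrix (Fin n) (Fin n) ℂ) *
    Matrix.diagonal (fun i => ((φ (hA.eigenvalues i) : ℝ) : ℂ)) *
    (hA.eigenvectorUnitary : Matrix (Fin n) (Fin n) ℂ)ᴴ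

section Auxiliary

open Polynomial Finset


lemma hasDerivAt_matmul {n : ℕ} {A B : ℝ → Matrix (Fin n) (Fin n) ℂ}
    {A' B' : Matrix (Fin n) (Fin n) ℂ} {s : ℝ}
    (hA : ∀ i j, HasDerivAt (fun u => A u i j) (A' i j) s)
    (hB : ∀ i j, HasDerivAt (fun u => B u i j) (B' i j) s) :
    ∀ i j, HasDerivAt (fun u => (A u * B u) i j) ((A' * B s + A s * B') i j) s := by
  intro i j
  have h : HasDerivAt (fun u => ∑ l, A u i l * B u l j)
      (∑ l, (A' i l * B s l j + A s i l * B' l j)) s :=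
    HasDerivAt.fun_sum fun l _ => (hA i l).mul (hB l j)
  simp only [Matrix.mul_apply, Matrix.add_apply, Finset.sum_add_distrib] at h ⊢
  exact h

lemma hasDerivAt_matpow {n : ℕ} {A : ℝ → Matrix (Fin n) (Fin n) ℂ}
    {A' : Matrix (Fin n) (Fin n) ℂ} {s : ℝ}
    (hA : ∀ i j, HasDerivAt (fun u => A u i j) (A' i j) s) (k : ℕ) :
    ∀ i j, HasDerivAt (fun u => (A u ^ k) i j)
      ((∑ m ∈ Finset.range k, A s ^ m * A' * A s ^ (k - 1 - m)) i j) s := by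
  induction k with
  | zero =>
      intro i j
      simp only [pow_zero, Finset.range_zero, Finset.sum_empty, Matrix.zero_apply]
      exact hasDerivAt_const s _
  | succ k ih =>
      intro i j
      have key : (∑ m ∈ Finset.range (k + 1), A s ^ m * A' * A s ^ (k + 1 - 1 - m))
          = (∑ m ∈ Finset.range k, A s ^ m * A' * A s ^ (k - 1 - m)) * A s + A s ^ k * A' := by
        rw [Finset.sum_range_succ, Finset.sum_mul]
        congr 1
        · refine Finset.sum_congr rfl fun m hm => ?_
          rw [Finset.mem_range] at hm
          rw [show k + 1 - 1 - m = (k - 1 - m) + 1 by omega, pow_succ, ← Matrix.mul_assoc]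
        · simp
      rw [key]
      have h := hasDerivAt_matmul (A := fun u => A u ^ k) (B := A)
        (A' := ∑ m ∈ Finset.range k, A s ^ m * A' * A s ^ (k - 1 - m)) (B' := A') ih hA i j
      simp only [pow_succ]
      exact h

lemma trace_conj_eq {n : ℕ} {U : Matrix (Fin n) (Fin n) ℂ} (hU2 : U * Uᴴ = 1)
    (M : Matrix (Fin n) (Fin n) ℂ) : M.trace = (Uᴴ * M * U).trace := by
  rw [Matrix.trace_mul_comm, ← Matrix.mul_assoc, hU2, Matrix.one_mul]

lemma trace_mul_diag {n : ℕ} (B : Matrix (Fin n) (Fin n) ℂ) (d : Fin n → ℂ) :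
    (B * Matrix.diagonal d).trace = ∑ i, B i i * d i := by
  simp [Matrix.trace, Matrix.diag, Matrix.mul_diagonal]

lemma trace_WdWd {n : ℕ} (W₁ W₂ : Matrix (Fin n) (Fin n) ℂ) (d e : Fin n → ℂ) :
    (W₁ * Matrix.diagonal d * (W₂ * Matrix.diagonal e)).trace
      = ∑ i, ∑ l, W₁ i l * d l * (W₂ l i * e i) := by
  have h : ∀ i, (W₁ * Matrix.diagonal d * (W₂ * Matrix.diagonal e)) i i
      = ∑ l, W₁ i l * d l * (W₂ l i * e i) := by
    intro i
    rw [Matrix.mul_apply]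
    exact Finset.sum_congr rfl fun l _ => by rw [Matrix.mul_diagonal, Matrix.mul_diagonal]
  simp only [Matrix.trace, Matrix.diag, h]

lemma pow_spectral {n : ℕ} {A : Matrix (Fin n) (Fin n) ℂ} (hA : A.IsHermitian) (k : ℕ) :
    A ^ k = (hA.eigenvectorUnitary : Matrix (Fin n) (Fin n) ℂ)
      * Matrix.diagonal (fun i => ((hA.eigenvalues i : ℝ) : ℂ)) ^ k
      * (hA.eigenvectorUnitary : Matrix (Fin n) (Fin n) ℂ)ᴴ := by
  set U : Matrix (Fin n) (Fin n) ℂ := (hA.eigenvectorUnitary : Matrix (Fin n) (Fin n) ℂ) with hU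
  set lam : Fin n → ℝ := hA.eigenvalues with hlam
  have hU1 : Uᴴ * U = 1 := by
    rw [← Matrix.star_eq_conjTranspose]
    exact Matrix.mem_unitaryGroup_iff'.mp hA.eigenvectorUnitary.2
  have hU2 : U * Uᴴ = 1 := by
    rw [← Matrix.star_eq_conjTranspose]
    exact Matrix.mem_unitaryGroup_iff.mp hA.eigenvectorUnitary.2
  have hspec : A = U * Matrix.diagonal (fun i => ((lam i : ℝ) : ℂ)) * Uᴴ := by
    have := hA.spectral_theorem
    rw [← Matrix.star_eq_conjTranspose]
    exact this
  clear_value U lam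
  induction k with
  | zero => simpa using hU2.symm
  | succ k ih =>
      rw [pow_succ, pow_succ, ih]
      conv_lhs => rw [hspec]
      simp only [Matrix.mul_assoc]
      rw [← Matrix.mul_assoc Uᴴ U, hU1, Matrix.one_mul]

lemma sum_smul_diag_pow {n : ℕ} (N : ℕ) (c : ℕ → ℝ) (f : Fin n → ℂ) :
    ∑ k ∈ Finset.range N, (c k : ℂ) • Matrix.diagonal f ^ k
      = Matrix.diagonal (fun i => ∑ k ∈ Finset.range N, (c k : ℂ) * f i ^ k) := by
  ext i j
  by_cases h : i = j
  · subst h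
    simp [Matrix.sum_apply, Matrix.diagonal_pow, Matrix.diagonal_apply_eq]
  · simp [Matrix.sum_apply, Matrix.diagonal_pow, Matrix.diagonal_apply_ne _ h]

lemma sum_swap4 {α : Type*} [AddCommMonoid α] (N : ℕ) {n : ℕ} (f : ℕ → ℕ → Fin n → Fin n → α) :
    ∑ k ∈ Finset.range N, ∑ m ∈ Finset.range k, ∑ i : Fin n, ∑ l : Fin n, f k m i l
      = ∑ i : Fin n, ∑ l : Fin n, ∑ k ∈ Finset.range N, ∑ m ∈ Finset.range k, f k m i l := by
  have h1 : ∀ k, ∑ m ∈ Finset.range k, ∑ i : Fin n, ∑ l : Fin n, f k m i l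
      = ∑ i : Fin n, ∑ l : Fin n, ∑ m ∈ Finset.range k, f k m i l := by
    intro k
    rw [Finset.sum_comm]
    exact Finset.sum_congr rfl fun i _ => Finset.sum_comm
  simp only [h1]
  rw [Finset.sum_comm]
  exact Finset.sum_congr rfl fun i _ => Finset.sum_comm

lemma PosSemidef.re_diag_nonneg' {n : ℕ} {M : Matrix (Fin n) (Fin n) ℂ} (hM : M.PosSemidef)
    (i : Fin n) : 0 ≤ (M i i).re := by
  have h := hM.re_dotProduct_nonneg (Pi.single i 1)
  simpa [dotProduct, Matrix.mulVec, Pi.single_apply, Finset.mul_sum] using h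

lemma trace_herm_im_zero {n : ℕ} {M P : Matrix (Fin n) (Fin n) ℂ}
    (hM : M.IsHermitian) (hP : P.IsHermitian) : ((M * P).trace).im = 0 := by
  have h : (starRingEnd ℂ) ((M * P).trace) = (M * P).trace := by
    have := Matrix.trace_conjTranspose (M * P)
    rw [Matrix.conjTranspose_mul, hM.eq, hP.eq, Matrix.trace_mul_comm] at this
    exact this.symm
  exact Complex.conj_eq_iff_im.mp h

lemma polyCase {n : ℕ} (s₁ s₂ : ℝ)
    (H₀ : Matrix (Fin n) (Fin n) ℂ) (hH₀ : H₀.IsHermitian)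
    (V V' V'' : ℝ → Matrix (Fin n) (Fin n) ℂ)
    (hV : ∀ s, (V s).IsHermitian)
    (hderiv1 : ∀ s ∈ Set.Ioo s₁ s₂, ∀ i j, HasDerivAt (fun u => V u i j) (V' s i j) s)
    (hderiv2 : ∀ s ∈ Set.Ioo s₁ s₂, ∀ i j, HasDerivAt (fun u => V' u i j) (V'' s i j) s)
    (hconc : ∀ s ∈ Set.Ioo s₁ s₂, (-(V'' s)).PosSemidef)
    (a b : ℝ)
    (hspec : ∀ s ∈ Set.Ioo s₁ s₂, ∀ i, (hH₀.add (hV s)).eigenvalues i ∈ Set.Icc a b)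
    (hV'h : ∀ s ∈ Set.Ioo s₁ s₂, (V' s).IsHermitian)
    (N : ℕ) (c : ℕ → ℝ)
    (hc0 : ∀ x ∈ Set.Icc a b, 0 ≤ ∑ k ∈ Finset.range N, c k * x ^ k)
    (hcg : ∀ x ∈ Set.Icc a b, ∀ y ∈ Set.Icc a b,
      ∑ k ∈ Finset.range N, c k * ∑ m ∈ Finset.range k, y ^ m * x ^ (k - 1 - m) ≤ 0) :
    AntitoneOn (fun s => ((V' s * ∑ k ∈ Finset.range N, (c k : ℂ) • (H₀ + V s) ^ k).trace).re)
      (Set.Ioo s₁ s₂) := by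
  have key : ∀ s ∈ Set.Ioo s₁ s₂, ∃ d : ℝ, d ≤ 0 ∧
      HasDerivAt (fun u => ((V' u * ∑ k ∈ Finset.range N, (c k : ℂ) • (H₀ + V u) ^ k).trace).re)
        d s := by
    intro s hs
    have hA : (H₀ + V s).IsHermitian := hH₀.add (hV s)
    set U : Matrix (Fin n) (Fin n) ℂ := (hA.eigenvectorUnitary : Matrix (Fin n) (Fin n) ℂ)
      with hUdef
    set lam : Fin n → ℝ := hA.eigenvalues with hlamdef
    have hU1 : Uᴴ * U = 1 := by
      rw [← Matrix.star_eq_conjTranspose]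
      exact Matrix.mem_unitaryGroup_iff'.mp hA.eigenvectorUnitary.2
    have hU2 : U * Uᴴ = 1 := by
      rw [← Matrix.star_eq_conjTranspose]
      exact Matrix.mem_unitaryGroup_iff.mp hA.eigenvectorUnitary.2
    have hlam_mem : ∀ i, lam i ∈ Set.Icc a b := hspec s hs
    set dC : Fin n → ℂ := fun i => ((lam i : ℝ) : ℂ) with hdCdef
    have hpow : ∀ k : ℕ, (H₀ + V s) ^ k = U * Matrix.diagonal dC ^ k * Uᴴ :=
      fun k => pow_spectral hA k
    set W : Matrix (Fin n) (Fin n) ℂ := Uᴴ * V' s * U with hWdef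
    have hWh : W.IsHermitian := Matrix.isHermitian_conjTranspose_mul_mul U (hV'h s hs)
    have hWconj : ∀ i l, W l i = star (W i l) := by
      intro i l
      have := congrFun (congrFun hWh.eq l) i
      rw [Matrix.conjTranspose_apply] at this
      exact this.symm
    -- the matrices P and DP
    set P : Matrix (Fin n) (Fin n) ℂ := ∑ k ∈ Finset.range N, (c k : ℂ) • (H₀ + V s) ^ k
      with hPdef
    set DPk : ℕ → Matrix (Fin n) (Fin n) ℂ :=
      fun k => ∑ m ∈ Finset.range k, (H₀ + V s) ^ m * V' s * (H₀ + V s) ^ (k - 1 - m) with hDPkdef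
    set DP : Matrix (Fin n) (Fin n) ℂ := ∑ k ∈ Finset.range N, (c k : ℂ) • DPk k with hDPdef
    -- real scalar quantities
    set eR : ℝ → ℝ := fun x => ∑ k ∈ Finset.range N, c k * x ^ k with heRdef
    -- spectral form of P
    have hPdiag : P = U * Matrix.diagonal (fun i => ((eR (lam i) : ℝ) : ℂ)) * Uᴴ := by
      rw [hPdef]
      calc ∑ k ∈ Finset.range N, (c k : ℂ) • (H₀ + V s) ^ k
          = ∑ k ∈ Finset.range N, (c k : ℂ) • (U * Matrix.diagonal dC ^ k * Uᴴ) :=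
            Finset.sum_congr rfl fun k _ => by rw [hpow k]
        _ = U * (∑ k ∈ Finset.range N, (c k : ℂ) • Matrix.diagonal dC ^ k) * Uᴴ := by
            rw [Matrix.mul_sum, Matrix.sum_mul]
            exact (Finset.sum_congr rfl fun k _ => by
              rw [Matrix.mul_smul, Matrix.smul_mul]).symm
        _ = U * Matrix.diagonal (fun i => ∑ k ∈ Finset.range N, (c k : ℂ) * dC i ^ k) * Uᴴ := by
            rw [sum_smul_diag_pow]
        _ = U * Matrix.diagonal (fun i => ((eR (lam i) : ℝ) : ℂ)) * Uᴴ := by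
            congr 2
            funext i
            rw [heRdef, hdCdef]
            push_cast
            rfl
    -- derivatives
    have hHd : ∀ i j, HasDerivAt (fun u => (H₀ + V u) i j) (V' s i j) s := by
      intro i j
      have := (hderiv1 s hs i j).const_add (H₀ i j)
      simp only [Matrix.add_apply]
      exact this
    have hPd : ∀ i j, HasDerivAt
        (fun u => (∑ k ∈ Finset.range N, (c k : ℂ) • (H₀ + V u) ^ k) i j) (DP i j) s := by
      intro i j
      have h : HasDerivAt (fun u => ∑ k ∈ Finset.range N, (c k : ℂ) * ((H₀ + V u) ^ k) i j)
          (∑ k ∈ Finset.range N, (c k : ℂ) * DPk k i j) s :=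
        HasDerivAt.fun_sum fun k _ =>
          HasDerivAt.const_mul ((c k : ℂ)) (hasDerivAt_matpow hHd k i j)
      rw [hDPdef]
      simp only [Matrix.sum_apply, Matrix.smul_apply, smul_eq_mul]
      exact h
    have hFd : HasDerivAt
        (fun u => (V' u * ∑ k ∈ Finset.range N, (c k : ℂ) • (H₀ + V u) ^ k).trace)
        ((V'' s * P + V' s * DP).trace) s := by
      have hentry := hasDerivAt_matmul (A := V')
        (B := fun u => ∑ k ∈ Finset.range N, (c k : ℂ) • (H₀ + V u) ^ k)
        (A' := V'' s) (B' := DP) (hderiv2 s hs) hPd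
      have h : HasDerivAt
          (fun u => ∑ i, (V' u * ∑ k ∈ Finset.range N, (c k : ℂ) • (H₀ + V u) ^ k) i i)
          (∑ i, (V'' s * P + V' s * DP) i i) s :=
        HasDerivAt.fun_sum fun i _ => hentry i i
      simpa only [Matrix.trace, Matrix.diag] using h
    refine ⟨((V'' s * P + V' s * DP).trace).re, ?_, ?_⟩
    swap
    · have := Complex.reCLM.hasFDerivAt.comp_hasDerivAt s hFd
      simpa [Function.comp_def] using this
    -- sign analysis
    rw [Matrix.trace_add, Complex.add_re]
    have h1 : ((V'' s * P).trace).re ≤ 0 := by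
      rw [hPdiag]
      rw [trace_conj_eq hU2]
      have hmat : Uᴴ * (V'' s * (U * Matrix.diagonal (fun i => ((eR (lam i) : ℝ) : ℂ)) * Uᴴ)) * U
          = (Uᴴ * V'' s * U) * Matrix.diagonal (fun i => ((eR (lam i) : ℝ) : ℂ)) := by
        simp only [Matrix.mul_assoc]
        rw [hU1, Matrix.mul_one]
      rw [hmat, trace_mul_diag, Complex.re_sum]
      refine Finset.sum_nonpos fun i _ => ?_
      have hnn : 0 ≤ eR (lam i) := hc0 (lam i) (hlam_mem i)
      have hneg : ((Uᴴ * V'' s * U) i i).re ≤ 0 := by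
        have hps : (Uᴴ * (-(V'' s)) * U).PosSemidef :=
          (hconc s hs).conjTranspose_mul_mul_same U
        have h0 := PosSemidef.re_diag_nonneg' hps i
        have heq : (Uᴴ * (-(V'' s)) * U) = -(Uᴴ * V'' s * U) := by
          rw [Matrix.mul_neg, Matrix.neg_mul]
        rw [heq] at h0
        simpa using h0
      calc ((Uᴴ * V'' s * U) i i * ((eR (lam i) : ℝ) : ℂ)).re
          = eR (lam i) * ((Uᴴ * V'' s * U) i i).re := by
            rw [mul_comm, Complex.re_ofReal_mul]
        _ ≤ 0 := mul_nonpos_iff.mpr (Or.inl ⟨hnn, hneg⟩)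
    have h2 : ((V' s * DP).trace).re ≤ 0 := by
      set gR : Fin n → Fin n → ℝ := fun i l =>
        ∑ k ∈ Finset.range N, c k * ∑ m ∈ Finset.range k, lam l ^ m * lam i ^ (k - 1 - m)
        with hgRdef
      have hsingle : ∀ m j' : ℕ,
          (V' s * ((H₀ + V s) ^ m * V' s * (H₀ + V s) ^ j')).trace
            = ∑ i, ∑ l, W i l * dC l ^ m * (W l i * dC i ^ j') := by
        intro m j'
        rw [trace_conj_eq hU2, hpow m, hpow j']
        have hmat : Uᴴ * (V' s * (U * Matrix.diagonal dC ^ m * Uᴴ * V' s *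
              (U * Matrix.diagonal dC ^ j' * Uᴴ))) * U
            = W * Matrix.diagonal dC ^ m * (W * Matrix.diagonal dC ^ j') := by
          rw [hWdef]
          simp only [Matrix.mul_assoc]
          rw [hU1, Matrix.mul_one]
        rw [hmat, Matrix.diagonal_pow, Matrix.diagonal_pow, trace_WdWd]
        simp only [Pi.pow_apply]
      have hexp : (V' s * DP).trace
          = ∑ k ∈ Finset.range N, (c k : ℂ) *
              ∑ m ∈ Finset.range k, ∑ i, ∑ l,
                W i l * dC l ^ m * (W l i * dC i ^ (k - 1 - m)) := by
        rw [hDPdef, Matrix.mul_sum, Matrix.trace_sum]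
        refine Finset.sum_congr rfl fun k _ => ?_
        rw [Matrix.mul_smul, Matrix.trace_smul, smul_eq_mul]
        simp only [hDPkdef]
        congr 1
        rw [Matrix.mul_sum, Matrix.trace_sum]
        exact Finset.sum_congr rfl fun m _ => hsingle m (k - 1 - m)
      rw [hexp]
      have hre : (∑ k ∈ Finset.range N, (c k : ℂ) *
            ∑ m ∈ Finset.range k, ∑ i, ∑ l, W i l * dC l ^ m * (W l i * dC i ^ (k - 1 - m)))
          = ∑ i, ∑ l, ((Complex.normSq (W i l) * gR i l : ℝ) : ℂ) := by
        simp only [Finset.mul_sum]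
        rw [sum_swap4 N (f := fun k m i l =>
          (c k : ℂ) * (W i l * dC l ^ m * (W l i * dC i ^ (k - 1 - m))))]
        refine Finset.sum_congr rfl fun i _ => Finset.sum_congr rfl fun l _ => ?_
        have hcast : ((Complex.normSq (W i l) * gR i l : ℝ) : ℂ)
            = (W i l * W l i) * ∑ k ∈ Finset.range N, (c k : ℂ) *
                ∑ m ∈ Finset.range k, dC l ^ m * dC i ^ (k - 1 - m) := by
          have hn : (W i l * W l i) = ((Complex.normSq (W i l) : ℝ) : ℂ) := by
            rw [hWconj i l]
            simpa using Complex.mul_conj (W i l)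
          rw [hn, hgRdef, hdCdef]
          push_cast
          ring
        rw [hcast]
        simp only [Finset.mul_sum]
        refine Finset.sum_congr rfl fun k _ => Finset.sum_congr rfl fun m _ => ?_
        ring
      rw [hre, Complex.re_sum]
      refine Finset.sum_nonpos fun i _ => ?_
      rw [Complex.re_sum]
      refine Finset.sum_nonpos fun l _ => ?_
      rw [Complex.ofReal_re]
      exact mul_nonpos_iff.mpr
        (Or.inl ⟨Complex.normSq_nonneg _, hcg (lam i) (hlam_mem i) (lam l) (hlam_mem l)⟩)
    linarith
  have hdiff : ∀ s ∈ Set.Ioo s₁ s₂, DifferentiableAt ℝ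
      (fun u => ((V' u * ∑ k ∈ Finset.range N, (c k : ℂ) • (H₀ + V u) ^ k).trace).re) s :=
    fun s hs => ((key s hs).choose_spec.2).differentiableAt
  apply antitoneOn_of_deriv_nonpos (convex_Ioo s₁ s₂)
  · exact fun s hs => (hdiff s hs).continuousAt.continuousWithinAt
  · rw [interior_Ioo]
    exact fun s hs => (hdiff s hs).differentiableWithinAt
  · intro s hs
    rw [interior_Ioo] at hs
    obtain ⟨d, hd0, hd⟩ := key s hs
    rw [hd.deriv]
    exact hd0


lemma exists_antideriv (r : ℝ[X]) : ∃ P : ℝ[X], Polynomial.derivative P = r := by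
  refine ⟨r.sum fun k a => Polynomial.C (a / (k + 1)) * Polynomial.X ^ (k + 1), ?_⟩
  rw [Polynomial.sum, map_sum]
  conv_rhs => rw [← Polynomial.sum_C_mul_X_pow_eq r, Polynomial.sum]
  refine Finset.sum_congr rfl fun k hk => ?_
  rw [Polynomial.derivative_C_mul_X_pow, Nat.add_sub_cancel]
  congr 2
  push_cast
  field_simp

lemma deriv_nonpos_of_antitoneOn {φ : ℝ → ℝ} (hd : ∀ x : ℝ, HasDerivAt φ (deriv φ x) x)
    {a b : ℝ} (hab : a < b) (hm : AntitoneOn φ (Set.Icc a b)) :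
    ∀ x ∈ Set.Icc a b, deriv φ x ≤ 0 := by
  intro x hx
  rcases lt_or_ge x b with h | h
  · -- approach from the right
    have ht : Filter.Tendsto (slope φ x) (nhdsWithin x (Set.Ioi x)) (nhds (deriv φ x)) :=
      (hasDerivAt_iff_tendsto_slope.mp (hd x)).mono_left
        (nhdsWithin_mono x fun y hy => ne_of_gt hy)
    refine le_of_tendsto ht ?_
    filter_upwards [Ioo_mem_nhdsGT_of_mem (Set.left_mem_Ico.mpr h)] with y hy
    have hy1 : x < y := hy.1
    have hmem : y ∈ Set.Icc a b := ⟨le_trans hx.1 hy1.le, hy.2.le⟩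
    have : φ y ≤ φ x := hm hx hmem hy1.le
    rw [slope_def_field]
    apply div_nonpos_of_nonpos_of_nonneg <;> linarith
  · -- x = b, approach from the left
    have hax : a < x := lt_of_lt_of_le hab h
    have ht : Filter.Tendsto (slope φ x) (nhdsWithin x (Set.Iio x)) (nhds (deriv φ x)) :=
      (hasDerivAt_iff_tendsto_slope.mp (hd x)).mono_left
        (nhdsWithin_mono x fun y hy => ne_of_lt hy)
    refine le_of_tendsto ht ?_
    filter_upwards [Ioo_mem_nhdsLT_of_mem (Set.right_mem_Ioc.mpr hax)] with y hy
    have hy1 : y < x := hy.2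
    have hmem : y ∈ Set.Icc a b := ⟨hy.1.le, le_trans hy1.le hx.2⟩
    have : φ x ≤ φ y := hm hmem hx hy1.le
    rw [slope_def_field]
    apply div_nonpos_of_nonneg_of_nonpos <;> linarith

/-- Construction of a polynomial close to `φ`, nonnegative on `[a,b]`, with nonpositive
derivative on `[a,b]`. -/
lemma exists_good_poly {a b : ℝ} (hab : a < b) {φ : ℝ → ℝ}
    (hφa : AnalyticOnNhd ℝ φ Set.univ)
    (hφnn : ∀ x ∈ Set.Icc a b, 0 ≤ φ x)
    (hφmono : AntitoneOn φ (Set.Icc a b)) {ε : ℝ} (hε : 0 < ε) :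
    ∃ p : ℝ[X], (∀ x ∈ Set.Icc a b, |p.eval x - φ x| ≤ ε) ∧
      (∀ x ∈ Set.Icc a b, 0 ≤ p.eval x) ∧
      (∀ x ∈ Set.Icc a b, (Polynomial.derivative p).eval x ≤ 0) := by
  have hφd : ∀ x : ℝ, HasDerivAt φ (deriv φ x) x := fun x =>
    ((hφa x (Set.mem_univ x)).differentiableAt).hasDerivAt
  have hφ'c : ContinuousOn (deriv φ) (Set.Icc a b) := by
    have := hφa.deriv
    exact fun x _ => ((this x (Set.mem_univ x)).continuousAt).continuousWithinAt
  have hφ'le : ∀ x ∈ Set.Icc a b, deriv φ x ≤ 0 := deriv_nonpos_of_antitoneOn hφd hab hφmono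
  set δ : ℝ := ε / (6 * (b - a) + 1) with hδdef
  have hδ : 0 < δ := by
    apply div_pos hε
    nlinarith
  obtain ⟨r, hr⟩ := exists_polynomial_near_of_continuousOn a b (deriv φ) hφ'c δ hδ
  set r₁ : ℝ[X] := r - Polynomial.C (2 * δ) with hr₁def
  have hr₁close : ∀ x ∈ Set.Icc a b, |r₁.eval x - deriv φ x| ≤ 3 * δ := by
    intro x hx
    have := hr x hx
    rw [hr₁def]
    simp only [Polynomial.eval_sub, Polynomial.eval_C]
    rw [abs_le] at *
    constructor <;> [skip; skip] <;> cases' abs_lt.mp this with h1 h2 <;> linarith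
  have hr₁neg : ∀ x ∈ Set.Icc a b, r₁.eval x ≤ 0 := by
    intro x hx
    have h1 := hr x hx
    have h2 := hφ'le x hx
    rw [hr₁def]
    simp only [Polynomial.eval_sub, Polynomial.eval_C]
    cases' abs_lt.mp h1 with h3 h4
    linarith
  obtain ⟨P, hP⟩ := exists_antideriv r₁
  set q : ℝ[X] := P + Polynomial.C (φ a - P.eval a) with hqdef
  have hq' : Polynomial.derivative q = r₁ := by
    rw [hqdef, map_add, hP, Polynomial.derivative_C, add_zero]
  have hqa : q.eval a = φ a := by
    rw [hqdef]; simp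
  -- MVT bound on h := q.eval - φ
  set M : ℝ := 3 * δ * (b - a) with hMdef
  have hherr : ∀ x ∈ Set.Icc a b, |q.eval x - φ x| ≤ M := by
    have hdh : ∀ x ∈ Set.Icc a b, HasDerivWithinAt (fun y => q.eval y - φ y)
        (r₁.eval x - deriv φ x) (Set.Icc a b) x := by
      intro x _
      exact ((q.hasDerivAt x).sub (hφd x)).hasDerivWithinAt.congr_deriv (by rw [hq'])
    have hbound : ∀ x ∈ Set.Ico a b, ‖r₁.eval x - deriv φ x‖ ≤ 3 * δ := fun x hx =>
      hr₁close x (Set.Ico_subset_Icc_self hx)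
    intro x hx
    have := norm_image_sub_le_of_norm_deriv_le_segment' hdh hbound x hx
    have hxa : x - a ≤ b - a := by have := hx.2; linarith
    have h3δ : (0:ℝ) ≤ 3 * δ := by linarith
    rw [hqa] at this
    have h2 : ‖q.eval x - φ x - (φ a - φ a)‖ = |q.eval x - φ x| := by
      rw [sub_self, sub_zero, Real.norm_eq_abs]
    rw [h2] at this
    calc |q.eval x - φ x| ≤ 3 * δ * (x - a) := this
      _ ≤ M := by rw [hMdef]; exact mul_le_mul_of_nonneg_left hxa h3δ
  have hD : (0:ℝ) < 6 * (b - a) + 1 := by nlinarith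
  have hδε : δ * (6 * (b - a) + 1) = ε := by rw [hδdef]; field_simp
  have hMle : 2 * M ≤ ε := by rw [hMdef]; nlinarith
  have hM0 : 0 ≤ M := by rw [hMdef]; nlinarith
  refine ⟨q + Polynomial.C M, ?_, ?_, ?_⟩
  · intro x hx
    have h1 := hherr x hx
    simp only [Polynomial.eval_add, Polynomial.eval_C]
    rw [abs_le] at h1 ⊢
    constructor <;> [linarith [h1.1]; linarith [h1.2]]
  · intro x hx
    have h1 := hherr x hx
    have h2 := hφnn x hx
    simp only [Polynomial.eval_add, Polynomial.eval_C]
    rw [abs_le] at h1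
    linarith [h1.1]
  · intro x hx
    rw [map_add, Polynomial.derivative_C, add_zero, hq']
    exact hr₁neg x hx


lemma gsign (p : ℝ[X]) {a b : ℝ}
    (hd : ∀ x ∈ Set.Icc a b, (Polynomial.derivative p).eval x ≤ 0) :
    ∀ x ∈ Set.Icc a b, ∀ y ∈ Set.Icc a b,
      ∑ k ∈ Finset.range (p.natDegree + 1), p.coeff k *
        ∑ m ∈ Finset.range k, y ^ m * x ^ (k - 1 - m) ≤ 0 := by
  have hanti : AntitoneOn (fun t => p.eval t) (Set.Icc a b) := by
    apply antitoneOn_of_deriv_nonpos (convex_Icc a b) (p.continuous.continuousOn)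
      (p.differentiable.differentiableOn)
    intro t ht
    rw [Polynomial.deriv]
    exact hd t (interior_subset ht)
  intro x hx y hy
  rcases eq_or_ne x y with heq | hne
  · subst heq
    have hS : ∑ k ∈ Finset.range (p.natDegree + 1), p.coeff k *
        ∑ m ∈ Finset.range k, x ^ m * x ^ (k - 1 - m)
        = (Polynomial.derivative p).eval x := by
      have h1 : ∀ k : ℕ, ∑ m ∈ Finset.range k, x ^ m * x ^ (k - 1 - m)
          = (k : ℝ) * x ^ (k - 1) := by
        intro k
        rw [Finset.sum_congr rfl (fun m hm => ?_), Finset.sum_const, Finset.card_range,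
          nsmul_eq_mul]
        rw [← pow_add]
        congr 1
        rw [Finset.mem_range] at hm
        omega
      have h2 : HasDerivAt (fun t : ℝ => ∑ k ∈ Finset.range (p.natDegree + 1), p.coeff k * t ^ k)
          (∑ k ∈ Finset.range (p.natDegree + 1), p.coeff k * ((k : ℝ) * x ^ (k - 1))) x :=
        HasDerivAt.fun_sum fun k _ => HasDerivAt.const_mul _ (hasDerivAt_pow k x)
      have h3 : (fun t : ℝ => ∑ k ∈ Finset.range (p.natDegree + 1), p.coeff k * t ^ k)
          = fun t => p.eval t := by
        funext t
        exact (Polynomial.eval_eq_sum_range t).symm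
      rw [h3] at h2
      have h4 := h2.unique (p.hasDerivAt x)
      simp only [h1]
      exact h4
    rw [hS]
    exact hd x hx
  · have hmul : (∑ k ∈ Finset.range (p.natDegree + 1), p.coeff k *
        ∑ m ∈ Finset.range k, y ^ m * x ^ (k - 1 - m)) * (y - x)
        = p.eval y - p.eval x := by
      rw [Finset.sum_mul, Polynomial.eval_eq_sum_range (p := p) y,
        Polynomial.eval_eq_sum_range (p := p) x, ← Finset.sum_sub_distrib]
      refine Finset.sum_congr rfl fun k _ => ?_
      rw [mul_assoc, geom_sum₂_mul]
      ring
    rcases lt_or_gt_of_ne hne with h | h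
    · by_contra hS
      push_neg at hS
      have hpos : 0 < (∑ k ∈ Finset.range (p.natDegree + 1), p.coeff k *
          ∑ m ∈ Finset.range k, y ^ m * x ^ (k - 1 - m)) * (y - x) :=
        mul_pos hS (sub_pos.mpr h)
      rw [hmul] at hpos
      have := hanti hx hy h.le
      simp only at this
      linarith
    · by_contra hS
      push_neg at hS
      have hneg : (∑ k ∈ Finset.range (p.natDegree + 1), p.coeff k *
          ∑ m ∈ Finset.range k, y ^ m * x ^ (k - 1 - m)) * (y - x) < 0 :=
        mul_neg_of_pos_of_neg hS (by linarith)
      rw [hmul] at hneg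
      have := hanti hy hx h.le
      simp only at this
      linarith

lemma approx_bound {n : ℕ} {A : Matrix (Fin n) (Fin n) ℂ} (hA : A.IsHermitian)
    (V1 : Matrix (Fin n) (Fin n) ℂ) (φ : ℝ → ℝ) (N : ℕ) (c : ℕ → ℝ) {ε' : ℝ}
    (hclose : ∀ i, |(∑ k ∈ Finset.range N, c k * hA.eigenvalues i ^ k) - φ (hA.eigenvalues i)| ≤ ε') :
    |((V1 * hermFun hA φ).trace).re
        - ((V1 * ∑ k ∈ Finset.range N, (c k : ℂ) • A ^ k).trace).re|
      ≤ (∑ i, ‖((hA.eigenvectorUnitary : Matrix (Fin n) (Fin n) ℂ)ᴴ * V1 *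
          (hA.eigenvectorUnitary : Matrix (Fin n) (Fin n) ℂ)) i i‖) * ε' := by
  set U : Matrix (Fin n) (Fin n) ℂ := (hA.eigenvectorUnitary : Matrix (Fin n) (Fin n) ℂ)
    with hUdef
  set lam : Fin n → ℝ := hA.eigenvalues with hlamdef
  have hU1 : Uᴴ * U = 1 := by
    rw [← Matrix.star_eq_conjTranspose]
    exact Matrix.mem_unitaryGroup_iff'.mp hA.eigenvectorUnitary.2
  have hU2 : U * Uᴴ = 1 := by
    rw [← Matrix.star_eq_conjTranspose]
    exact Matrix.mem_unitaryGroup_iff.mp hA.eigenvectorUnitary.2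
  set W : Matrix (Fin n) (Fin n) ℂ := Uᴴ * V1 * U with hWdef
  set dC : Fin n → ℂ := fun i => ((lam i : ℝ) : ℂ) with hdCdef
  have hgen : ∀ d : Fin n → ℂ, (V1 * (U * Matrix.diagonal d * Uᴴ)).trace = ∑ i, W i i * d i := by
    intro d
    rw [trace_conj_eq hU2]
    have hmat : Uᴴ * (V1 * (U * Matrix.diagonal d * Uᴴ)) * U = W * Matrix.diagonal d := by
      rw [hWdef]
      simp only [Matrix.mul_assoc]
      rw [hU1, Matrix.mul_one]
    rw [hmat, trace_mul_diag]
  have h1 : (V1 * hermFun hA φ).trace = ∑ i, W i i * ((φ (lam i) : ℝ) : ℂ) := by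
    have hh : hermFun hA φ = U * Matrix.diagonal (fun i => ((φ (lam i) : ℝ) : ℂ)) * Uᴴ := rfl
    rw [hh, hgen]
  have hpow : ∀ k : ℕ, A ^ k = U * Matrix.diagonal dC ^ k * Uᴴ := fun k => pow_spectral hA k
  have hP : (∑ k ∈ Finset.range N, (c k : ℂ) • A ^ k)
      = U * Matrix.diagonal (fun i => ((∑ k ∈ Finset.range N, c k * lam i ^ k : ℝ) : ℂ)) * Uᴴ := by
    calc ∑ k ∈ Finset.range N, (c k : ℂ) • A ^ k
        = ∑ k ∈ Finset.range N, (c k : ℂ) • (U * Matrix.diagonal dC ^ k * Uᴴ) :=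
          Finset.sum_congr rfl fun k _ => by rw [hpow k]
      _ = U * (∑ k ∈ Finset.range N, (c k : ℂ) • Matrix.diagonal dC ^ k) * Uᴴ := by
          rw [Matrix.mul_sum, Matrix.sum_mul]
          exact (Finset.sum_congr rfl fun k _ => by rw [Matrix.mul_smul, Matrix.smul_mul]).symm
      _ = U * Matrix.diagonal (fun i => ∑ k ∈ Finset.range N, (c k : ℂ) * dC i ^ k) * Uᴴ := by
          rw [sum_smul_diag_pow]
      _ = U * Matrix.diagonal (fun i => ((∑ k ∈ Finset.range N, c k * lam i ^ k : ℝ) : ℂ)) * Uᴴ := by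
          congr 2
          funext i
          rw [hdCdef]
          push_cast
          rfl
  have h2 : (V1 * ∑ k ∈ Finset.range N, (c k : ℂ) • A ^ k).trace
      = ∑ i, W i i * ((∑ k ∈ Finset.range N, c k * lam i ^ k : ℝ) : ℂ) := by
    rw [hP, hgen]
  rw [h1, h2, Complex.re_sum, Complex.re_sum, ← Finset.sum_sub_distrib]
  have hterm : ∀ i, (W i i * ((φ (lam i) : ℝ) : ℂ)).re
      - (W i i * ((∑ k ∈ Finset.range N, c k * lam i ^ k : ℝ) : ℂ)).re
      = (φ (lam i) - ∑ k ∈ Finset.range N, c k * lam i ^ k) * (W i i).re := by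
    intro i
    rw [mul_comm (W i i), mul_comm (W i i), Complex.re_ofReal_mul, Complex.re_ofReal_mul]
    ring
  calc |∑ i, ((W i i * ((φ (lam i) : ℝ) : ℂ)).re
      - (W i i * ((∑ k ∈ Finset.range N, c k * lam i ^ k : ℝ) : ℂ)).re)|
      ≤ ∑ i, |(W i i * ((φ (lam i) : ℝ) : ℂ)).re
        - (W i i * ((∑ k ∈ Finset.range N, c k * lam i ^ k : ℝ) : ℂ)).re| :=
        Finset.abs_sum_le_sum_abs _ _
    _ ≤ ∑ i, ‖W i i‖ * ε' := by
        refine Finset.sum_le_sum fun i _ => ?_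
        rw [hterm i, abs_mul]
        have hb1 : |φ (lam i) - ∑ k ∈ Finset.range N, c k * lam i ^ k| ≤ ε' := by
          rw [abs_sub_comm]
          exact hclose i
        have hb2 : |(W i i).re| ≤ ‖W i i‖ := Complex.abs_re_le_norm _
        have h0 : (0:ℝ) ≤ ε' := le_trans (abs_nonneg _) hb1
        calc |φ (lam i) - ∑ k ∈ Finset.range N, c k * lam i ^ k| * |(W i i).re|
            ≤ ε' * ‖W i i‖ :=
              mul_le_mul hb1 hb2 (abs_nonneg _) h0
          _ = ‖W i i‖ * ε' := mul_comm _ _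
    _ = (∑ i, ‖W i i‖) * ε' := (Finset.sum_mul ..).symm

end Auxiliary

/-- Let `H(s) = H₀ + V(s)` with `H₀` Hermitian and `s ↦ V(s)` a twice
continuously differentiable family of Hermitian matrices on `(s₁,s₂)` with `V''(s) ≤ 0`
(negative semidefinite).  Let `φ : ℝ → ℝ` be real-analytic, nonnegative and nonincreasing
on an interval `[a,b]` containing all spectra of `H(s)`.  Then
`s ↦ tr(V'(s) φ(H(s)))` is nonincreasing on `(s₁,s₂)`. -/
theorem trace_deriv_mul_fun_antitone {n : ℕ} (s₁ s₂ : ℝ)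
    (H₀ : Matrix (Fin n) (Fin n) ℂ) (hH₀ : H₀.IsHermitian)
    (V V' V'' : ℝ → Matrix (Fin n) (Fin n) ℂ)
    (hV : ∀ s, (V s).IsHermitian)
    (hderiv1 : ∀ s ∈ Set.Ioo s₁ s₂, ∀ i j, HasDerivAt (fun u => V u i j) (V' s i j) s)
    (hderiv2 : ∀ s ∈ Set.Ioo s₁ s₂, ∀ i j, HasDerivAt (fun u => V' u i j) (V'' s i j) s)
    (hcont : ∀ i j, ContinuousOn (fun s => V'' s i j) (Set.Ioo s₁ s₂))
    (hconc : ∀ s ∈ Set.Ioo s₁ s₂, (-(V'' s)).PosSemidef)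
    (a b : ℝ) (φ : ℝ → ℝ) (hφa : AnalyticOnNhd ℝ φ Set.univ)
    (hspec : ∀ s ∈ Set.Ioo s₁ s₂, ∀ i, (hH₀.add (hV s)).eigenvalues i ∈ Set.Icc a b)
    (hφnn : ∀ x ∈ Set.Icc a b, 0 ≤ φ x)
    (hφmono : AntitoneOn φ (Set.Icc a b)) :
    AntitoneOn (fun s => (V' s * hermFun (hH₀.add (hV s)) φ).trace) (Set.Ioo s₁ s₂) := by
  classical
  have hV'h : ∀ s ∈ Set.Ioo s₁ s₂, (V' s).IsHermitian := by
    intro s hs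
    show (V' s)ᴴ = V' s
    ext i j
    rw [Matrix.conjTranspose_apply]
    have h1 : HasDerivAt (fun u => V u i j) (V' s i j) s := hderiv1 s hs i j
    have h2 : HasDerivAt (fun u => V u i j) (star (V' s j i)) s := by
      have h3 := (hderiv1 s hs j i).star
      have h4 : (fun u => star (V u j i)) = fun u => V u i j := by
        funext u
        have h5 := congrFun (congrFun (hV u).eq i) j
        rw [Matrix.conjTranspose_apply] at h5
        exact h5
      rwa [h4] at h3
    exact h2.unique h1
  intro x hx y hy hxy
  dsimp only
  rcases Nat.eq_zero_or_pos n with hn | hn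
  · subst hn
    simp [Matrix.trace]
  have hab : a ≤ b := by
    have h := hspec x hx ⟨0, hn⟩
    exact le_trans h.1 h.2
  have hHermP : ∀ s : ℝ, (hermFun (hH₀.add (hV s)) φ).IsHermitian := by
    intro s
    have hdiag : (Matrix.diagonal
        (fun i => ((φ ((hH₀.add (hV s)).eigenvalues i) : ℝ) : ℂ))).IsHermitian := by
      apply Matrix.isHermitian_diagonal_of_self_adjoint
      funext i
      show star ((φ ((hH₀.add (hV s)).eigenvalues i) : ℝ) : ℂ) = _
      exact Complex.conj_ofReal _
    exact Matrix.isHermitian_mul_mul_conjTranspose _ hdiag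
  have him : ∀ s ∈ Set.Ioo s₁ s₂,
      ((V' s * hermFun (hH₀.add (hV s)) φ).trace).im = 0 := fun s hs =>
    trace_herm_im_zero (hV'h s hs) (hHermP s)
  rw [Complex.le_def]
  refine ⟨?_, by rw [him y hy, him x hx]⟩
  rcases eq_or_lt_of_le hab with habe | hablt
  · -- degenerate case a = b : V' vanishes on the interval
    have hV0 : ∀ u ∈ Set.Ioo s₁ s₂, V' u = 0 := by
      have hVeq : ∀ u ∈ Set.Ioo s₁ s₂,
          V u = (a : ℂ) • (1 : Matrix (Fin n) (Fin n) ℂ) - H₀ := by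
        intro u hu
        have hA : (H₀ + V u).IsHermitian := hH₀.add (hV u)
        have hlam : ∀ i, hA.eigenvalues i = a := by
          intro i
          have h := hspec u hu i
          rw [← habe] at h
          exact le_antisymm h.2 h.1
        have h1 : H₀ + V u = (a : ℂ) • 1 := by
          have h2 := pow_spectral hA 1
          rw [pow_one, pow_one] at h2
          have h3 : Matrix.diagonal (fun i => ((hA.eigenvalues i : ℝ) : ℂ))
              = (a : ℂ) • (1 : Matrix (Fin n) (Fin n) ℂ) := by
            have h4 : (fun i => ((hA.eigenvalues i : ℝ) : ℂ)) = fun _ => (a : ℂ) := by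
              funext i; rw [hlam i]
            rw [h4]
            ext i j
            by_cases h : i = j <;> simp [Matrix.diagonal_apply, Matrix.one_apply, h]
          rw [h3, Matrix.mul_smul, Matrix.mul_one, Matrix.smul_mul] at h2
          have hU2 : (hA.eigenvectorUnitary : Matrix (Fin n) (Fin n) ℂ) *
              (hA.eigenvectorUnitary : Matrix (Fin n) (Fin n) ℂ)ᴴ = 1 := by
            rw [← Matrix.star_eq_conjTranspose]
            exact Matrix.mem_unitaryGroup_iff.mp hA.eigenvectorUnitary.2
          rw [hU2] at h2
          exact h2
        rw [← h1]
        abel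
      intro u hu
      ext i j
      have hop : Set.Ioo s₁ s₂ ∈ nhds u := isOpen_Ioo.mem_nhds hu
      have hconst : HasDerivAt (fun t => V t i j) 0 u := by
        have hc : HasDerivAt
            (fun _ : ℝ => ((a : ℂ) • (1 : Matrix (Fin n) (Fin n) ℂ) - H₀) i j) 0 u :=
          hasDerivAt_const u _
        apply hc.congr_of_eventuallyEq
        filter_upwards [hop] with t ht
        rw [hVeq t ht]
      have h6 := (hderiv1 u hu i j).unique hconst
      simpa using h6
    rw [hV0 x hx, hV0 y hy]
    simp
  · -- main case a < b
    refine le_of_forall_sub_le ?_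
    intro ε hε
    rw [sub_le_iff_le_add]
    set Cx : ℝ := ∑ i, ‖
      ((((hH₀.add (hV x)).eigenvectorUnitary : Matrix (Fin n) (Fin n) ℂ)ᴴ * V' x *
        ((hH₀.add (hV x)).eigenvectorUnitary : Matrix (Fin n) (Fin n) ℂ)) i i)‖ with hCxdef
    set Cy : ℝ := ∑ i, ‖
      ((((hH₀.add (hV y)).eigenvectorUnitary : Matrix (Fin n) (Fin n) ℂ)ᴴ * V' y *
        ((hH₀.add (hV y)).eigenvectorUnitary : Matrix (Fin n) (Fin n) ℂ)) i i)‖ with hCydef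
    have hCx0 : 0 ≤ Cx := Finset.sum_nonneg fun i _ => norm_nonneg _
    have hCy0 : 0 ≤ Cy := Finset.sum_nonneg fun i _ => norm_nonneg _
    have hC : (0:ℝ) < Cx + Cy + 1 := by linarith
    set ε' : ℝ := ε / (Cx + Cy + 1) with hε'def
    have hε'0 : 0 < ε' := div_pos hε hC
    obtain ⟨p, hp1, hp2, hp3⟩ := exists_good_poly hablt hφa hφnn hφmono hε'0
    have hc0 : ∀ t ∈ Set.Icc a b,
        0 ≤ ∑ k ∈ Finset.range (p.natDegree + 1), p.coeff k * t ^ k := by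
      intro t ht
      rw [← Polynomial.eval_eq_sum_range]
      exact hp2 t ht
    have hcg : ∀ t ∈ Set.Icc a b, ∀ r ∈ Set.Icc a b,
        ∑ k ∈ Finset.range (p.natDegree + 1), p.coeff k *
          ∑ m ∈ Finset.range k, r ^ m * t ^ (k - 1 - m) ≤ 0 :=
      gsign p hp3
    have hpoly := polyCase s₁ s₂ H₀ hH₀ V V' V'' hV hderiv1 hderiv2 hconc a b hspec hV'h
      (p.natDegree + 1) p.coeff hc0 hcg
    have hmono := hpoly hx hy hxy
    dsimp only at hmono
    have happx := approx_bound (hH₀.add (hV x)) (V' x) φ (p.natDegree + 1) p.coeff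
      (ε' := ε') (fun i => by
        have h := hp1 ((hH₀.add (hV x)).eigenvalues i) (hspec x hx i)
        rwa [Polynomial.eval_eq_sum_range] at h)
    have happy := approx_bound (hH₀.add (hV y)) (V' y) φ (p.natDegree + 1) p.coeff
      (ε' := ε') (fun i => by
        have h := hp1 ((hH₀.add (hV y)).eigenvalues i) (hspec y hy i)
        rwa [Polynomial.eval_eq_sum_range] at h)
    rw [← hCxdef] at happx
    rw [← hCydef] at happy
    rw [abs_le] at happx happy
    have hfin : Cx * ε' + Cy * ε' ≤ ε := by
      have hDD : ε' * (Cx + Cy + 1) = ε := by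
        rw [hε'def]
        field_simp
      nlinarith
    linarith [happx.1, happx.2, happy.1, happy.2, hmono]
end

section
/- Let H(s) = H₀ + V(s) as above with V''(s) ≤ 0, and let φ be analytic on a domain containing the spectra, nonnegative and nonincreasing there. Then d/ds tr(V'(s) φ(H(s))) = tr(V''(s) φ(H(s))) − (1/(2πi)) ∮_Γ φ(z) tr([V'(s)(H(s) − z)^{-1}]²) dz, where Γ is a clockwise contour around the spectra. -/
open scoped ComplexOrder

noncomputable section RieszAux

namespace RieszDerivAux

open Metric Set

attribute [local instance] Matrix.linftyOpNormedAddCommGroup Matrix.linftyOpNormedSpace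
  Matrix.linftyOpNormedRing Matrix.linftyOpNormedAlgebra

variable {n : ℕ}

lemma entry_norm_le (M : Matrix (Fin n) (Fin n) ℂ) (i j : Fin n) : ‖M i j‖ ≤ ‖M‖ := by
  have h : ‖M i j‖₊ ≤ ‖M‖₊ := by
    rw [Matrix.linfty_opNNNorm_def]
    calc ‖M i j‖₊ ≤ ∑ k, ‖M i k‖₊ :=
          Finset.single_le_sum (f := fun k => ‖M i k‖₊) (fun k _ => zero_le) (Finset.mem_univ j)
      _ ≤ _ := Finset.le_sup (f := fun i => ∑ k, ‖M i k‖₊) (Finset.mem_univ i)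
  exact_mod_cast h

/-- Entry evaluation as a continuous linear map (w.r.t. the `L∞`-operator norm). -/
def entryCLM (i j : Fin n) : Matrix (Fin n) (Fin n) ℂ →L[ℝ] ℂ :=
  LinearMap.mkContinuous
    { toFun := fun M => M i j
      map_add' := fun _ _ => rfl
      map_smul' := fun _ _ => rfl }
    1 (fun M => by rw [one_mul]; exact entry_norm_le M i j)

@[simp] lemma entryCLM_apply (i j : Fin n) (M : Matrix (Fin n) (Fin n) ℂ) :
    entryCLM i j M = M i j := rfl

/-- Entrywise derivative of the inverse of a matrix-valued function. -/
theorem hasDerivAt_inv_entry {A : ℝ → Matrix (Fin n) (Fin n) ℂ}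
    {A' : Matrix (Fin n) (Fin n) ℂ} {u : ℝ}
    (hA : ∀ i j, HasDerivAt (fun v => A v i j) (A' i j) u)
    (hu : IsUnit (A u)) (i j : Fin n) :
    HasDerivAt (fun v => (A v)⁻¹ i j) ((-((A u)⁻¹ * A' * (A u)⁻¹)) i j) u := by
  have hrw : ∀ (M : Matrix (Fin n) (Fin n) ℂ),
      (∑ k : Fin n, ∑ l : Fin n, M k l • Matrix.single k l (1 : ℂ)) = M := by
    intro M
    conv_rhs => rw [Matrix.matrix_eq_sum_single M]
    refine Finset.sum_congr rfl fun k _ => Finset.sum_congr rfl fun l _ => ?_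
    rw [Matrix.smul_single, smul_eq_mul, mul_one]
  have h1 : HasDerivAt
      (fun v => ∑ k : Fin n, ∑ l : Fin n, A v k l • Matrix.single k l (1 : ℂ))
      (∑ k : Fin n, ∑ l : Fin n, A' k l • Matrix.single k l (1 : ℂ)) u :=
    HasDerivAt.fun_sum fun k _ => HasDerivAt.fun_sum fun l _ => (hA k l).smul_const _
  have h2 : HasDerivAt A A' u := by
    have h1' := h1
    rw [hrw A'] at h1'
    exact h1'.congr_of_eventuallyEq (Filter.Eventually.of_forall fun v => (hrw (A v)).symm)
  have hinv := hasFDerivAt_ringInverse (𝕜 := ℝ) hu.unit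
  rw [hu.unit_spec] at hinv
  have h3 := hinv.comp_hasDerivAt u h2
  have h4 : HasDerivAt (fun v => Ring.inverse (A v))
      (-((A u)⁻¹ * A' * (A u)⁻¹)) u := by
    have hco : ((hu.unit⁻¹ : (Matrix (Fin n) (Fin n) ℂ)ˣ) : Matrix (Fin n) (Fin n) ℂ)
        = (A u)⁻¹ := by
      rw [Matrix.coe_units_inv, hu.unit_spec]
    simp [ContinuousLinearMap.neg_apply,
      ContinuousLinearMap.mulLeftRight_apply, hco] at h3
    exact h3
  have h5 := (entryCLM i j).hasFDerivAt.comp_hasDerivAt u h4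
  have h6 : (fun v => (A v)⁻¹ i j) = entryCLM i j ∘ fun v => Ring.inverse (A v) := by
    funext v; simp [Matrix.nonsing_inv_eq_ringInverse]
  rw [h6]; exact h5

end RieszDerivAux

open RieszDerivAux Metric Set

/-- Invertibility of `A - z • 1` for `z` on the circle. -/
theorem RieszDerivAux.isUnit_sub_smul_one {n : ℕ} {A : Matrix (Fin n) (Fin n) ℂ}
    (hA : A.IsHermitian) {a b R : ℝ} (hab : a < b) (hR : (b - a) / 2 < R)
    (hspec : ∀ i, hA.eigenvalues i ∈ Set.Ioo a b) {z : ℂ}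
    (hz : z ∈ Metric.sphere (((a + b) / 2 : ℝ) : ℂ) R) :
    IsUnit (A - z • 1) := by
  classical
  rw [Matrix.isUnit_iff_isUnit_det, isUnit_iff_ne_zero]
  have hU2 : (hA.eigenvectorUnitary : Matrix (Fin n) (Fin n) ℂ)
      * star (hA.eigenvectorUnitary : Matrix (Fin n) (Fin n) ℂ) = 1 :=
    (Matrix.mem_unitaryGroup_iff).mp hA.eigenvectorUnitary.2
  set U : Matrix (Fin n) (Fin n) ℂ := (hA.eigenvectorUnitary : Matrix (Fin n) (Fin n) ℂ) with hUdef
  have key : A - z • 1 = U * (Matrix.diagonal (fun i => (hA.eigenvalues i : ℂ) - z)) * star U := by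
    have h1 : (z • (1 : Matrix (Fin n) (Fin n) ℂ)) = U * (z • 1) * star U := by
      rw [Matrix.mul_smul, Matrix.smul_mul, mul_one, hU2]
    conv_lhs => rw [hA.spectral_theorem, Unitary.conjStarAlgAut_apply, h1]
    rw [← Matrix.sub_mul, ← Matrix.mul_sub]
    congr 2
    ext i k
    by_cases h : i = k <;>
      simp [Matrix.diagonal, Matrix.one_apply, Matrix.smul_apply, h, Function.comp]
  rw [key, Matrix.det_mul, Matrix.det_mul]
  have hdetU : U.det * (star U).det = 1 := by
    rw [← Matrix.det_mul, hU2, Matrix.det_one]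
  have hdiag : (Matrix.diagonal (fun i => (hA.eigenvalues i : ℂ) - z)).det ≠ 0 := by
    rw [Matrix.det_diagonal]
    apply Finset.prod_ne_zero_iff.mpr
    intro i _
    intro hzero
    have hz' : z = ((hA.eigenvalues i : ℝ) : ℂ) := by
      have := sub_eq_zero.mp hzero; exact this.symm
    rw [mem_sphere_iff_norm, hz'] at hz
    have : ‖(((hA.eigenvalues i : ℝ) : ℂ) - (((a + b) / 2 : ℝ) : ℂ))‖
        = |hA.eigenvalues i - (a + b) / 2| := by
      rw [← Complex.ofReal_sub, Complex.norm_real, Real.norm_eq_abs]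
    rw [this] at hz
    obtain ⟨hia, hib⟩ := hspec i
    have habs : |hA.eigenvalues i - (a + b) / 2| < R := by
      rw [abs_lt]; constructor <;> [linarith; linarith]
    rw [hz] at habs
    exact lt_irrefl _ habs
  intro hcontra
  rcases mul_eq_zero.mp hcontra with h | h
  · rcases mul_eq_zero.mp h with h' | h'
    · have : U.det * (star U).det = 0 := by rw [h', zero_mul]
      rw [hdetU] at this; exact one_ne_zero this
    · exact hdiag h'
  · have : U.det * (star U).det = 0 := by rw [h, mul_zero]
    rw [hdetU] at this; exact one_ne_zero this

lemma RieszDerivAux.trace_mul_entries {n : ℕ} (A B : Matrix (Fin n) (Fin n) ℂ) :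
    (A * B).trace = ∑ i, ∑ j, A i j * B j i := by
  simp [Matrix.trace, Matrix.mul_apply, Matrix.diag]

lemma RieszDerivAux.inv_entry_eq {n : ℕ} (M : Matrix (Fin n) (Fin n) ℂ) (i j : Fin n) :
    M⁻¹ i j = (M.det)⁻¹ * M.adjugate i j := by
  rw [Matrix.inv_def]
  simp [Ring.inverse_eq_inv', Matrix.smul_apply, smul_eq_mul]

set_option maxHeartbeats 2000000 in
/-- Derivative formula (Lemma 3.3): with `H(s) = H₀ + V(s)`,
`V''(s) ≤ 0`, `φ` analytic on an open set containing the closed disc bounded by the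
(clockwise) circle `Γ` of center `(a+b)/2` and radius `R > (b-a)/2` encircling the spectra,
nonnegative and nonincreasing on `(a,b)`, and `φ(H(s))` defined by the Riesz–Dunford
integral `φ(H(s)) = (1/(2πi)) ∮_Γ φ(z)(H(s)−z)⁻¹ dz` (clockwise `Γ`, i.e. minus the
counterclockwise circle integral), one has
`d/ds tr(V'(s) φ(H(s))) = tr(V''(s) φ(H(s))) − (1/(2πi)) ∮_Γ φ(z) tr([V'(s)(H(s)−z)⁻¹]²) dz`. -/
theorem hasDerivAt_trace_deriv_mul_riesz {n : ℕ} (s₁ s₂ a b R : ℝ) (hab : a < b)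
    (hR : (b - a) / 2 < R)
    (H₀ : Matrix (Fin n) (Fin n) ℂ) (hH₀ : H₀.IsHermitian)
    (V V' V'' : ℝ → Matrix (Fin n) (Fin n) ℂ)
    (hV : ∀ s, (V s).IsHermitian)
    (hderiv1 : ∀ s ∈ Set.Ioo s₁ s₂, ∀ i j, HasDerivAt (fun u => V u i j) (V' s i j) s)
    (hderiv2 : ∀ s ∈ Set.Ioo s₁ s₂, ∀ i j, HasDerivAt (fun u => V' u i j) (V'' s i j) s)
    (hcont : ∀ i j, ContinuousOn (fun s => V'' s i j) (Set.Ioo s₁ s₂))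
    (hconc : ∀ s ∈ Set.Ioo s₁ s₂, (-(V'' s)).PosSemidef)
    (hspec : ∀ s ∈ Set.Ioo s₁ s₂, ∀ i, (hH₀.add (hV s)).eigenvalues i ∈ Set.Ioo a b)
    (D : Set ℂ) (hD : IsOpen D)
    (hball : Metric.closedBall (((a + b) / 2 : ℝ) : ℂ) R ⊆ D)
    (φ : ℂ → ℂ) (hφ : DifferentiableOn ℂ φ D)
    (hreal : ∀ x ∈ Set.Ioo a b, (φ (x : ℂ)).im = 0)
    (hφnn : ∀ x ∈ Set.Ioo a b, 0 ≤ (φ (x : ℂ)).re)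
    (hφmono : ∀ x ∈ Set.Ioo a b, ∀ y ∈ Set.Ioo a b, x ≤ y → (φ (y : ℂ)).re ≤ (φ (x : ℂ)).re)
    -- `Φ u = φ(H(u))`, defined entrywise by the Riesz integral over the clockwise circle Γ:
    (Φ : ℝ → Matrix (Fin n) (Fin n) ℂ)
    (hΦ : ∀ u, Φ u = Matrix.of fun i j =>
      -(2 * (Real.pi : ℂ) * Complex.I)⁻¹ *
        ∮ z in C((((a + b) / 2 : ℝ) : ℂ), R),
          φ z * ((H₀ + V u - z • 1)⁻¹ i j))
    (s : ℝ) (hs : s ∈ Set.Ioo s₁ s₂) :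
    HasDerivAt (fun u => (V' u * Φ u).trace)
      ((V'' s * Φ s).trace +
        (2 * (Real.pi : ℂ) * Complex.I)⁻¹ *
          ∮ z in C((((a + b) / 2 : ℝ) : ℂ), R),
            φ z * ((V' s * (H₀ + V s - z • 1)⁻¹) ^ 2).trace) s := by
  classical
  have hR0 : 0 < R := lt_of_le_of_lt (by linarith) hR
  set c : ℂ := (((a + b) / 2 : ℝ) : ℂ) with hc
  set K : ℂ := -(2 * (Real.pi : ℂ) * Complex.I)⁻¹ with hKdef
  obtain ⟨ε, hε0, hεsub⟩ : ∃ ε > 0, Metric.closedBall s ε ⊆ Set.Ioo s₁ s₂ :=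
    (Metric.nhds_basis_closedBall.mem_iff.mp (isOpen_Ioo.mem_nhds hs))
  set ζ : ℝ → ℂ := fun θ => circleMap c R θ with hζdef
  set w : ℝ → ℂ := fun θ => circleMap 0 R θ * Complex.I with hwdef
  set M : ℝ → ℝ → Matrix (Fin n) (Fin n) ℂ := fun u θ => H₀ + V u - ζ θ • 1 with hMdef
  set B : ℝ → ℝ → Matrix (Fin n) (Fin n) ℂ := fun u θ => (M u θ)⁻¹ with hBdef
  set F : ℝ → ℝ → ℂ :=
    fun u θ => (K * w θ * φ (ζ θ)) * ∑ i, ∑ j, V' u i j * B u θ j i with hFdef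
  set F' : ℝ → ℝ → ℂ := fun u θ => (K * w θ * φ (ζ θ)) *
      ∑ i, ∑ j, (V'' u i j * B u θ j i + V' u i j * ((-(B u θ * V' u * B u θ)) j i)) with hF'def
  -- basic facts
  have hζ_mem : ∀ θ, ζ θ ∈ D := fun θ =>
    hball (sphere_subset_closedBall (circleMap_mem_sphere c hR0.le θ))
  have hφζ : Continuous fun θ => φ (ζ θ) :=
    hφ.continuousOn.comp_continuous (continuous_circleMap c R) hζ_mem
  have hw : Continuous w := (continuous_circleMap 0 R).mul continuous_const
  have hunit : ∀ u ∈ Set.Ioo s₁ s₂, ∀ θ, IsUnit (M u θ) := by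
    intro u hu θ
    exact RieszDerivAux.isUnit_sub_smul_one (hH₀.add (hV u)) hab hR (hspec u hu)
      (circleMap_mem_sphere c hR0.le θ)
  have hdet : ∀ u ∈ Set.Ioo s₁ s₂, ∀ θ, (M u θ).det ≠ 0 := by
    intro u hu θ
    exact isUnit_iff_ne_zero.mp ((Matrix.isUnit_iff_isUnit_det _).mp (hunit u hu θ))
  -- derivative of M entries
  have hMd : ∀ x ∈ Set.Ioo s₁ s₂, ∀ θ, ∀ (i j : Fin n),
      HasDerivAt (fun v => M v θ i j) (V' x i j) x := by
    intro x hx θ i j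
    have heq : (fun v => M v θ i j)
        = fun v => V v i j + (H₀ i j - (ζ θ • (1 : Matrix (Fin n) (Fin n) ℂ)) i j) := by
      funext v
      simp only [hMdef, Matrix.sub_apply, Matrix.add_apply]
      ring
    rw [heq]
    exact (hderiv1 x hx i j).add_const _
  have hBd : ∀ x ∈ Set.Ioo s₁ s₂, ∀ θ, ∀ (i j : Fin n),
      HasDerivAt (fun v => B v θ i j) ((-(B x θ * V' x * B x θ)) i j) x := by
    intro x hx θ i j
    exact RieszDerivAux.hasDerivAt_inv_entry (fun i j => hMd x hx θ i j) (hunit x hx θ) i j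
  -- differentiability of F in u
  have hFd : ∀ θ, ∀ x ∈ Metric.ball s ε, HasDerivAt (fun u => F u θ) (F' x θ) x := by
    intro θ x hx
    have hx' : x ∈ Set.Ioo s₁ s₂ := hεsub (Metric.ball_subset_closedBall hx)
    exact HasDerivAt.const_mul _
      (HasDerivAt.fun_sum fun i _ => HasDerivAt.fun_sum fun j _ =>
        (hderiv2 x hx' i j).mul (hBd x hx' θ j i))
  -- continuity set-up
  set S : Set (ℝ × ℝ) := (Set.Ioo s₁ s₂) ×ˢ (Set.univ : Set ℝ) with hSdef
  have hfst : ∀ p : S, (p : ℝ × ℝ).1 ∈ Set.Ioo s₁ s₂ := fun p => (Set.mem_prod.mp p.2).1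
  have hVc : ∀ i j, ContinuousOn (fun u => V u i j) (Set.Ioo s₁ s₂) := fun i j u hu =>
    ((hderiv1 u hu i j).continuousAt).continuousWithinAt
  have hV'c : ∀ i j, ContinuousOn (fun u => V' u i j) (Set.Ioo s₁ s₂) := fun i j u hu =>
    ((hderiv2 u hu i j).continuousAt).continuousWithinAt
  -- continuity of u-entry functions on S
  have hlift : ∀ (g : ℝ → ℂ), ContinuousOn g (Set.Ioo s₁ s₂) →
      Continuous fun p : S => g (p : ℝ × ℝ).1 := by
    intro g hg
    exact (continuousOn_iff_continuous_restrict.mp hg).comp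
      (Continuous.subtype_mk (continuous_fst.comp continuous_subtype_val) hfst)
  have hliftθ : ∀ (g : ℝ → ℂ), Continuous g →
      Continuous fun p : S => g (p : ℝ × ℝ).2 := by
    intro g hg
    exact hg.comp (continuous_snd.comp continuous_subtype_val)
  have hMcS : Continuous fun p : S => M (p : ℝ × ℝ).1 (p : ℝ × ℝ).2 := by
    apply continuous_matrix
    intro i j
    have h1 : Continuous fun p : S => V (p : ℝ × ℝ).1 i j := hlift _ (hVc i j)
    have h2 : Continuous fun p : S => ζ (p : ℝ × ℝ).2 := hliftθ _ (continuous_circleMap c R)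
    have heq : (fun p : S => M (p : ℝ × ℝ).1 (p : ℝ × ℝ).2 i j)
        = fun p : S => H₀ i j + V (p : ℝ × ℝ).1 i j
            - ζ (p : ℝ × ℝ).2 * (1 : Matrix (Fin n) (Fin n) ℂ) i j := by
      funext p
      simp [hMdef, Matrix.sub_apply, Matrix.add_apply, Matrix.smul_apply, smul_eq_mul]
    rw [heq]
    exact ((continuous_const.add h1).sub (h2.mul continuous_const))
  have hBcS : ∀ i j, Continuous fun p : S => B (p : ℝ × ℝ).1 (p : ℝ × ℝ).2 i j := by
    intro i j
    have hdet' : Continuous fun p : S => (M (p : ℝ × ℝ).1 (p : ℝ × ℝ).2).det :=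
      hMcS.matrix_det
    have hadj : Continuous fun p : S => (M (p : ℝ × ℝ).1 (p : ℝ × ℝ).2).adjugate i j :=
      (hMcS.matrix_adjugate).matrix_elem i j
    have hne : ∀ p : S, (M (p : ℝ × ℝ).1 (p : ℝ × ℝ).2).det ≠ 0 := fun p =>
      hdet _ (hfst p) _
    have heq : (fun p : S => B (p : ℝ × ℝ).1 (p : ℝ × ℝ).2 i j)
        = fun p : S => ((M (p : ℝ × ℝ).1 (p : ℝ × ℝ).2).det)⁻¹
            * (M (p : ℝ × ℝ).1 (p : ℝ × ℝ).2).adjugate i j := by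
      funext p
      exact RieszDerivAux.inv_entry_eq _ i j
    rw [heq]
    exact (hdet'.inv₀ hne).mul hadj
  have hV''S : ∀ i j, Continuous fun p : S => V'' (p : ℝ × ℝ).1 i j := fun i j =>
    hlift _ (hcont i j)
  have hV'S : ∀ i j, Continuous fun p : S => V' (p : ℝ × ℝ).1 i j := fun i j =>
    hlift _ (hV'c i j)
  have hwS : Continuous fun p : S => w (p : ℝ × ℝ).2 := hliftθ _ hw
  have hφζS : Continuous fun p : S => φ (ζ (p : ℝ × ℝ).2) := hliftθ _ hφζ
  -- continuity of F' on S
  have hF'S : Continuous fun p : S => F' (p : ℝ × ℝ).1 (p : ℝ × ℝ).2 := by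
    apply Continuous.mul
    · exact (continuous_const.mul hwS).mul hφζS
    · apply continuous_finset_sum
      intro i _
      apply continuous_finset_sum
      intro j _
      apply Continuous.add
      · exact (hV''S i j).mul (hBcS j i)
      · apply (hV'S i j).mul
        have heq : (fun p : S =>
            ((-(B (p : ℝ × ℝ).1 (p : ℝ × ℝ).2 * V' (p : ℝ × ℝ).1
              * B (p : ℝ × ℝ).1 (p : ℝ × ℝ).2)) j i))
            = fun p : S => -(∑ l, (∑ k, B (p : ℝ × ℝ).1 (p : ℝ × ℝ).2 j k
                * V' (p : ℝ × ℝ).1 k l) * B (p : ℝ × ℝ).1 (p : ℝ × ℝ).2 l i) := by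
          funext p
          simp [Matrix.neg_apply, Matrix.mul_apply]
        rw [heq]
        apply Continuous.neg
        apply continuous_finset_sum
        intro l _
        exact (continuous_finset_sum _ fun k _ => (hBcS j k).mul (hV'S k l)).mul (hBcS l i)
  have hFS : Continuous fun p : S => F (p : ℝ × ℝ).1 (p : ℝ × ℝ).2 := by
    apply Continuous.mul
    · exact (continuous_const.mul hwS).mul hφζS
    · exact continuous_finset_sum _ fun i _ => continuous_finset_sum _ fun j _ =>
        (hV'S i j).mul (hBcS j i)
  have hFSon : ContinuousOn (fun p : ℝ × ℝ => F p.1 p.2) S :=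
    continuousOn_iff_continuous_restrict.mpr hFS
  have hF'Son : ContinuousOn (fun p : ℝ × ℝ => F' p.1 p.2) S :=
    continuousOn_iff_continuous_restrict.mpr hF'S
  have hBSon : ∀ i j, ContinuousOn (fun p : ℝ × ℝ => B p.1 p.2 i j) S := fun i j =>
    continuousOn_iff_continuous_restrict.mpr (hBcS i j)
  -- θ-continuity for fixed u ∈ Ioo
  have hmemS : ∀ u ∈ Set.Ioo s₁ s₂, ∀ θ : ℝ, (u, θ) ∈ S := fun u hu θ =>
    ⟨hu, Set.mem_univ _⟩
  have hFθ : ∀ u ∈ Set.Ioo s₁ s₂, Continuous fun θ => F u θ := by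
    intro u hu
    exact hFSon.comp_continuous (f := fun θ : ℝ => (u, θ))
      (continuous_const.prodMk continuous_id) (hmemS u hu)
  have hF'θ : ∀ u ∈ Set.Ioo s₁ s₂, Continuous fun θ => F' u θ := by
    intro u hu
    exact hF'Son.comp_continuous (f := fun θ : ℝ => (u, θ))
      (continuous_const.prodMk continuous_id) (hmemS u hu)
  have hBθ : ∀ u ∈ Set.Ioo s₁ s₂, ∀ i j, Continuous fun θ => B u θ i j := by
    intro u hu i j
    exact (hBSon i j).comp_continuous (f := fun θ : ℝ => (u, θ))
      (continuous_const.prodMk continuous_id) (hmemS u hu)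
  -- the bound
  have hsubK : (Metric.closedBall s ε) ×ˢ (Set.uIcc (0:ℝ) (2 * Real.pi)) ⊆ S :=
    Set.prod_mono hεsub (Set.subset_univ _)
  obtain ⟨C, hC⟩ :=
    ((isCompact_closedBall s ε).prod isCompact_uIcc).exists_bound_of_continuousOn
      (hF'Son.mono hsubK)
  -- apply the dominated differentiation theorem
  have main := intervalIntegral.hasDerivAt_integral_of_dominated_loc_of_deriv_le
    (μ := MeasureTheory.volume) (F := F) (F' := F') (x₀ := s)
    (a := 0) (b := 2 * Real.pi) (bound := fun _ => C) (Metric.ball_mem_nhds s hε0)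
    (Filter.eventually_of_mem (Metric.ball_mem_nhds s hε0) (fun x hx =>
      ((hFθ x (hεsub (Metric.ball_subset_closedBall hx))).aestronglyMeasurable)))
    ((hFθ s hs).intervalIntegrable _ _)
    ((hF'θ s hs).aestronglyMeasurable)
    (MeasureTheory.ae_of_all _ (fun θ hθ x hx =>
      hC (x, θ) ⟨Metric.ball_subset_closedBall hx, Set.uIoc_subset_uIcc hθ⟩))
    intervalIntegrable_const
    (MeasureTheory.ae_of_all _ (fun θ _ x hx => hFd θ x hx))
  obtain ⟨-, hder⟩ := main
  have key : ∀ u ∈ Set.Ioo s₁ s₂, ∀ (W : Matrix (Fin n) (Fin n) ℂ),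
      (∫ θ in (0:ℝ)..(2 * Real.pi), (K * w θ * φ (ζ θ)) * ∑ i, ∑ j, W i j * B u θ j i)
        = (W * Φ u).trace := by
    intro u hu W
    have hcont1 : ∀ (i j : Fin n),
        Continuous (fun θ => (W i j * K) * (w θ * (φ (ζ θ) * B u θ j i))) := fun i j =>
      continuous_const.mul (hw.mul (hφζ.mul (hBθ u hu j i)))
    have hint : ∀ (i j : Fin n), IntervalIntegrable
        (fun θ => (W i j * K) * (w θ * (φ (ζ θ) * B u θ j i)))
        MeasureTheory.volume 0 (2 * Real.pi) := fun i j =>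
      (hcont1 i j).intervalIntegrable _ _
    have step1 : (∫ θ in (0:ℝ)..(2 * Real.pi),
          (K * w θ * φ (ζ θ)) * ∑ i, ∑ j, W i j * B u θ j i)
        = ∫ θ in (0:ℝ)..(2 * Real.pi),
          ∑ i, ∑ j, (W i j * K) * (w θ * (φ (ζ θ) * B u θ j i)) := by
      refine intervalIntegral.integral_congr fun θ _ => ?_
      rw [Finset.mul_sum]
      refine Finset.sum_congr rfl fun i _ => ?_
      rw [Finset.mul_sum]
      refine Finset.sum_congr rfl fun j _ => ?_
      ring
    have step2 : (∫ θ in (0:ℝ)..(2 * Real.pi),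
          ∑ i, ∑ j, (W i j * K) * (w θ * (φ (ζ θ) * B u θ j i)))
        = ∑ i, ∑ j, ∫ θ in (0:ℝ)..(2 * Real.pi),
            (W i j * K) * (w θ * (φ (ζ θ) * B u θ j i)) := by
      rw [intervalIntegral.integral_finset_sum
        (f := fun i θ => ∑ j, (W i j * K) * (w θ * (φ (ζ θ) * B u θ j i)))
        (fun i _ => ((continuous_finset_sum _ fun j _ => hcont1 i j).intervalIntegrable _ _))]
      refine Finset.sum_congr rfl fun i _ => ?_
      exact intervalIntegral.integral_finset_sum
        (f := fun j θ => (W i j * K) * (w θ * (φ (ζ θ) * B u θ j i)))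
        (fun j _ => hint i j)
    have hcirc : ∀ (i j : Fin n), (∮ z in C(c, R), φ z * ((H₀ + V u - z • 1)⁻¹ j i))
        = ∫ θ in (0:ℝ)..(2 * Real.pi), w θ * (φ (ζ θ) * B u θ j i) := by
      intro i j
      unfold circleIntegral
      refine intervalIntegral.integral_congr fun θ _ => ?_
      dsimp only
      rw [deriv_circleMap, smul_eq_mul, hwdef, hζdef, hBdef, hMdef]
    have step3 : ∀ (i j : Fin n),
        (∫ θ in (0:ℝ)..(2 * Real.pi), (W i j * K) * (w θ * (φ (ζ θ) * B u θ j i)))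
          = W i j * (K * ∮ z in C(c, R), φ z * ((H₀ + V u - z • 1)⁻¹ j i)) := by
      intro i j
      rw [intervalIntegral.integral_const_mul, mul_assoc, hcirc i j]
    rw [step1, step2]
    rw [hΦ u]
    rw [RieszDerivAux.trace_mul_entries]
    refine Finset.sum_congr rfl fun i _ => Finset.sum_congr rfl fun j _ => ?_
    rw [step3 i j]
    simp only [Matrix.of_apply]
  -- the function agrees with the integral of F near s
  have hEq1 : (fun u => (V' u * Φ u).trace)
      =ᶠ[nhds s] fun x => ∫ θ in (0:ℝ)..(2 * Real.pi), F x θ := by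
    apply Filter.eventuallyEq_of_mem (Metric.ball_mem_nhds s hε0)
    intro u hu
    have hu' : u ∈ Set.Ioo s₁ s₂ := hεsub (Metric.ball_subset_closedBall hu)
    exact (key u hu' (V' u)).symm
  -- computing the value of the derivative
  have hT2 : ∀ θ, (∑ i, ∑ j, V' s i j * ((-(B s θ * V' s * B s θ)) j i))
      = -(((V' s * B s θ) ^ 2).trace) := by
    intro θ
    rw [← RieszDerivAux.trace_mul_entries]
    have : V' s * (-(B s θ * V' s * B s θ)) = -((V' s * B s θ) ^ 2) := by
      rw [pow_two]
      rw [Matrix.mul_neg]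
      congr 1
      simp only [Matrix.mul_assoc]
    rw [this, Matrix.trace_neg]
  have hEq2 : (∫ θ in (0:ℝ)..(2 * Real.pi), F' s θ)
      = (V'' s * Φ s).trace + (2 * (Real.pi : ℂ) * Complex.I)⁻¹ *
          ∮ z in C(c, R), φ z * ((V' s * (H₀ + V s - z • 1)⁻¹) ^ 2).trace := by
    have hsplit : ∀ θ, F' s θ
        = (K * w θ * φ (ζ θ)) * (∑ i, ∑ j, V'' s i j * B s θ j i)
          + (-K) * (w θ * (φ (ζ θ) * ((V' s * B s θ) ^ 2).trace)) := by
      intro θ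
      simp only [hF'def]
      have expand : (∑ i, ∑ j, (V'' s i j * B s θ j i
            + V' s i j * ((-(B s θ * V' s * B s θ)) j i)))
          = (∑ i, ∑ j, V'' s i j * B s θ j i)
            + ∑ i, ∑ j, V' s i j * ((-(B s θ * V' s * B s θ)) j i) := by
        rw [← Finset.sum_add_distrib]
        exact Finset.sum_congr rfl fun i _ => Finset.sum_add_distrib
      rw [expand, hT2 θ, mul_add]
      congr 1
      ring
    have hTc : Continuous fun θ => ((V' s * B s θ) ^ 2).trace := by
      have heq : (fun θ => ((V' s * B s θ) ^ 2).trace)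
          = fun θ => ∑ i, ∑ j, (∑ k, V' s i k * B s θ k j) * (∑ k, V' s j k * B s θ k i) := by
        funext θ
        rw [pow_two, RieszDerivAux.trace_mul_entries]
        simp [Matrix.mul_apply]
      rw [heq]
      refine continuous_finset_sum _ fun i _ => continuous_finset_sum _ fun j _ => ?_
      exact (continuous_finset_sum _ fun k _ => continuous_const.mul (hBθ s hs k j)).mul
        (continuous_finset_sum _ fun k _ => continuous_const.mul (hBθ s hs k i))
    have hG1c : Continuous fun θ =>
        (K * w θ * φ (ζ θ)) * (∑ i, ∑ j, V'' s i j * B s θ j i) := by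
      refine Continuous.mul ((continuous_const.mul hw).mul hφζ) ?_
      exact continuous_finset_sum _ fun i _ => continuous_finset_sum _ fun j _ =>
        continuous_const.mul (hBθ s hs j i)
    have hG2c : Continuous fun θ =>
        (-K) * (w θ * (φ (ζ θ) * ((V' s * B s θ) ^ 2).trace)) :=
      continuous_const.mul (hw.mul (hφζ.mul hTc))
    have hstep : (∫ θ in (0:ℝ)..(2 * Real.pi), F' s θ)
        = (∫ θ in (0:ℝ)..(2 * Real.pi),
            (K * w θ * φ (ζ θ)) * (∑ i, ∑ j, V'' s i j * B s θ j i))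
          + ∫ θ in (0:ℝ)..(2 * Real.pi),
            (-K) * (w θ * (φ (ζ θ) * ((V' s * B s θ) ^ 2).trace)) := by
      rw [← intervalIntegral.integral_add (hG1c.intervalIntegrable _ _)
        (hG2c.intervalIntegrable _ _)]
      exact intervalIntegral.integral_congr fun θ _ => hsplit θ
    rw [hstep]
    congr 1
    · exact key s hs (V'' s)
    · rw [intervalIntegral.integral_const_mul]
      have hKK : -K = (2 * (Real.pi : ℂ) * Complex.I)⁻¹ := by rw [hKdef, neg_neg]
      rw [hKK]
      congr 1
      have hcirc : (∮ z in C(c, R), φ z * ((V' s * (H₀ + V s - z • 1)⁻¹) ^ 2).trace)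
          = ∫ θ in (0:ℝ)..(2 * Real.pi), w θ * (φ (ζ θ) * ((V' s * B s θ) ^ 2).trace) := by
        unfold circleIntegral
        refine intervalIntegral.integral_congr fun θ _ => ?_
        dsimp only
        rw [deriv_circleMap, smul_eq_mul, hwdef, hζdef, hBdef, hMdef]
      rw [hcirc]
  have hfinal := hder.congr_of_eventuallyEq hEq1
  rw [← hEq2]
  exact hfinal
end RieszAux
end

section
/- Birman–Solomyak monotonicity (matrix version, linear coupling): let H₀, V be Hermitian matrices, H_s = H₀ + sV, and μ ∈ ℝ. Then s ↦ tr(V E_{H_s}((−∞, μ))) is nonincreasing in s ∈ ℝ. -/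
open Matrix
open scoped ComplexOrder

/-- The eigenvalue counting function `N(μ, A)`: the number of eigenvalues of the
Hermitian matrix `A` strictly below `μ`, counted with multiplicity. -/
noncomputable def countBelow {n : ℕ} {A : Matrix (Fin n) (Fin n) ℂ}
    (hA : A.IsHermitian) (μ : ℝ) : ℕ :=
  (Finset.univ.filter fun i => hA.eigenvalues i < μ).card

/-- The spectral projection `E_A((−∞, μ))` of a Hermitian matrix `A`. -/
noncomputable def spectralProjBelow {n : ℕ} {A : Matrix (Fin n) (Fin n) ℂ}
    (hA : A.IsHermitian) (μ : ℝ) : Matrix (Fin n) (Fin n) ℂ :=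
  hermFun hA (fun x => if x < μ then 1 else 0)

/-- A real scalar multiple of a Hermitian matrix is Hermitian. -/
theorem Matrix.IsHermitian.real_smul {n : ℕ} {V : Matrix (Fin n) (Fin n) ℂ}
    (hV : V.IsHermitian) (s : ℝ) : (s • V).IsHermitian := by
  rw [Matrix.IsHermitian, Matrix.conjTranspose_smul, star_trivial, hV.eq]

section BSAux

variable {n : ℕ} {A : Matrix (Fin n) (Fin n) ℂ}

lemma aux_UhU (hA : A.IsHermitian) :
    (hA.eigenvectorUnitary : Matrix (Fin n) (Fin n) ℂ)ᴴ *
      (hA.eigenvectorUnitary : Matrix (Fin n) (Fin n) ℂ) = 1 := by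
  rw [← star_eq_conjTranspose]
  exact Matrix.mem_unitaryGroup_iff'.mp hA.eigenvectorUnitary.2

lemma aux_UUh (hA : A.IsHermitian) :
    (hA.eigenvectorUnitary : Matrix (Fin n) (Fin n) ℂ) *
      (hA.eigenvectorUnitary : Matrix (Fin n) (Fin n) ℂ)ᴴ = 1 := by
  rw [← star_eq_conjTranspose]
  exact Matrix.mem_unitaryGroup_iff.mp hA.eigenvectorUnitary.2

lemma trace_conj_diag (hA : A.IsHermitian) (d : Fin n → ℂ) (B : Matrix (Fin n) (Fin n) ℂ) :
    (((hA.eigenvectorUnitary : Matrix (Fin n) (Fin n) ℂ) * Matrix.diagonal d *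
      (hA.eigenvectorUnitary : Matrix (Fin n) (Fin n) ℂ)ᴴ) * B).trace =
    ∑ i, d i * (((hA.eigenvectorUnitary : Matrix (Fin n) (Fin n) ℂ)ᴴ * B *
      (hA.eigenvectorUnitary : Matrix (Fin n) (Fin n) ℂ)) i i) := by
  set U := (hA.eigenvectorUnitary : Matrix (Fin n) (Fin n) ℂ)
  have : (U * Matrix.diagonal d * Uᴴ * B).trace = (Matrix.diagonal d * (Uᴴ * B * U)).trace := by
    rw [Matrix.mul_assoc (U * Matrix.diagonal d) Uᴴ B, Matrix.trace_mul_comm,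
      ← Matrix.mul_assoc, Matrix.mul_assoc Uᴴ B U, ← Matrix.trace_mul_comm]
  rw [this]
  simp [Matrix.trace, Matrix.diag, Matrix.diagonal_mul]

/-- trace of `A * B` via the eigenbasis of `A`. -/
lemma trace_A_mul (hA : A.IsHermitian) (B : Matrix (Fin n) (Fin n) ℂ) :
    (A * B).trace = ∑ i, (hA.eigenvalues i : ℂ) *
      (((hA.eigenvectorUnitary : Matrix (Fin n) (Fin n) ℂ)ᴴ * B *
        (hA.eigenvectorUnitary : Matrix (Fin n) (Fin n) ℂ)) i i) := by
  conv_lhs => rw [hA.spectral_theorem]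
  rw [Unitary.conjStarAlgAut_apply, Matrix.star_eq_conjTranspose]
  exact trace_conj_diag hA _ B

lemma conj_hermFun (hA : A.IsHermitian) (φ : ℝ → ℝ) :
    (hA.eigenvectorUnitary : Matrix (Fin n) (Fin n) ℂ)ᴴ * hermFun hA φ *
      (hA.eigenvectorUnitary : Matrix (Fin n) (Fin n) ℂ) =
    Matrix.diagonal (fun i => ((φ (hA.eigenvalues i) : ℝ) : ℂ)) := by
  unfold hermFun
  rw [← Matrix.mul_assoc, ← Matrix.mul_assoc, aux_UhU hA, Matrix.one_mul,
    Matrix.mul_assoc, aux_UhU hA, Matrix.mul_one]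

lemma hermFun_isHermitian (hA : A.IsHermitian) (φ : ℝ → ℝ) :
    (hermFun hA φ).IsHermitian := by
  unfold hermFun
  rw [Matrix.IsHermitian, Matrix.conjTranspose_mul, Matrix.conjTranspose_mul,
    Matrix.conjTranspose_conjTranspose, Matrix.diagonal_conjTranspose, Matrix.mul_assoc]
  congr 1
  ext i j
  simp [Matrix.diagonal]

lemma hermFun_idem (hA : A.IsHermitian) (φ : ℝ → ℝ) (hφ : ∀ x, φ x * φ x = φ x) :
    hermFun hA φ * hermFun hA φ = hermFun hA φ := by
  unfold hermFun
  set U := (hA.eigenvectorUnitary : Matrix (Fin n) (Fin n) ℂ) with hU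
  set D := Matrix.diagonal (fun i => ((φ (hA.eigenvalues i) : ℝ) : ℂ)) with hD
  have hDD : D * D = D := by
    rw [hD, Matrix.diagonal_mul_diagonal]
    simp only [← Complex.ofReal_mul, hφ]
  rw [Matrix.mul_assoc (U * D) Uᴴ (U * D * Uᴴ), ← Matrix.mul_assoc Uᴴ (U * D) Uᴴ,
    ← Matrix.mul_assoc Uᴴ U D, aux_UhU hA, Matrix.one_mul,
    ← Matrix.mul_assoc (U * D) D Uᴴ, Matrix.mul_assoc U D D, hDD]

/-- diagonal entries of a Hermitian idempotent are real and in `[0,1]`. -/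
lemma proj_diag_props {M : Matrix (Fin n) (Fin n) ℂ} (hM : M.IsHermitian)
    (hM2 : M * M = M) (i : Fin n) :
    M i i = (((M i i).re : ℝ) : ℂ) ∧ 0 ≤ (M i i).re ∧ (M i i).re ≤ 1 := by
  have hsum : M i i = ∑ j, ((Complex.normSq (M i j) : ℝ) : ℂ) := by
    conv_lhs => rw [← hM2]
    rw [Matrix.mul_apply]
    congr 1; ext j
    have : M j i = (starRingEnd ℂ) (M i j) := by
      conv_lhs => rw [← hM.eq]
      simp [Matrix.conjTranspose_apply]
    rw [this, Complex.mul_conj]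
  have hreal : M i i = (((M i i).re : ℝ) : ℂ) := by
    rw [hsum]; simp
  have hre : (M i i).re = ∑ j, Complex.normSq (M i j) := by
    rw [hsum]; simp
  have h0 : 0 ≤ (M i i).re := by
    rw [hre]; exact Finset.sum_nonneg fun j _ => Complex.normSq_nonneg _
  have hsq : (M i i).re ^ 2 ≤ (M i i).re := by
    rw [hre]
    have : Complex.normSq (M i i) ≤ ∑ j, Complex.normSq (M i j) :=
      Finset.single_le_sum (f := fun j => Complex.normSq (M i j))
        (fun j _ => Complex.normSq_nonneg _) (Finset.mem_univ i)
    have hni : Complex.normSq (M i i) = (M i i).re ^ 2 := by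
      rw [hreal]; simp [Complex.normSq_ofReal]; ring
    calc (∑ j, Complex.normSq (M i j)) ^ 2 = Complex.normSq (M i i) := by rw [hni, hre]
      _ ≤ ∑ j, Complex.normSq (M i j) := this
  refine ⟨hreal, h0, ?_⟩
  nlinarith [hsq, h0]

lemma trace_mul_herm_im {V P : Matrix (Fin n) (Fin n) ℂ} (hV : V.IsHermitian)
    (hP : P.IsHermitian) : ((V * P).trace).im = 0 := by
  have h : (starRingEnd ℂ) ((V * P).trace) = (V * P).trace := by
    have := Matrix.trace_conjTranspose (V * P)
    rw [Matrix.conjTranspose_mul, hV.eq, hP.eq, Matrix.trace_mul_comm] at this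
    exact this.symm
  exact Complex.conj_eq_iff_im.mp h

/-- Key variational inequality: the spectral projection below `μ` minimizes
`tr((A - μ)Q)` over Hermitian idempotents `Q`. -/
lemma bs_key (hA : A.IsHermitian) (μ : ℝ) {Q : Matrix (Fin n) (Fin n) ℂ}
    (hQ : Q.IsHermitian) (hQ2 : Q * Q = Q) :
    (A * spectralProjBelow hA μ).trace.re - μ * (spectralProjBelow hA μ).trace.re
      ≤ (A * Q).trace.re - μ * Q.trace.re := by
  set U := (hA.eigenvectorUnitary : Matrix (Fin n) (Fin n) ℂ) with hUdef
  set M := Uᴴ * Q * U with hMdef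
  have hMher : M.IsHermitian := by
    rw [Matrix.IsHermitian, hMdef, Matrix.conjTranspose_mul, Matrix.conjTranspose_mul,
      Matrix.conjTranspose_conjTranspose, hQ.eq, Matrix.mul_assoc]
  have hM2 : M * M = M := by
    rw [hMdef, Matrix.mul_assoc (Uᴴ * Q) U (Uᴴ * Q * U), ← Matrix.mul_assoc U (Uᴴ * Q) U,
      ← Matrix.mul_assoc U Uᴴ Q, aux_UUh hA, Matrix.one_mul,
      ← Matrix.mul_assoc (Uᴴ * Q) Q U, Matrix.mul_assoc Uᴴ Q Q, hQ2]
  set χ : ℝ → ℝ := fun x => if x < μ then 1 else 0 with hχ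
  -- traces with P
  have hconj := conj_hermFun hA χ
  have htrAP : (A * spectralProjBelow hA μ).trace =
      ((∑ i, hA.eigenvalues i * χ (hA.eigenvalues i) : ℝ) : ℂ) := by
    rw [spectralProjBelow, trace_A_mul hA]
    push_cast
    congr 1; ext i
    rw [show (Uᴴ * hermFun hA χ * U) = _ from hconj]
    simp [Matrix.diagonal]
  have htrP : (spectralProjBelow hA μ).trace = ((∑ i, χ (hA.eigenvalues i) : ℝ) : ℂ) := by
    have h1 : (spectralProjBelow hA μ).trace = (Uᴴ * spectralProjBelow hA μ * U).trace := by
      rw [Matrix.trace_mul_cycle, aux_UUh hA, Matrix.one_mul]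
    rw [h1, spectralProjBelow, hconj]
    push_cast
    simp [Matrix.trace_diagonal]
  -- traces with Q
  have htrAQ : (A * Q).trace = ((∑ i, hA.eigenvalues i * (M i i).re : ℝ) : ℂ) := by
    rw [trace_A_mul hA Q, Complex.ofReal_sum]
    refine Finset.sum_congr rfl fun i _ => ?_
    rw [show ((Uᴴ * Q * U) i i) = M i i from rfl, (proj_diag_props hMher hM2 i).1]
    simp
  have htrQ : Q.trace = ((∑ i, (M i i).re : ℝ) : ℂ) := by
    have h1 : Q.trace = M.trace := by
      rw [hMdef, Matrix.trace_mul_cycle, aux_UUh hA, Matrix.one_mul]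
    rw [h1, Matrix.trace, Complex.ofReal_sum]
    exact Finset.sum_congr rfl fun i _ => (proj_diag_props hMher hM2 i).1
  rw [htrAP, htrP, htrAQ, htrQ]
  simp only [Complex.ofReal_re]
  rw [Finset.mul_sum, Finset.mul_sum, ← Finset.sum_sub_distrib, ← Finset.sum_sub_distrib]
  apply Finset.sum_le_sum
  intro i _
  obtain ⟨-, h0, h1⟩ := proj_diag_props hMher hM2 i
  by_cases h : hA.eigenvalues i < μ
  · simp only [hχ, if_pos h]
    nlinarith
  · simp only [hχ, if_neg h]
    push_neg at h
    nlinarith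

end BSAux

/-- Birman–Solomyak monotonicity (matrix version, linear coupling):
for Hermitian `H₀`, `V`, `H_s = H₀ + sV`, and `μ ∈ ℝ`, the map
`s ↦ tr(V E_{H_s}((−∞, μ)))` is nonincreasing on `ℝ`. -/
theorem birman_solomyak_monotonicity {n : ℕ}
    (H₀ V : Matrix (Fin n) (Fin n) ℂ) (hH₀ : H₀.IsHermitian) (hV : V.IsHermitian)
    (μ : ℝ) :
    Antitone (fun s : ℝ =>
      (V * spectralProjBelow (hH₀.add (hV.real_smul s)) μ).trace) := by
  intro s t hst
  rcases eq_or_lt_of_le hst with rfl | hlt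
  · exact le_refl _
  simp only
  set hs := hH₀.add (hV.real_smul s)
  set ht := hH₀.add (hV.real_smul t)
  set P := spectralProjBelow hs μ with hPdef
  set Q := spectralProjBelow ht μ with hQdef
  have hPher : P.IsHermitian := hermFun_isHermitian hs _
  have hQher : Q.IsHermitian := hermFun_isHermitian ht _
  have hidem : ∀ x : ℝ, (if x < μ then (1:ℝ) else 0) * (if x < μ then 1 else 0) =
      (if x < μ then 1 else 0) := by
    intro x; by_cases h : x < μ <;> simp [h]
  have hP2 : P * P = P := hermFun_idem hs _ hidem
  have hQ2 : Q * Q = Q := hermFun_idem ht _ hidem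
  -- two applications of the key lemma
  have K1 := bs_key ht μ hPher hP2
  have K2 := bs_key hs μ hQher hQ2
  -- expand H_t = H_s + (t - s) • V
  have hexp : H₀ + t • V = (H₀ + s • V) + (t - s) • V := by
    rw [add_assoc, ← add_smul]; ring_nf
  have hsplit : ∀ R : Matrix (Fin n) (Fin n) ℂ,
      ((H₀ + t • V) * R).trace.re = ((H₀ + s • V) * R).trace.re + (t - s) * (V * R).trace.re := by
    intro R
    rw [hexp, Matrix.add_mul, Matrix.trace_add, Matrix.smul_mul, Matrix.trace_smul]
    simp [Complex.add_re, Complex.smul_re]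
  rw [hsplit P, hsplit Q] at K1
  have hre : (V * Q).trace.re ≤ (V * P).trace.re := by
    have hts : 0 < t - s := by linarith
    nlinarith [K1, K2]
  rw [Complex.le_def]
  constructor
  · exact hre
  · rw [trace_mul_herm_im hV hQher, trace_mul_herm_im hV hPher]
end

section
/- Estimate via monotonicity: for Hermitian matrices H₀, V, H₁ = H₀ + V, and μ ∈ ℝ not an eigenvalue of H_s for s in a full-measure subset of [0,1], tr(V E_{H₁}((−∞,μ))) ≤ ∫_{−∞}^μ ξ(λ, H₀, H₁) dλ ≤ tr(V E_{H₀}((−∞,μ))). -/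
open Matrix
open scoped ComplexOrder

lemma trace_mul_udu {n : ℕ} (M X : Matrix (Fin n) (Fin n) ℂ) (d : Fin n → ℂ) :
    (M * (X * diagonal d * Xᴴ)).trace = ∑ i, (Xᴴ * M * X) i i * d i := by
  have h : M * (X * diagonal d * Xᴴ) = (M * (X * diagonal d)) * Xᴴ := by
    simp only [Matrix.mul_assoc]
  rw [h, trace_mul_comm, show Xᴴ * (M * (X * diagonal d)) = (Xᴴ * M * X) * diagonal d from by
    simp only [Matrix.mul_assoc]]
  simp [Matrix.trace, Matrix.mul_diagonal, Matrix.diag]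

/-- The key convexity (Peierls-type) inequality. -/
lemma key_ineq {n : ℕ} (A B : Matrix (Fin n) (Fin n) ℂ)
    (hA : A.IsHermitian) (hB : B.IsHermitian) (μ : ℝ) :
    ∑ i, min μ (hA.eigenvalues i) ≤ ∑ i, min μ (hB.eigenvalues i)
      + (((A - B) * spectralProjBelow hB μ).trace).re := by
  classical
  set U : Matrix (Fin n) (Fin n) ℂ := (hB.eigenvectorUnitary : Matrix (Fin n) (Fin n) ℂ) with hU
  set Y : Matrix (Fin n) (Fin n) ℂ := (hA.eigenvectorUnitary : Matrix (Fin n) (Fin n) ℂ) with hY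
  set α := hA.eigenvalues with hα
  set β := hB.eigenvalues with hβ
  have hUU : Uᴴ * U = 1 := by
    have := Matrix.mem_unitaryGroup_iff'.mp hB.eigenvectorUnitary.2
    simpa [Matrix.star_eq_conjTranspose] using this
  have hUU' : U * Uᴴ = 1 := by
    have := Matrix.mem_unitaryGroup_iff.mp hB.eigenvectorUnitary.2
    simpa [Matrix.star_eq_conjTranspose] using this
  have hYY : Yᴴ * Y = 1 := by
    have := Matrix.mem_unitaryGroup_iff'.mp hA.eigenvectorUnitary.2
    simpa [Matrix.star_eq_conjTranspose] using this
  have hYY' : Y * Yᴴ = 1 := by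
    have := Matrix.mem_unitaryGroup_iff.mp hA.eigenvectorUnitary.2
    simpa [Matrix.star_eq_conjTranspose] using this
  have hBspec : B = U * diagonal (fun i => ((β i : ℝ) : ℂ)) * Uᴴ := by
    have := hB.spectral_theorem
    simpa [Matrix.star_eq_conjTranspose, Function.comp_def] using this
  have hAspec : A = Y * diagonal (fun i => ((α i : ℝ) : ℂ)) * Yᴴ := by
    have := hA.spectral_theorem
    simpa [Matrix.star_eq_conjTranspose, Function.comp_def] using this
  set ν : Fin n → ℝ := fun i => ((Uᴴ * A * U) i i).re with hν
  have hWH : (Uᴴ * A * U).IsHermitian := isHermitian_conjTranspose_mul_mul U hA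
  have hνc : ∀ i, (Uᴴ * A * U) i i = ((ν i : ℝ) : ℂ) := by
    intro i
    have := congrFun (congrFun hWH i) i
    have h2 : (starRingEnd ℂ) ((Uᴴ * A * U) i i) = (Uᴴ * A * U) i i := by
      simpa [Matrix.conjTranspose_apply] using this
    exact (Complex.conj_eq_iff_re.mp h2).symm
  -- trace computation
  have hUBU : Uᴴ * B * U = diagonal (fun i => ((β i : ℝ) : ℂ)) := by
    rw [hBspec, show Uᴴ * (U * diagonal (fun i => ((β i : ℝ) : ℂ)) * Uᴴ) * U
        = (Uᴴ * U) * diagonal (fun i => ((β i : ℝ) : ℂ)) * (Uᴴ * U) from by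
      simp only [Matrix.mul_assoc], hUU]
    simp
  have htr : (((A - B) * spectralProjBelow hB μ).trace).re
      = ∑ i, (if β i < μ then (1:ℝ) else 0) * (ν i - β i) := by
    rw [spectralProjBelow, hermFun, trace_mul_udu]
    rw [show Uᴴ * (A - B) * U = (Uᴴ * A * U) - (Uᴴ * B * U) from by
      simp only [Matrix.sub_mul, Matrix.mul_sub], hUBU]
    rw [Complex.re_sum]
    refine Finset.sum_congr rfl fun i _ => ?_
    simp only [Matrix.sub_apply, Matrix.diagonal_apply_eq, hνc i]
    rw [show ((ν i : ℂ) - (β i : ℂ)) * (((if β i < μ then (1:ℝ) else 0) : ℝ) : ℂ)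
        = ((((ν i - β i) * (if β i < μ then (1:ℝ) else 0)) : ℝ) : ℂ) from by push_cast; ring]
    rw [Complex.ofReal_re]; ring
  -- Peierls
  set C : Matrix (Fin n) (Fin n) ℂ := Yᴴ * U with hC
  have hWC : Uᴴ * A * U = Cᴴ * diagonal (fun i => ((α i : ℝ) : ℂ)) * C := by
    rw [hAspec, hC]
    simp only [Matrix.conjTranspose_mul, Matrix.conjTranspose_conjTranspose, Matrix.mul_assoc]
  have hentry : ∀ i, ν i = ∑ j, Complex.normSq (C j i) * α j := by
    intro i
    rw [hν]
    simp only [hWC]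
    have : (Cᴴ * diagonal (fun i => ((α i : ℝ) : ℂ)) * C) i i
        = ∑ j, (starRingEnd ℂ) (C j i) * (((α j : ℝ) : ℂ) * C j i) := by
      rw [show Cᴴ * diagonal (fun i => ((α i : ℝ) : ℂ)) * C
          = Cᴴ * (diagonal (fun i => ((α i : ℝ) : ℂ)) * C) from by simp only [Matrix.mul_assoc]]
      rw [Matrix.mul_apply]
      refine Finset.sum_congr rfl fun j _ => ?_
      rw [Matrix.conjTranspose_apply, Matrix.diagonal_mul]
      rfl
    rw [this, Complex.re_sum]
    refine Finset.sum_congr rfl fun j _ => ?_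
    rw [show (starRingEnd ℂ) (C j i) * (((α j : ℝ) : ℂ) * C j i)
        = ((α j : ℝ) : ℂ) * ((starRingEnd ℂ) (C j i) * C j i) from by ring]
    rw [show (starRingEnd ℂ) (C j i) * C j i = ((Complex.normSq (C j i) : ℝ) : ℂ) from by
      rw [mul_comm, Complex.mul_conj]]
    rw [show ((α j : ℝ) : ℂ) * ((Complex.normSq (C j i) : ℝ) : ℂ)
        = (((Complex.normSq (C j i) * α j) : ℝ) : ℂ) from by push_cast; ring]
    exact Complex.ofReal_re _
  have hCC : Cᴴ * C = 1 := by
    rw [hC, show (Yᴴ * U)ᴴ * (Yᴴ * U) = Uᴴ * (Y * Yᴴ) * U from by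
      simp only [Matrix.conjTranspose_mul, Matrix.conjTranspose_conjTranspose, Matrix.mul_assoc],
      hYY']
    simpa using hUU
  have hCC' : C * Cᴴ = 1 := by
    rw [hC, show (Yᴴ * U) * (Yᴴ * U)ᴴ = Yᴴ * (U * Uᴴ) * Y from by
      simp only [Matrix.conjTranspose_mul, Matrix.conjTranspose_conjTranspose, Matrix.mul_assoc],
      hUU']
    simpa using hYY
  have hcol : ∀ i, ∑ j, Complex.normSq (C j i) = 1 := by
    intro i
    have h1 : (Cᴴ * C) i i = 1 := by rw [hCC]; simp
    rw [Matrix.mul_apply] at h1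
    have : (∑ j, Cᴴ i j * C j i).re = 1 := by rw [h1]; rfl
    rw [Complex.re_sum] at this
    rw [← this]
    refine Finset.sum_congr rfl fun j _ => ?_
    rw [Matrix.conjTranspose_apply, show star (C j i) = (starRingEnd ℂ) (C j i) from rfl,
      mul_comm, Complex.mul_conj]
    exact (Complex.ofReal_re _).symm
  have hrow : ∀ j, ∑ i, Complex.normSq (C j i) = 1 := by
    intro j
    have h1 : (C * Cᴴ) j j = 1 := by rw [hCC']; simp
    rw [Matrix.mul_apply] at h1
    have : (∑ i, C j i * Cᴴ i j).re = 1 := by rw [h1]; rfl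
    rw [Complex.re_sum] at this
    rw [← this]
    refine Finset.sum_congr rfl fun i _ => ?_
    rw [Matrix.conjTranspose_apply, show star (C j i) = (starRingEnd ℂ) (C j i) from rfl,
      Complex.mul_conj]
    exact (Complex.ofReal_re _).symm
  have hnn : ∀ j i, 0 ≤ Complex.normSq (C j i) := fun j i => Complex.normSq_nonneg _
  have peierls : ∑ j, min μ (α j) ≤ ∑ i, min μ (ν i) := by
    calc ∑ j, min μ (α j) = ∑ j, (∑ i, Complex.normSq (C j i)) * min μ (α j) := by
          refine Finset.sum_congr rfl fun j _ => ?_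
          rw [hrow j, one_mul]
      _ = ∑ i, ∑ j, Complex.normSq (C j i) * min μ (α j) := by
          rw [Finset.sum_comm]
          refine Finset.sum_congr rfl fun j _ => ?_
          rw [Finset.sum_mul]
      _ ≤ ∑ i, min μ (ν i) := by
          refine Finset.sum_le_sum fun i _ => ?_
          refine le_min ?_ ?_
          · calc ∑ j, Complex.normSq (C j i) * min μ (α j)
                ≤ ∑ j, Complex.normSq (C j i) * μ :=
                  Finset.sum_le_sum fun j _ =>
                    mul_le_mul_of_nonneg_left (min_le_left _ _) (hnn j i)
              _ = μ := by rw [← Finset.sum_mul, hcol i, one_mul]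
          · calc ∑ j, Complex.normSq (C j i) * min μ (α j)
                ≤ ∑ j, Complex.normSq (C j i) * α j :=
                  Finset.sum_le_sum fun j _ =>
                    mul_le_mul_of_nonneg_left (min_le_right _ _) (hnn j i)
              _ = ν i := (hentry i).symm
  have grad : ∑ i, min μ (ν i) ≤ ∑ i, (min μ (β i) + (if β i < μ then (1:ℝ) else 0) * (ν i - β i)) := by
    refine Finset.sum_le_sum fun i _ => ?_
    by_cases h : β i < μ
    · rw [if_pos h, one_mul, min_eq_right h.le]
      have := min_le_right μ (ν i)
      linarith
    · rw [if_neg h, zero_mul, add_zero, min_eq_left (le_of_not_gt h)]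
      exact min_le_left _ _
  rw [htr, Finset.sum_add_distrib] at *
  calc ∑ j, min μ (α j) ≤ ∑ i, min μ (ν i) := peierls
    _ ≤ _ := grad

section IntegralPart

lemma step_indicator (a b l : ℝ) :
    (if a < l then (1:ℝ) else 0) - (if b < l then 1 else 0)
      = (Set.Ioc a b).indicator (fun _ => (1:ℝ)) l
        - (Set.Ioc b a).indicator (fun _ => (1:ℝ)) l := by
  simp only [Set.indicator_apply, Set.mem_Ioc]
  by_cases h1 : a < l <;> by_cases h2 : b < l
  · simp [h1, h2, not_le.mpr h1, not_le.mpr h2]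
  · simp [h1, h2, not_lt.mp h2]
  · simp [h1, h2, not_lt.mp h1]
  · simp [h1, h2, not_lt.mp h1, not_lt.mp h2]

lemma integrableOn_step (a b μ : ℝ) :
    MeasureTheory.IntegrableOn
      (fun l => (if a < l then (1:ℝ) else 0) - (if b < l then 1 else 0)) (Set.Iio μ) := by
  have h1 : MeasureTheory.Integrable ((Set.Ioc a b).indicator (fun _ => (1:ℝ))) := by
    rw [MeasureTheory.integrable_indicator_iff measurableSet_Ioc]
    exact MeasureTheory.integrableOn_const measure_Ioc_lt_top.ne
  have h2 : MeasureTheory.Integrable ((Set.Ioc b a).indicator (fun _ => (1:ℝ))) := by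
    rw [MeasureTheory.integrable_indicator_iff measurableSet_Ioc]
    exact MeasureTheory.integrableOn_const measure_Ioc_lt_top.ne
  have := (h1.sub h2).restrict (s := Set.Iio μ)
  refine this.congr (Filter.Eventually.of_forall fun l => ?_)
  rw [Pi.sub_apply]
  exact (step_indicator a b l).symm

lemma volume_Ioc_inter_Iio (a b μ : ℝ) :
    MeasureTheory.volume (Set.Iio μ ∩ Set.Ioc a b) = ENNReal.ofReal (min b μ - a) := by
  apply le_antisymm
  · have hsub : Set.Iio μ ∩ Set.Ioc a b ⊆ Set.Ioc a (min b μ) := by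
      rintro l ⟨hlμ, ha, hb⟩
      exact ⟨ha, le_min hb hlμ.le⟩
    calc MeasureTheory.volume (Set.Iio μ ∩ Set.Ioc a b)
        ≤ MeasureTheory.volume (Set.Ioc a (min b μ)) := MeasureTheory.measure_mono hsub
      _ = ENNReal.ofReal (min b μ - a) := Real.volume_Ioc
  · have hsub : Set.Ioo a (min b μ) ⊆ Set.Iio μ ∩ Set.Ioc a b := by
      rintro l ⟨ha, hl⟩
      rcases lt_min_iff.mp hl with ⟨hlb, hlμ⟩
      exact ⟨hlμ, ha, hlb.le⟩
    calc ENNReal.ofReal (min b μ - a) = MeasureTheory.volume (Set.Ioo a (min b μ)) :=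
          Real.volume_Ioo.symm
      _ ≤ _ := MeasureTheory.measure_mono hsub

lemma integral_step (a b μ : ℝ) :
    ∫ l in Set.Iio μ, ((if a < l then (1:ℝ) else 0) - (if b < l then 1 else 0))
      = min μ b - min μ a := by
  have h1 : MeasureTheory.IntegrableOn ((Set.Ioc a b).indicator (fun _ => (1:ℝ))) (Set.Iio μ) := by
    apply MeasureTheory.Integrable.restrict
    rw [MeasureTheory.integrable_indicator_iff measurableSet_Ioc]
    exact MeasureTheory.integrableOn_const measure_Ioc_lt_top.ne
  have h2 : MeasureTheory.IntegrableOn ((Set.Ioc b a).indicator (fun _ => (1:ℝ))) (Set.Iio μ) := by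
    apply MeasureTheory.Integrable.restrict
    rw [MeasureTheory.integrable_indicator_iff measurableSet_Ioc]
    exact MeasureTheory.integrableOn_const measure_Ioc_lt_top.ne
  have key : ∀ x y : ℝ, ∫ l in Set.Iio μ, (Set.Ioc x y).indicator (fun _ => (1:ℝ)) l
      = (ENNReal.ofReal (min y μ - x)).toReal := by
    intro x y
    rw [MeasureTheory.setIntegral_indicator measurableSet_Ioc, MeasureTheory.setIntegral_const,
      MeasureTheory.measureReal_def, volume_Ioc_inter_Iio, smul_eq_mul, mul_one]
  have heq : ∀ l, ((if a < l then (1:ℝ) else 0) - (if b < l then 1 else 0))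
      = (Set.Ioc a b).indicator (fun _ => (1:ℝ)) l - (Set.Ioc b a).indicator (fun _ => (1:ℝ)) l :=
    step_indicator a b
  rw [show (fun l => (if a < l then (1:ℝ) else 0) - (if b < l then 1 else 0))
      = fun l => (Set.Ioc a b).indicator (fun _ => (1:ℝ)) l
        - (Set.Ioc b a).indicator (fun _ => (1:ℝ)) l from funext heq]
  rw [MeasureTheory.integral_sub h1 h2, key, key]
  rw [ENNReal.toReal_ofReal', ENNReal.toReal_ofReal']
  rcases le_total a b with h | h
  · have h2 : min a μ - b ≤ 0 := by
      rcases min_le_iff.mpr (Or.inl (le_refl a)) with h'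
      linarith [min_le_left a μ]
    rw [max_eq_right h2]
    rcases le_total a μ with h3 | h3
    · have : a ≤ min b μ := le_min h h3
      rw [max_eq_left (by linarith), min_comm b μ, min_eq_right h3]
      ring
    · have : min b μ ≤ a := le_trans (min_le_right b μ) h3
      rw [max_eq_right (by linarith), min_eq_left h3, min_eq_left (le_trans h3 h)]
      ring
  · have h2 : min b μ - a ≤ 0 := by linarith [min_le_left b μ]
    rw [max_eq_right h2]
    rcases le_total b μ with h3 | h3
    · have : b ≤ min a μ := le_min h h3
      rw [max_eq_left (by linarith), min_comm a μ, min_eq_right h3]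
      ring
    · have : min a μ ≤ b := le_trans (min_le_right a μ) h3
      rw [max_eq_right (by linarith), min_eq_left h3, min_eq_left (le_trans h3 h)]
      ring

end IntegralPart

/-- The integral of the spectral shift function below `μ` as a trace difference. -/
lemma integral_countBelow {n : ℕ} {H₀ H₁ : Matrix (Fin n) (Fin n) ℂ}
    (hH₀ : H₀.IsHermitian) (hH₁ : H₁.IsHermitian) (μ : ℝ) :
    ∫ l in Set.Iio μ, ((countBelow hH₀ l : ℝ) - (countBelow hH₁ l))
      = ∑ i, min μ (hH₁.eigenvalues i) - ∑ i, min μ (hH₀.eigenvalues i) := by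
  classical
  have hfun : ∀ l, ((countBelow hH₀ l : ℝ) - (countBelow hH₁ l))
      = ∑ i, ((if hH₀.eigenvalues i < l then (1:ℝ) else 0)
          - (if hH₁.eigenvalues i < l then 1 else 0)) := by
    intro l
    rw [Finset.sum_sub_distrib]
    unfold countBelow
    rw [Finset.card_filter, Finset.card_filter]
    push_cast
    rfl
  rw [show (fun l => ((countBelow hH₀ l : ℝ) - (countBelow hH₁ l)))
      = fun l => ∑ i, ((if hH₀.eigenvalues i < l then (1:ℝ) else 0)
          - (if hH₁.eigenvalues i < l then 1 else 0)) from funext hfun]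
  rw [MeasureTheory.integral_finset_sum _ fun i _ =>
    integrableOn_step (hH₀.eigenvalues i) (hH₁.eigenvalues i) μ]
  rw [← Finset.sum_sub_distrib]
  refine Finset.sum_congr rfl fun i _ => ?_
  exact integral_step _ _ _

/-- Estimate via monotonicity: for Hermitian `H₀`, `V`, `H₁ = H₀ + V`
and `μ` not an eigenvalue of `H_s = H₀ + sV` for a.e. `s ∈ [0,1]`,
`tr(V E_{H₁}((−∞,μ))) ≤ ∫_{−∞}^μ ξ(λ,H₀,H₁) dλ ≤ tr(V E_{H₀}((−∞,μ)))`. -/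
theorem spectral_shift_estimate {n : ℕ}
    (H₀ V : Matrix (Fin n) (Fin n) ℂ) (hH₀ : H₀.IsHermitian) (hV : V.IsHermitian)
    (μ : ℝ)
    (hμ : ∀ᵐ s ∂(MeasureTheory.volume.restrict (Set.Icc (0 : ℝ) 1)),
      ∀ i, (hH₀.add (hV.real_smul s)).eigenvalues i ≠ μ) :
    ((V * spectralProjBelow (hH₀.add hV) μ).trace).re
        ≤ ∫ l in Set.Iio μ, ((countBelow hH₀ l : ℝ) - (countBelow (hH₀.add hV) l))
      ∧ ∫ l in Set.Iio μ, ((countBelow hH₀ l : ℝ) - (countBelow (hH₀.add hV) l))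
        ≤ ((V * spectralProjBelow hH₀ μ).trace).re := by
  have hH₁ : (H₀ + V).IsHermitian := hH₀.add hV
  rw [integral_countBelow hH₀ hH₁ μ]
  constructor
  · -- apply key with A = H₀, B = H₀ + V
    have h := key_ineq H₀ (H₀ + V) hH₀ hH₁ μ
    have hsub : H₀ - (H₀ + V) = -V := by rw [sub_add_eq_sub_sub, sub_self, zero_sub]
    rw [hsub] at h
    have hneg : (((-V) * spectralProjBelow hH₁ μ).trace).re
        = -(((V * spectralProjBelow hH₁ μ).trace).re) := by
      rw [Matrix.neg_mul, Matrix.trace_neg, Complex.neg_re]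
    rw [hneg] at h
    linarith
  · have h := key_ineq (H₀ + V) H₀ hH₁ hH₀ μ
    have hsub : H₀ + V - H₀ = V := add_sub_cancel_left H₀ V
    rw [hsub] at h
    linarith
end

section
/- Concavity of integrated spectral shift (matrix version): with H_s = H₀ + sV for Hermitian matrices H₀, V, the function s ↦ ζ_s(μ) := ∫_{−∞}^μ (N(λ,H₀) − N(λ,H_s)) dλ is concave in s ∈ ℝ for every fixed μ ∈ ℝ, and subadditive for s ≥ 0: ζ_{s+t}(μ) ≤ ζ_s(μ) + ζ_t(μ) for s, t ≥ 0. -/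
open Matrix
open scoped ComplexOrder

section Auxiliary

open MeasureTheory

variable {n : ℕ} {A B : Matrix (Fin n) (Fin n) ℂ}

/-- The sum `∑ i, (μ - λ_i(A))₊ = tr((μ - A)₊)`. -/
noncomputable def eigSum (hA : A.IsHermitian) (μ : ℝ) : ℝ :=
  ∑ i, max (μ - hA.eigenvalues i) 0

lemma eigSum_congr (hA : A.IsHermitian) (hB : B.IsHermitian) (h : A = B) (μ : ℝ) :
    eigSum hA μ = eigSum hB μ := by subst h; rfl

lemma sub_diag (hB : B.IsHermitian) (μ : ℝ) :
    μ • (1 : Matrix (Fin n) (Fin n) ℂ) - B =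
      (hB.eigenvectorUnitary : Matrix (Fin n) (Fin n) ℂ) *
        Matrix.diagonal (fun i => ((μ - hB.eigenvalues i : ℝ) : ℂ)) *
        star (hB.eigenvectorUnitary : Matrix (Fin n) (Fin n) ℂ) := by
  set W := (hB.eigenvectorUnitary : Matrix (Fin n) (Fin n) ℂ)
  have hWW : W * star W = 1 := (Matrix.mem_unitaryGroup_iff).mp hB.eigenvectorUnitary.2
  have hdiag : Matrix.diagonal (fun i => ((μ - hB.eigenvalues i : ℝ) : ℂ)) =
      μ • (1 : Matrix (Fin n) (Fin n) ℂ) -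
        Matrix.diagonal (RCLike.ofReal ∘ hB.eigenvalues) := by
    rw [← Matrix.diagonal_one, ← Matrix.diagonal_smul, Matrix.diagonal_sub]
    ext i
    push_cast
    simp [Complex.real_smul]
  rw [hdiag, Matrix.mul_sub, Matrix.sub_mul, ← show (Unitary.conjStarAlgAut ℂ _ hB.eigenvectorUnitary)
      (diagonal (RCLike.ofReal ∘ hB.eigenvalues)) = W * diagonal (RCLike.ofReal ∘ hB.eigenvalues) * star W
      from rfl, ← hB.spectral_theorem]
  congr 1
  rw [Matrix.mul_smul, Matrix.smul_mul, mul_one, hWW]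

lemma trace_diag_conj (χ e : Fin n → ℂ) (C : Matrix (Fin n) (Fin n) ℂ) :
    Matrix.trace (Matrix.diagonal χ * (C * (Matrix.diagonal e * star C))) =
      ∑ j, ∑ i, χ j * (e i * (Complex.normSq (C j i) : ℂ)) := by
  have hassoc : Matrix.diagonal χ * (C * (Matrix.diagonal e * star C)) =
      Matrix.diagonal χ * (C * Matrix.diagonal e * star C) := by
    simp only [Matrix.mul_assoc]
  rw [hassoc]
  calc Matrix.trace (Matrix.diagonal χ * (C * Matrix.diagonal e * star C))
      = ∑ j, χ j * ∑ i, (C j i * e i) * (starRingEnd ℂ) (C j i) := by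
        simp only [Matrix.trace, Matrix.diag_apply]
        refine Finset.sum_congr rfl fun j _ => ?_
        rw [Matrix.diagonal_mul, Matrix.mul_apply]
        congr 1
        refine Finset.sum_congr rfl fun i _ => ?_
        rw [Matrix.mul_diagonal, Matrix.star_apply, RCLike.star_def]
    _ = _ := by
        refine Finset.sum_congr rfl fun j _ => ?_
        rw [Finset.mul_sum]
        refine Finset.sum_congr rfl fun i _ => ?_
        rw [show C j i * e i * (starRingEnd ℂ) (C j i)
            = e i * (C j i * (starRingEnd ℂ) (C j i)) by ring, Complex.mul_conj]

lemma trace_proj_formula (hA : A.IsHermitian) (hB : B.IsHermitian) (μ : ℝ) :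
    Matrix.trace (spectralProjBelow hA μ * (μ • (1 : Matrix (Fin n) (Fin n) ℂ) - B)) =
      ((∑ j, ∑ i, (if hA.eigenvalues j < μ then (1:ℝ) else 0) *
        ((μ - hB.eigenvalues i) *
          Complex.normSq ((star (hA.eigenvectorUnitary : Matrix (Fin n) (Fin n) ℂ) *
            (hB.eigenvectorUnitary : Matrix (Fin n) (Fin n) ℂ)) j i)) : ℝ) : ℂ) := by
  set U := (hA.eigenvectorUnitary : Matrix (Fin n) (Fin n) ℂ) with hU
  set W := (hB.eigenvectorUnitary : Matrix (Fin n) (Fin n) ℂ) with hW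
  have hUU : star U * U = 1 := (Matrix.mem_unitaryGroup_iff').mp hA.eigenvectorUnitary.2
  have hP : spectralProjBelow hA μ =
      U * Matrix.diagonal (fun j => if hA.eigenvalues j < μ then (1:ℂ) else 0) * star U := by
    have hfun : (fun i => (((if hA.eigenvalues i < μ then (1:ℝ) else 0) : ℝ) : ℂ)) =
        (fun j => if hA.eigenvalues j < μ then (1:ℂ) else 0) := by
      funext i; split <;> simp
    rw [spectralProjBelow, hermFun, Matrix.star_eq_conjTranspose, hfun]
  rw [hP, sub_diag hB μ, ← hW]
  rw [show U * Matrix.diagonal (fun j => if hA.eigenvalues j < μ then (1:ℂ) else 0) * star U *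
      (W * Matrix.diagonal (fun i => ((μ - hB.eigenvalues i : ℝ) : ℂ)) * star W) =
      U * (Matrix.diagonal (fun j => if hA.eigenvalues j < μ then (1:ℂ) else 0) *
        (star U * (W * (Matrix.diagonal (fun i => ((μ - hB.eigenvalues i : ℝ) : ℂ)) * star W))))
      from by simp only [Matrix.mul_assoc]]
  rw [Matrix.trace_mul_comm]
  rw [show Matrix.diagonal (fun j => if hA.eigenvalues j < μ then (1:ℂ) else 0) *
      (star U * (W * (Matrix.diagonal (fun i => ((μ - hB.eigenvalues i : ℝ) : ℂ)) * star W))) * U =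
      Matrix.diagonal (fun j => if hA.eigenvalues j < μ then (1:ℂ) else 0) *
        ((star U * W) * (Matrix.diagonal (fun i => ((μ - hB.eigenvalues i : ℝ) : ℂ)) *
          star (star U * W)))
      from by rw [Matrix.star_mul, star_star]; simp only [Matrix.mul_assoc]]
  rw [trace_diag_conj]
  push_cast
  refine Finset.sum_congr rfl fun j _ => Finset.sum_congr rfl fun i _ => ?_
  by_cases h : hA.eigenvalues j < μ <;> simp [h]

lemma re_trace_proj_self (hA : A.IsHermitian) (μ : ℝ) :
    (Matrix.trace (spectralProjBelow hA μ * (μ • (1 : Matrix (Fin n) (Fin n) ℂ) - A))).re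
      = eigSum hA μ := by
  have hUU : star (hA.eigenvectorUnitary : Matrix (Fin n) (Fin n) ℂ) *
      (hA.eigenvectorUnitary : Matrix (Fin n) (Fin n) ℂ) = 1 :=
    (Matrix.mem_unitaryGroup_iff').mp hA.eigenvectorUnitary.2
  rw [trace_proj_formula hA hA μ, Complex.ofReal_re, hUU]
  unfold eigSum
  refine Finset.sum_congr rfl fun j _ => ?_
  calc ∑ i, (if hA.eigenvalues j < μ then (1:ℝ) else 0) *
      ((μ - hA.eigenvalues i) * Complex.normSq ((1 : Matrix (Fin n) (Fin n) ℂ) j i))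
      = ∑ i, if j = i then
          (if hA.eigenvalues j < μ then (1:ℝ) else 0) * (μ - hA.eigenvalues i) else 0 :=
        Finset.sum_congr rfl fun i _ => by by_cases h : j = i <;> simp [Matrix.one_apply, h]
    _ = (if hA.eigenvalues j < μ then (1:ℝ) else 0) * (μ - hA.eigenvalues j) := by
        rw [Finset.sum_ite_eq]; simp
    _ = max (μ - hA.eigenvalues j) 0 := by
        by_cases h : hA.eigenvalues j < μ
        · rw [if_pos h, one_mul, max_eq_left (by linarith)]
        · rw [if_neg h, zero_mul, max_eq_right (by rw [not_lt] at h; linarith)]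

lemma re_trace_proj_le (hA : A.IsHermitian) (hB : B.IsHermitian) (μ : ℝ) :
    (Matrix.trace (spectralProjBelow hA μ * (μ • (1 : Matrix (Fin n) (Fin n) ℂ) - B))).re
      ≤ eigSum hB μ := by
  set U := (hA.eigenvectorUnitary : Matrix (Fin n) (Fin n) ℂ) with hU
  set W := (hB.eigenvectorUnitary : Matrix (Fin n) (Fin n) ℂ) with hW
  have hcol : ∀ i, ∑ j, Complex.normSq ((star U * W) j i) = 1 := by
    intro i
    have hCC : star (star U * W) * (star U * W) = 1 := by
      rw [Matrix.star_mul, star_star, Matrix.mul_assoc, ← Matrix.mul_assoc U,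
        (Matrix.mem_unitaryGroup_iff).mp hA.eigenvectorUnitary.2, Matrix.one_mul,
        (Matrix.mem_unitaryGroup_iff').mp hB.eigenvectorUnitary.2]
    have h1 : (star (star U * W) * (star U * W)) i i = 1 := by rw [hCC, Matrix.one_apply_eq]
    rw [Matrix.mul_apply] at h1
    have h2 : ∀ j, (star (star U * W)) i j * (star U * W) j i =
        ((Complex.normSq ((star U * W) j i) : ℝ) : ℂ) := by
      intro j
      rw [Matrix.star_apply, RCLike.star_def, mul_comm, Complex.mul_conj]
    rw [Finset.sum_congr rfl fun j _ => h2 j] at h1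
    exact_mod_cast h1
  rw [trace_proj_formula hA hB μ, Complex.ofReal_re, Finset.sum_comm]
  unfold eigSum
  refine Finset.sum_le_sum fun i _ => ?_
  have hterm : ∀ j, (if hA.eigenvalues j < μ then (1:ℝ) else 0) *
      ((μ - hB.eigenvalues i) * Complex.normSq ((star U * W) j i)) =
      (μ - hB.eigenvalues i) *
        ((if hA.eigenvalues j < μ then (1:ℝ) else 0) * Complex.normSq ((star U * W) j i)) := by
    intro j; ring
  rw [Finset.sum_congr rfl fun j _ => hterm j, ← Finset.mul_sum]
  set p := ∑ j, (if hA.eigenvalues j < μ then (1:ℝ) else 0) * Complex.normSq ((star U * W) j i)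
    with hp
  have hp0 : 0 ≤ p := Finset.sum_nonneg fun j _ =>
    mul_nonneg (by split <;> norm_num) (Complex.normSq_nonneg _)
  have hp1 : p ≤ 1 := by
    calc p ≤ ∑ j, Complex.normSq ((star U * W) j i) := Finset.sum_le_sum fun j _ => by
          by_cases h : hA.eigenvalues j < μ <;> simp [h, Complex.normSq_nonneg]
      _ = 1 := hcol i
  rcases le_or_gt (μ - hB.eigenvalues i) 0 with h | h
  · exact le_trans (mul_nonpos_of_nonpos_of_nonneg h hp0) (le_max_right _ _)
  · calc (μ - hB.eigenvalues i) * p ≤ (μ - hB.eigenvalues i) * 1 :=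
        mul_le_mul_of_nonneg_left hp1 h.le
    _ = μ - hB.eigenvalues i := mul_one _
    _ ≤ max (μ - hB.eigenvalues i) 0 := le_max_left _ _

lemma eigSum_convex (H₀ V : Matrix (Fin n) (Fin n) ℂ) (hH₀ : H₀.IsHermitian)
    (hV : V.IsHermitian) (μ : ℝ) :
    ConvexOn ℝ Set.univ (fun s : ℝ => eigSum (hH₀.add (hV.real_smul s)) μ) := by
  refine ⟨convex_univ, fun s _ t _ a b ha hb hab => ?_⟩
  simp only [smul_eq_mul]
  have hmat : μ • (1 : Matrix (Fin n) (Fin n) ℂ) - (H₀ + (a * s + b * t) • V)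
      = a • (μ • (1 : Matrix (Fin n) (Fin n) ℂ) - (H₀ + s • V))
        + b • (μ • (1 : Matrix (Fin n) (Fin n) ℂ) - (H₀ + t • V)) := by
    obtain rfl : b = 1 - a := by linarith
    module
  have hre : ∀ (r : ℝ) (z : ℂ), (r • z).re = r * z.re := fun r z => by
    rw [Complex.real_smul, Complex.mul_re, Complex.ofReal_re, Complex.ofReal_im]
    ring
  have h1 := re_trace_proj_self (hH₀.add (hV.real_smul (a * s + b * t))) μ
  rw [← h1, hmat, Matrix.mul_add, Matrix.mul_smul, Matrix.mul_smul, Matrix.trace_add,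
    Matrix.trace_smul, Matrix.trace_smul, Complex.add_re, hre, hre]
  exact add_le_add
    (mul_le_mul_of_nonneg_left
      (re_trace_proj_le (hH₀.add (hV.real_smul (a * s + b * t))) (hH₀.add (hV.real_smul s)) μ) ha)
    (mul_le_mul_of_nonneg_left
      (re_trace_proj_le (hH₀.add (hV.real_smul (a * s + b * t))) (hH₀.add (hV.real_smul t)) μ) hb)

lemma countBelow_eq_sum (hA : A.IsHermitian) :
    (fun l => ((countBelow hA l : ℕ) : ℝ)) =
      fun l => ∑ i, Set.indicator (Set.Ioi (hA.eigenvalues i)) (fun _ => (1:ℝ)) l := by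
  funext l
  rw [countBelow, Finset.card_filter]
  push_cast
  refine Finset.sum_congr rfl fun i _ => ?_
  rw [Set.indicator_apply]
  simp [Set.mem_Ioi]

lemma indicator_integrable (c μ : ℝ) :
    Integrable (Set.indicator (Set.Ioi c) (fun _ => (1:ℝ))) (volume.restrict (Set.Iio μ)) := by
  rw [integrable_indicator_iff measurableSet_Ioi]
  refine integrableOn_const (ne_of_lt ?_)
  rw [Measure.restrict_apply measurableSet_Ioi, Set.Ioi_inter_Iio, Real.volume_Ioo]
  exact ENNReal.ofReal_lt_top

lemma countBelow_integrableOn (hA : A.IsHermitian) (μ : ℝ) :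
    IntegrableOn (fun l => ((countBelow hA l : ℕ) : ℝ)) (Set.Iio μ) volume := by
  rw [IntegrableOn, countBelow_eq_sum hA]
  exact integrable_finset_sum _ fun i _ => indicator_integrable _ μ

lemma countBelow_integral (hA : A.IsHermitian) (μ : ℝ) :
    ∫ l in Set.Iio μ, ((countBelow hA l : ℕ) : ℝ) = eigSum hA μ := by
  have h1 : ∫ l in Set.Iio μ, ((countBelow hA l : ℕ) : ℝ)
      = ∑ i, ∫ l in Set.Iio μ, Set.indicator (Set.Ioi (hA.eigenvalues i)) (fun _ => (1:ℝ)) l := by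
    rw [show (fun l => ((countBelow hA l : ℕ) : ℝ)) =
        fun l => ∑ i, Set.indicator (Set.Ioi (hA.eigenvalues i)) (fun _ => (1:ℝ)) l
      from countBelow_eq_sum hA]
    exact integral_finset_sum _ fun i _ => indicator_integrable _ μ
  rw [h1]
  refine Finset.sum_congr rfl fun i _ => ?_
  rw [integral_indicator_const (1:ℝ) measurableSet_Ioi, measureReal_restrict_apply measurableSet_Ioi,
    Set.Ioi_inter_Iio, Real.volume_real_Ioo, smul_eq_mul, mul_one]

end Auxiliary

/-- Concavity and subadditivity of the integrated spectral shift
function (matrix version): with `H_s = H₀ + sV`,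
`ζ_s(μ) = ∫_{−∞}^μ (N(λ,H₀) − N(λ,H_s)) dλ` is concave in `s ∈ ℝ` and subadditive for
`s, t ≥ 0`. -/
theorem integrated_ssf_concave_subadditive {n : ℕ}
    (H₀ V : Matrix (Fin n) (Fin n) ℂ) (hH₀ : H₀.IsHermitian) (hV : V.IsHermitian)
    (μ : ℝ) :
    ConcaveOn ℝ Set.univ (fun s : ℝ =>
        ∫ l in Set.Iio μ,
          ((countBelow hH₀ l : ℝ) - (countBelow (hH₀.add (hV.real_smul s)) l)))
    ∧ ∀ s t : ℝ, 0 ≤ s → 0 ≤ t →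
        (∫ l in Set.Iio μ,
            ((countBelow hH₀ l : ℝ) - (countBelow (hH₀.add (hV.real_smul (s + t))) l)))
          ≤ (∫ l in Set.Iio μ,
              ((countBelow hH₀ l : ℝ) - (countBelow (hH₀.add (hV.real_smul s)) l)))
            + ∫ l in Set.Iio μ,
                ((countBelow hH₀ l : ℝ) - (countBelow (hH₀.add (hV.real_smul t)) l)) := by
  have hsplit : ∀ s : ℝ, (∫ l in Set.Iio μ,
      ((countBelow hH₀ l : ℝ) - (countBelow (hH₀.add (hV.real_smul s)) l)))
      = eigSum hH₀ μ - eigSum (hH₀.add (hV.real_smul s)) μ := fun s => by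
    rw [MeasureTheory.integral_sub (countBelow_integrableOn hH₀ μ)
      (countBelow_integrableOn (hH₀.add (hV.real_smul s)) μ),
      countBelow_integral, countBelow_integral]
  have hconv := eigSum_convex H₀ V hH₀ hV μ
  have hg0 : eigSum (hH₀.add (hV.real_smul 0)) μ = eigSum hH₀ μ :=
    eigSum_congr _ _ (by rw [zero_smul, add_zero]) μ
  constructor
  · simp only [hsplit]
    exact (concaveOn_const _ convex_univ).sub hconv
  · intro s t hs ht
    simp only [hsplit]
    rcases eq_or_lt_of_le (by linarith : (0:ℝ) ≤ s + t) with h0 | hpos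
    · obtain rfl : s = 0 := by linarith
      obtain rfl : t = 0 := by linarith
      rw [add_zero]
      linarith [hg0]
    · have hne : s + t ≠ 0 := ne_of_gt hpos
      have hab1 : t/(s+t) + s/(s+t) = 1 := by
        rw [← add_div, add_comm t s, div_self hne]
      have hab2 : s/(s+t) + t/(s+t) = 1 := by
        rw [← add_div, div_self hne]
      have i1 := hconv.2 (Set.mem_univ (0:ℝ)) (Set.mem_univ (s+t))
        (div_nonneg ht hpos.le) (div_nonneg hs hpos.le) hab1
      have i2 := hconv.2 (Set.mem_univ (0:ℝ)) (Set.mem_univ (s+t))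
        (div_nonneg hs hpos.le) (div_nonneg ht hpos.le) hab2
      simp only [smul_eq_mul] at i1 i2
      have key1 : eigSum (hH₀.add (hV.real_smul s)) μ =
          eigSum (hH₀.add (hV.real_smul (t/(s+t) * 0 + s/(s+t)*(s+t)))) μ :=
        eigSum_congr _ _ (by rw [show t/(s+t) * 0 + s/(s+t)*(s+t) = s by
          rw [mul_zero, zero_add, div_mul_cancel₀ _ hne]]) μ
      have key2 : eigSum (hH₀.add (hV.real_smul t)) μ =
          eigSum (hH₀.add (hV.real_smul (s/(s+t) * 0 + t/(s+t)*(s+t)))) μ :=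
        eigSum_congr _ _ (by rw [show s/(s+t) * 0 + t/(s+t)*(s+t) = t by
          rw [mul_zero, zero_add, div_mul_cancel₀ _ hne]]) μ
      replace i1 := le_trans (le_of_eq key1) i1
      replace i2 := le_trans (le_of_eq key2) i2
      set g0 := eigSum (hH₀.add (hV.real_smul 0)) μ
      set G := eigSum (hH₀.add (hV.real_smul (s+t))) μ
      have hcomb : t/(s+t) * g0 + s/(s+t) * G + (s/(s+t) * g0 + t/(s+t) * G)
          = (t/(s+t) + s/(s+t)) * (g0 + G) := by ring
      rw [hab1, one_mul] at hcomb
      linarith [i1, i2, hcomb, hg0]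
end

section
/- Convexity of heat trace difference (matrix version): let H₀ be a Hermitian matrix, s ↦ V(s) a C² family of Hermitian matrices with V''(s) ≤ 0 (negative semidefinite), H(s) = H₀ + V(s). Then for every fixed t > 0, the function s ↦ tr(e^{−tH(s)} − e^{−tH₀}) is convex on (s₁, s₂). -/
open scoped ComplexOrder

lemma hasDerivAt_conj_entry {n : ℕ} (U : Matrix (Fin n) (Fin n) ℂ) (c : ℂ)
    (A A' : ℝ → Matrix (Fin n) (Fin n) ℂ) (s : ℝ) (i : Fin n)
    (h : ∀ p q, HasDerivAt (fun u => A u p q) (A' s p q) s) :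
    HasDerivAt (fun u => (star U * (c • A u) * U) i i) ((star U * (c • A' s) * U) i i) s := by
  have key : ∀ B : Matrix (Fin n) (Fin n) ℂ,
      (star U * (c • B) * U) i i = ∑ k, (∑ j, star U i j * (c * B j k)) * U k i := by
    intro B
    simp [Matrix.mul_apply, Matrix.smul_apply, smul_eq_mul, Finset.mul_sum, mul_left_comm]
  rw [key]
  simp only [key]
  exact HasDerivAt.fun_sum fun k _ => (HasDerivAt.fun_sum fun j _ =>
    ((h j k).const_mul c).const_mul _).mul_const _

lemma conj_diag_entry_re {n : ℕ} (U : Matrix (Fin n) (Fin n) ℂ) (i : Fin n) (d : Fin n → ℝ) :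
    ((U * Matrix.diagonal (fun j => ((d j : ℝ) : ℂ)) * star U) i i).re
      = ∑ j, Complex.normSq (U i j) * d j := by
  have h0 : (U * Matrix.diagonal (fun j => ((d j : ℝ) : ℂ)) * star U) i i
      = ∑ j, U i j * (d j : ℂ) * star (U i j) := by
    rw [Matrix.mul_apply]
    exact Finset.sum_congr rfl fun j _ => by rw [Matrix.mul_diagonal, Matrix.star_apply]
  rw [h0, Complex.re_sum]
  refine Finset.sum_congr rfl fun j _ => ?_
  rw [show U i j * (d j : ℂ) * star (U i j) = (U i j * star (U i j)) * (d j : ℂ) by ring,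
    Complex.star_def, Complex.mul_conj, ← Complex.ofReal_mul, Complex.ofReal_re]

lemma peierls_entry {n : ℕ} {M : Matrix (Fin n) (Fin n) ℂ} (hM : M.IsHermitian) (i : Fin n) :
    Real.exp ((M i i).re) ≤ ((NormedSpace.exp M) i i).re := by
  set U : Matrix (Fin n) (Fin n) ℂ := (hM.eigenvectorUnitary : Matrix (Fin n) (Fin n) ℂ) with hU
  set μ : Fin n → ℝ := hM.eigenvalues with hμ
  have hUU : U * star U = 1 := Matrix.mem_unitaryGroup_iff.mp hM.eigenvectorUnitary.2
  have hU'U : star U * U = 1 := Matrix.mem_unitaryGroup_iff'.mp hM.eigenvectorUnitary.2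
  have hinv : U⁻¹ = star U := Matrix.inv_eq_left_inv hU'U
  have hisunit : IsUnit U := ⟨⟨U, star U, hUU, hU'U⟩, rfl⟩
  have hspec : M = U * Matrix.diagonal (fun j => ((μ j : ℝ) : ℂ)) * star U := by
    exact hM.spectral_theorem
  have hexp : NormedSpace.exp M
      = U * Matrix.diagonal (fun j => ((Real.exp (μ j) : ℝ) : ℂ)) * star U := by
    rw [hspec, ← hinv, Matrix.exp_conj U _ hisunit, Matrix.exp_diagonal]
    have hfun : (NormedSpace.exp fun j => ((μ j : ℝ) : ℂ))
        = fun j => ((Real.exp (μ j) : ℝ) : ℂ) := funext fun j => by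
      rw [Pi.coe_exp, ← congrFun Complex.exp_eq_exp_ℂ, Complex.ofReal_exp]
    rw [hfun]
  have hsum : ∑ j, Complex.normSq (U i j) = 1 := by
    have h1 : ((U * star U) i i).re = 1 := by rw [hUU]; simp
    have h2 : (U * star U) i i = ((∑ j, Complex.normSq (U i j) : ℝ) : ℂ) := by
      simp only [Matrix.mul_apply, Matrix.star_apply, Complex.star_def, Complex.mul_conj,
        Complex.ofReal_sum]
    rw [h2, Complex.ofReal_re] at h1
    exact h1
  have hjensen := convexOn_exp.map_sum_le (t := Finset.univ)
    (w := fun j => Complex.normSq (U i j)) (p := fun j => μ j)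
    (fun j _ => Complex.normSq_nonneg _) hsum (fun j _ => Set.mem_univ _)
  simp only [smul_eq_mul] at hjensen
  calc Real.exp ((M i i).re) = Real.exp (∑ j, Complex.normSq (U i j) * μ j) := by
        conv_lhs => rw [hspec, conj_diag_entry_re]
    _ ≤ ∑ j, Complex.normSq (U i j) * Real.exp (μ j) := hjensen
    _ = ((NormedSpace.exp M) i i).re := by rw [hexp, conj_diag_entry_re]

lemma conj_entry_re_nonneg {n : ℕ} {P : Matrix (Fin n) (Fin n) ℂ} (hP : P.PosSemidef)
    (U : Matrix (Fin n) (Fin n) ℂ) (i : Fin n) : 0 ≤ ((star U * P * U) i i).re := by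
  have h := hP.dotProduct_mulVec_nonneg (fun j => U j i)
  have heq : (star U * P * U) i i
      = dotProduct (star (fun j => U j i)) (P.mulVec (fun j => U j i)) := by
    simp only [Matrix.mul_apply, dotProduct, Matrix.mulVec, Matrix.star_apply,
      Pi.star_apply, Finset.sum_mul, Finset.mul_sum]
    rw [Finset.sum_comm]
    exact Finset.sum_congr rfl fun j _ => Finset.sum_congr rfl fun k _ => by ring
  rw [heq]
  simpa using (Complex.le_def.mp h).1

/-- Convexity of the heat trace difference (matrix version): with
`H(s) = H₀ + V(s)`, `V` of class `C²` with `V''(s) ≤ 0` (negative semidefinite) on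
`(s₁,s₂)`, for every fixed `t > 0` the function `s ↦ tr(e^{−tH(s)} − e^{−tH₀})` is
convex on `(s₁,s₂)`. -/
theorem heat_trace_difference_convex {n : ℕ} (s₁ s₂ : ℝ)
    (H₀ : Matrix (Fin n) (Fin n) ℂ) (hH₀ : H₀.IsHermitian)
    (V V' V'' : ℝ → Matrix (Fin n) (Fin n) ℂ)
    (hV : ∀ s, (V s).IsHermitian)
    (hderiv1 : ∀ s ∈ Set.Ioo s₁ s₂, ∀ i j, HasDerivAt (fun u => V u i j) (V' s i j) s)
    (hderiv2 : ∀ s ∈ Set.Ioo s₁ s₂, ∀ i j, HasDerivAt (fun u => V' u i j) (V'' s i j) s)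
    (hcont : ∀ i j, ContinuousOn (fun s => V'' s i j) (Set.Ioo s₁ s₂))
    (hconc : ∀ s ∈ Set.Ioo s₁ s₂, (-(V'' s)).PosSemidef)
    (t : ℝ) (ht : 0 < t) :
    ConvexOn ℝ (Set.Ioo s₁ s₂) (fun s =>
      ((NormedSpace.exp ((-(t : ℂ)) • (H₀ + V s))
        - NormedSpace.exp ((-(t : ℂ)) • H₀)).trace).re) := by
  have hstar_t : star (-(t : ℂ)) = -(t : ℂ) := by
    simp [Complex.star_def, Complex.conj_ofReal]
  have hHermHs : ∀ s, ((-(t : ℂ)) • (H₀ + V s)).IsHermitian := fun s => by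
    have h := hH₀.add (hV s)
    have : Matrix.conjTranspose ((-(t : ℂ)) • (H₀ + V s)) = (-(t : ℂ)) • (H₀ + V s) := by
      rw [Matrix.conjTranspose_smul, h.eq, hstar_t]
    exact this
  refine ⟨convex_Ioo s₁ s₂, ?_⟩
  intro a ha b hb wa wb hwa hwb hab
  simp only [smul_eq_mul]
  have hc : wa * a + wb * b ∈ Set.Ioo s₁ s₂ := (convex_Ioo s₁ s₂) ha hb hwa hwb hab
  set c : ℝ := wa * a + wb * b with hcdef
  have hC : ((-(t : ℂ)) • (H₀ + V c)).IsHermitian := hHermHs c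
  set U : Matrix (Fin n) (Fin n) ℂ := (hC.eigenvectorUnitary : Matrix (Fin n) (Fin n) ℂ) with hUdef
  set μ : Fin n → ℝ := hC.eigenvalues with hμdef
  have hUU : U * star U = 1 := Matrix.mem_unitaryGroup_iff.mp hC.eigenvectorUnitary.2
  have hU'U : star U * U = 1 := Matrix.mem_unitaryGroup_iff'.mp hC.eigenvectorUnitary.2
  have hinv : U⁻¹ = star U := Matrix.inv_eq_left_inv hU'U
  have hisunit : IsUnit U := ⟨⟨U, star U, hUU, hU'U⟩, rfl⟩
  set M : ℝ → Matrix (Fin n) (Fin n) ℂ :=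
    fun s => star U * ((-(t : ℂ)) • (H₀ + V s)) * U with hMdef
  -- each M s is Hermitian
  have hMherm : ∀ s, (M s).IsHermitian := fun s => by
    have h := hHermHs s
    show Matrix.conjTranspose (M s) = M s
    simp only [hMdef, Matrix.star_eq_conjTranspose, Matrix.conjTranspose_mul,
      Matrix.conjTranspose_conjTranspose, h.eq, Matrix.mul_assoc]
  -- traces agree
  have htr : ∀ s, ((NormedSpace.exp ((-(t : ℂ)) • (H₀ + V s))).trace).re
      = ((NormedSpace.exp (M s)).trace).re := fun s => by
    have hexpM : NormedSpace.exp (M s)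
        = star U * NormedSpace.exp ((-(t : ℂ)) • (H₀ + V s)) * U := by
      rw [show M s = U⁻¹ * ((-(t : ℂ)) • (H₀ + V s)) * U by rw [hinv],
        Matrix.exp_conj' U _ hisunit, hinv]
    rw [hexpM, Matrix.trace_mul_cycle, hUU, Matrix.one_mul]
  -- convexity of the diagonal entries
  have hgconv : ∀ i : Fin n, ConvexOn ℝ (Set.Ioo s₁ s₂) (fun s => ((M s) i i).re) := by
    intro i
    have hio : interior (Set.Ioo s₁ s₂) = Set.Ioo s₁ s₂ := isOpen_Ioo.interior_eq
    have hd1 : ∀ x ∈ Set.Ioo s₁ s₂, HasDerivAt (fun s => ((M s) i i).re)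
        (((star U * ((-(t : ℂ)) • V' x) * U) i i).re) x := by
      intro x hx
      have hcx : HasDerivAt (fun u => (star U * ((-(t : ℂ)) • (H₀ + V u)) * U) i i)
          ((star U * ((-(t : ℂ)) • V' x) * U) i i) x :=
        hasDerivAt_conj_entry U (-(t : ℂ)) (fun u => H₀ + V u) V' x i
          (fun p q => (hderiv1 x hx p q).const_add (H₀ p q))
      exact Complex.reCLM.hasFDerivAt.comp_hasDerivAt x hcx
    have hd2 : ∀ x ∈ Set.Ioo s₁ s₂,
        HasDerivAt (fun s => ((star U * ((-(t : ℂ)) • V' s) * U) i i).re)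
          (((star U * ((-(t : ℂ)) • V'' x) * U) i i).re) x := by
      intro x hx
      have hcx : HasDerivAt (fun u => (star U * ((-(t : ℂ)) • V' u) * U) i i)
          ((star U * ((-(t : ℂ)) • V'' x) * U) i i) x :=
        hasDerivAt_conj_entry U (-(t : ℂ)) V' V'' x i (fun p q => hderiv2 x hx p q)
      exact Complex.reCLM.hasFDerivAt.comp_hasDerivAt x hcx
    refine convexOn_of_hasDerivWithinAt2_nonneg (convex_Ioo s₁ s₂)
      (f' := fun s => ((star U * ((-(t : ℂ)) • V' s) * U) i i).re)
      (f'' := fun s => ((star U * ((-(t : ℂ)) • V'' s) * U) i i).re)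
      (fun x hx => ((hd1 x hx).continuousAt.continuousWithinAt))
      (fun x hx => ((hd1 x (hio ▸ hx)).hasDerivWithinAt))
      (fun x hx => ((hd2 x (hio ▸ hx)).hasDerivWithinAt))
      ?_
    intro x hx
    have hx' : x ∈ Set.Ioo s₁ s₂ := hio ▸ hx
    have h1 : (-(t : ℂ)) • V'' x = (t : ℂ) • (-(V'' x)) := by
      rw [smul_neg, neg_smul]
    have h2 : star U * ((-(t : ℂ)) • V'' x) * U = (t : ℂ) • (star U * (-(V'' x)) * U) := by
      rw [h1, Matrix.mul_smul, Matrix.smul_mul]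
    show 0 ≤ ((star U * ((-(t : ℂ)) • V'' x) * U) i i).re
    rw [h2]
    have h3 : (((t : ℂ) • (star U * (-(V'' x)) * U)) i i).re
        = t * ((star U * (-(V'' x)) * U) i i).re := by
      simp [Matrix.smul_apply, Complex.re_ofReal_mul]
    rw [h3]
    exact mul_nonneg ht.le (conj_entry_re_nonneg (hconc x hx') U i)
  -- diagonal form at c
  have hdiagc : M c = Matrix.diagonal (fun j => ((μ j : ℝ) : ℂ)) := by
    have h : star U * ((-(t : ℂ)) • (H₀ + V c)) * U
        = Matrix.diagonal (RCLike.ofReal ∘ hC.eigenvalues) := by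
      have hs : (-(t : ℂ)) • (H₀ + V c)
          = U * Matrix.diagonal (RCLike.ofReal ∘ hC.eigenvalues) * star U := hC.spectral_theorem
      conv_lhs => rw [hs]
      simp only [Matrix.mul_assoc, hU'U, Matrix.mul_one]
      rw [← Matrix.mul_assoc, hU'U, Matrix.one_mul]
    have h2 : (RCLike.ofReal ∘ hC.eigenvalues : Fin n → ℂ) = fun j => ((μ j : ℝ) : ℂ) :=
      funext fun j => rfl
    rw [h2] at h
    exact h
  have hMcexp : ((NormedSpace.exp (M c)).trace).re = ∑ i, Real.exp (((M c) i i).re) := by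
    rw [hdiagc, Matrix.exp_diagonal, Matrix.trace_diagonal, Complex.re_sum]
    refine Finset.sum_congr rfl fun i _ => ?_
    rw [Pi.coe_exp, ← congrFun Complex.exp_eq_exp_ℂ, ← Complex.ofReal_exp, Complex.ofReal_re,
      Matrix.diagonal_apply_eq, Complex.ofReal_re]
  -- Peierls inequality for the trace
  have hpei : ∀ s, ∑ i, Real.exp (((M s) i i).re) ≤ ((NormedSpace.exp (M s)).trace).re := by
    intro s
    rw [show (NormedSpace.exp (M s)).trace = ∑ i, (NormedSpace.exp (M s)) i i from rfl,
      Complex.re_sum]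
    exact Finset.sum_le_sum fun i _ => peierls_entry (hMherm s) i
  -- the main chain
  have hmain : ((NormedSpace.exp (M c)).trace).re
      ≤ wa * ((NormedSpace.exp (M a)).trace).re + wb * ((NormedSpace.exp (M b)).trace).re := by
    have hstep : ∀ i : Fin n, Real.exp (((M c) i i).re)
        ≤ wa * Real.exp (((M a) i i).re) + wb * Real.exp (((M b) i i).re) := by
      intro i
      have hgc : ((M c) i i).re ≤ wa * ((M a) i i).re + wb * ((M b) i i).re := by
        have := (hgconv i).2 ha hb hwa hwb hab
        simpa [smul_eq_mul] using this
      have he := convexOn_exp.2 (Set.mem_univ (((M a) i i).re)) (Set.mem_univ (((M b) i i).re))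
        hwa hwb hab
      simp only [smul_eq_mul] at he
      exact le_trans (Real.exp_le_exp.mpr hgc) he
    calc ((NormedSpace.exp (M c)).trace).re = ∑ i, Real.exp (((M c) i i).re) := hMcexp
      _ ≤ ∑ i, (wa * Real.exp (((M a) i i).re) + wb * Real.exp (((M b) i i).re)) :=
          Finset.sum_le_sum fun i _ => hstep i
      _ = wa * (∑ i, Real.exp (((M a) i i).re)) + wb * (∑ i, Real.exp (((M b) i i).re)) := by
          rw [Finset.sum_add_distrib, Finset.mul_sum, Finset.mul_sum]
      _ ≤ wa * ((NormedSpace.exp (M a)).trace).re + wb * ((NormedSpace.exp (M b)).trace).re :=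
          add_le_add (mul_le_mul_of_nonneg_left (hpei a) hwa)
            (mul_le_mul_of_nonneg_left (hpei b) hwb)
  -- finish
  simp only [Matrix.trace_sub, Complex.sub_re]
  have hta := htr a; have htb := htr b; have htc := htr c
  have h0 := hmain
  rw [← htc, ← hta, ← htb] at h0
  have hE : wa * ((NormedSpace.exp ((-(t : ℂ)) • H₀)).trace).re
      + wb * ((NormedSpace.exp ((-(t : ℂ)) • H₀)).trace).re
      = ((NormedSpace.exp ((-(t : ℂ)) • H₀)).trace).re := by
    rw [← add_mul, hab, one_mul]
  nlinarith [h0, hE]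
end
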